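/- arXiv:2509.00898 — 11 statements merged into one kernel-verified Lean document; each statement's English description precedes it below -/
import Mathlib

section
/- Let I be a fractional ideal of O_K with rescaled basis matrix g_I. Suppose x = (x₁, x₂, x₃) ∈ ℝ³ with x₁, x₂, x₃ > 0 and γ ∈ SL(3,ℤ) are such that the (2,1)- and (3,1)-entries of γ·g_I·diag(x₁, x₂, x₃)·g₀^{−1} vanish. Then there exist a totally positive ξ ∈ I⁻¹ and a real number t > 0 with (x₁, x₂, x₃) = (t·σ₁(ξ), t·σ₂(ξ), t·σ₃(ξ)); that is, only the directions ã(ξ) with ξ ∈ I⁻¹ totally positive can be carried into the parabolic subgroup P. -/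
open Matrix Polynomial NumberField IntermediateField

noncomputable section

theorem aux_ringhom_ext
    (K : Type*) [Field K] [NumberField K]
    (a₁ a₂ a₃ : ℤ)
    (hirr : Irreducible (X ^ 3 + C (a₁ : ℚ) * X ^ 2 + C (a₂ : ℚ) * X + C (a₃ : ℚ)))
    (hrank : Module.finrank ℚ K = 3)
    (α : K) (hα : α ^ 3 + (a₁ : K) * α ^ 2 + (a₂ : K) * α + (a₃ : K) = 0)
    (f g : K →+* ℝ) (h : f α = g α) : f = g := by
  set F : ℚ[X] := X ^ 3 + C (a₁ : ℚ) * X ^ 2 + C (a₂ : ℚ) * X + C (a₃ : ℚ) with hF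
  have hFmonic : F.Monic := by unfold F; monicity!
  have haeval : aeval α F = 0 := by
    simp only [hF, map_add, _root_.map_mul, map_pow, aeval_X, aeval_C, eq_ratCast,
      Rat.cast_intCast]
    exact hα
  have hmin : minpoly ℚ α = F := (minpoly.eq_of_irreducible_of_monic hirr haeval hFmonic).symm
  have hdeg : F.natDegree = 3 := by unfold F; compute_degree!
  have hint : IsIntegral ℚ α := ⟨F, hFmonic, by rwa [← aeval_def]⟩
  have hadj : Algebra.adjoin ℚ {α} = ⊤ := by
    have h1 : ℚ⟮α⟯ = (⊤ : IntermediateField ℚ K) := by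
      apply IntermediateField.eq_of_le_of_finrank_le le_top
      rw [IntermediateField.finrank_top', IntermediateField.adjoin.finrank hint, hmin, hdeg, hrank]
    have h2 := IntermediateField.adjoin_simple_toSubalgebra_of_isAlgebraic hint.isAlgebraic
    rw [h1, IntermediateField.top_toSubalgebra] at h2
    exact h2.symm
  have heq : f.toRatAlgHom = g.toRatAlgHom := by
    apply AlgHom.ext_of_adjoin_eq_top hadj
    intro y hy
    rcases Set.mem_singleton_iff.mp hy with rfl
    simpa [RingHom.toRatAlgHom] using h
  rw [← RingHom.toRatAlgHom_toRingHom f, ← RingHom.toRatAlgHom_toRingHom g, heq]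


/-- **Only the directions `ã(ξ)`, `ξ ∈ I⁻¹` totally positive, can be carried into the
parabolic subgroup `P`** (Theorem `rootsintersections`, completeness direction): if
`x = (x₁, x₂, x₃)` has positive entries and `γ ∈ SL(3, ℤ)` is such that the `(2,1)`
and `(3,1)` entries of `γ g_I diag(x₁, x₂, x₃) g₀⁻¹` vanish, then there are a totally
positive `ξ ∈ I⁻¹` and `t > 0` with `xⱼ = t σⱼ(ξ)` for all `j`. -/
theorem intersection_directions
    (K : Type*) [Field K] [NumberField K]
    (a₁ a₂ a₃ : ℤ)
    (hirr : Irreducible (X ^ 3 + C (a₁ : ℚ) * X ^ 2 + C (a₂ : ℚ) * X + C (a₃ : ℚ)))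
    (hrank : Module.finrank ℚ K = 3)
    (α : K) (hα : α ^ 3 + (a₁ : K) * α ^ 2 + (a₂ : K) * α + (a₃ : K) = 0)
    -- `ℤ[α]` is the ring of integers of `K`
    (hmax : Algebra.adjoin ℤ ({α} : Set K) = integralClosure ℤ K)
    -- the three (distinct) real embeddings of `K`
    (σ : Fin 3 → (K →+* ℝ)) (hσ : Function.Injective σ)
    -- `g₀`: the rescaled basis matrix of the basis `{α², α, 1}` of `ℤ[α]`
    (d₀ : ℝ)
    (hd₀ : d₀ = Matrix.det (Matrix.of ![fun j => σ j α ^ 2, fun j => σ j α, fun _ => (1:ℝ)]))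
    (hd₀pos : 0 < d₀)
    (g₀ : Matrix (Fin 3) (Fin 3) ℝ)
    (hg₀ : g₀ = d₀ ^ (-(1/3) : ℝ) • Matrix.of ![fun j => σ j α ^ 2, fun j => σ j α, fun _ => (1:ℝ)])
    -- a fractional ideal `I` with `ℤ`-basis `b` and rescaled basis matrix `g_I`
    (I : FractionalIdeal (nonZeroDivisors (𝓞 K)) K)
    (b : Fin 3 → K)
    (hb : Submodule.span ℤ (Set.range b) =
      Submodule.restrictScalars ℤ (I : Submodule (𝓞 K) K))
    (dI : ℝ) (hdI : dI = Matrix.det (Matrix.of fun i j => σ j (b i))) (hdIpos : 0 < dI)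
    (gI : Matrix (Fin 3) (Fin 3) ℝ)
    (hgI : gI = dI ^ (-(1/3) : ℝ) • Matrix.of fun i j => σ j (b i))
    -- the data: a positive vector `x` and `γ ∈ SL(3, ℤ)` carrying `g_I diag(x) g₀⁻¹` into `P`
    (x : Fin 3 → ℝ) (hx : ∀ j, 0 < x j)
    (γ : Matrix (Fin 3) (Fin 3) ℤ) (hγ : γ.det = 1)
    (h21 : ((γ.map (Int.cast : ℤ → ℝ)) * gI * Matrix.diagonal x * g₀⁻¹) 1 0 = 0)
    (h31 : ((γ.map (Int.cast : ℤ → ℝ)) * gI * Matrix.diagonal x * g₀⁻¹) 2 0 = 0) :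
    ∃ (ξ : K) (t : ℝ), ξ ∈ I⁻¹ ∧ (∀ j, 0 < σ j ξ) ∧ 0 < t ∧ ∀ j, x j = t * σ j ξ := by
  classical
  have hd₀ne : d₀ ≠ 0 := ne_of_gt hd₀pos
  have hdIne : dI ≠ 0 := ne_of_gt hdIpos
  -- distinctness of the values σ j α
  have hyne : ∀ i j : Fin 3, i ≠ j → σ i α ≠ σ j α := by
    intro i j hij h
    exact hij (hσ (aux_ringhom_ext K a₁ a₂ a₃ hirr hrank α hα (σ i) (σ j) h))
  -- matrices S and T
  set S : Matrix (Fin 3) (Fin 3) ℝ := Matrix.of fun i j => σ j (b i) with hS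
  set c : Fin 3 → K := fun i => ∑ k, (γ i k : K) * b k with hc
  set T : Matrix (Fin 3) (Fin 3) ℝ := Matrix.of fun i j => σ j (c i) with hT
  have hcσ : ∀ i j, σ j (c i) = ∑ k, (γ i k : ℝ) * S k j := by
    intro i j
    simp [hc, hS, map_sum, _root_.map_mul, map_intCast]
  have hTS : T = γ.map (Int.cast : ℤ → ℝ) * S := by
    ext i j
    simp [hT, Matrix.mul_apply, hcσ i j]
  have hTdet : T.det = dI := by
    have hmm : γ.map (Int.cast : ℤ → ℝ) = (Int.castRingHom ℝ).mapMatrix γ := by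
      ext i j; simp
    have hmap : (γ.map (Int.cast : ℤ → ℝ)).det = ((γ.det : ℤ) : ℝ) := by
      rw [hmm, ← RingHom.map_det]; rfl
    rw [hTS, Matrix.det_mul, hmap, hγ, hdI]
    norm_num
  have hTunit : IsUnit T.det := by rw [hTdet]; exact isUnit_iff_ne_zero.mpr hdIne
  have hcne : ∀ i, c i ≠ 0 := by
    intro i hci
    apply hdIne
    rw [← hTdet]
    apply Matrix.det_eq_zero_of_row_eq_zero i
    intro j
    simp [hT, hci]
  have hAne : ∀ i j, σ j (c i) ≠ 0 := by
    intro i j h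
    exact hcne i ((_root_.map_eq_zero (σ j)).mp h)
  -- g₀ is invertible
  have hg₀det : g₀.det = 1 := by
    rw [hg₀, Matrix.det_smul, ← hd₀]
    have h3 : (d₀ ^ (-(1/3) : ℝ)) ^ (Fintype.card (Fin 3)) = d₀⁻¹ := by
      rw [Fintype.card_fin, ← Real.rpow_natCast (d₀ ^ (-(1/3) : ℝ)) 3,
        ← Real.rpow_mul hd₀pos.le]
      norm_num
      exact Real.rpow_neg_one d₀
    rw [h3, inv_mul_cancel₀ hd₀ne]
  have hg₀unit : IsUnit g₀.det := by rw [hg₀det]; exact isUnit_one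
  -- the matrix E
  set E : Matrix (Fin 3) (Fin 3) ℝ := γ.map (Int.cast : ℤ → ℝ) * gI * Matrix.diagonal x with hE
  have hEg : ∀ i j, E i j = (E * g₀⁻¹) i 0 * g₀ 0 j + (E * g₀⁻¹) i 1 * g₀ 1 j
      + (E * g₀⁻¹) i 2 * g₀ 2 j := by
    intro i j
    conv_lhs => rw [← Matrix.nonsing_inv_mul_cancel_right g₀ E hg₀unit]
    rw [Matrix.mul_apply, Fin.sum_univ_three]
  have hg₀1 : ∀ j, g₀ 1 j = d₀ ^ (-(1/3) : ℝ) * σ j α := by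
    intro j; rw [hg₀]; simp
  have hg₀2 : ∀ j, g₀ 2 j = d₀ ^ (-(1/3) : ℝ) := by
    intro j; rw [hg₀]; simp
  have hEentry : ∀ i j, E i j = dI ^ (-(1/3) : ℝ) * (σ j (c i) * x j) := by
    intro i j
    rw [hE, Matrix.mul_diagonal, Matrix.mul_apply, hcσ i j, Finset.sum_mul, Finset.sum_mul,
      Finset.mul_sum]
    apply Finset.sum_congr rfl
    intro k _
    rw [hgI]
    simp only [Matrix.map_apply, Matrix.smul_apply, smul_eq_mul]
    ring
  -- extraction of the linear relations
  have hpow : dI ^ ((1:ℝ)/3) * dI ^ (-(1/3) : ℝ) = 1 := by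
    rw [← Real.rpow_add hdIpos]
    norm_num
  obtain ⟨u₁, v₁, key1⟩ : ∃ u v : ℝ, ∀ j, x j * σ j (c 1) = u * σ j α + v := by
    refine ⟨dI ^ ((1:ℝ)/3) * (d₀ ^ (-(1/3) : ℝ) * (E * g₀⁻¹) 1 1),
      dI ^ ((1:ℝ)/3) * (d₀ ^ (-(1/3) : ℝ) * (E * g₀⁻¹) 1 2), fun j => ?_⟩
    have h := hEg 1 j
    rw [hEentry 1 j, h21, hg₀1 j, hg₀2 j] at h
    linear_combination dI ^ ((1:ℝ)/3) * h - x j * σ j (c 1) * hpow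
  obtain ⟨u₂, v₂, key2⟩ : ∃ u v : ℝ, ∀ j, x j * σ j (c 2) = u * σ j α + v := by
    refine ⟨dI ^ ((1:ℝ)/3) * (d₀ ^ (-(1/3) : ℝ) * (E * g₀⁻¹) 2 1),
      dI ^ ((1:ℝ)/3) * (d₀ ^ (-(1/3) : ℝ) * (E * g₀⁻¹) 2 2), fun j => ?_⟩
    have h := hEg 2 j
    rw [hEentry 2 j, h31, hg₀1 j, hg₀2 j] at h
    linear_combination dI ^ ((1:ℝ)/3) * h - x j * σ j (c 2) * hpow
  -- the four elements of K and a rational linear relation among them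
  set w : Fin 4 → K := ![α * c 2, c 2, α * c 1, c 1] with hw
  have hdep : ¬ LinearIndependent ℚ w := by
    intro hli
    have hle := hli.fintype_card_le_finrank
    rw [hrank] at hle
    simp at hle
  obtain ⟨p, hpsum, i₀, hpi₀⟩ := Fintype.not_linearIndependent_iff.mp hdep
  set Φ : Matrix (Fin 3) (Fin 4) ℝ := Matrix.of fun j i => σ j (w i) with hΦ
  have hΦw : ∀ j i, Φ j i = σ j (w i) := fun j i => rfl
  set pc : Fin 4 → ℝ := fun i => ((p i : ℚ) : ℝ) with hpcdef
  have hpcmem : pc ∈ LinearMap.ker Φ.mulVecLin := by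
    rw [LinearMap.mem_ker, Matrix.mulVecLin_apply]
    funext j
    have hsj := congrArg (σ j) hpsum
    rw [map_sum, map_zero] at hsj
    simp only [Rat.smul_def, _root_.map_mul, map_ratCast] at hsj
    simpa [Matrix.mulVec, dotProduct, hΦw, hpcdef, mul_comm] using hsj
  have hpcne : pc ≠ 0 := by
    intro h0
    apply hpi₀
    have := congrFun h0 i₀
    simpa [hpcdef] using this
  set r : Fin 4 → ℝ := ![u₁, v₁, -u₂, -v₂] with hrdef
  have hw0 : ∀ j, σ j (w 0) = σ j α * σ j (c 2) := by
    intro j; rw [hw]; simp [_root_.map_mul]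
  have hw1 : ∀ j, σ j (w 1) = σ j (c 2) := by intro j; rw [hw]; simp
  have hw2 : ∀ j, σ j (w 2) = σ j α * σ j (c 1) := by
    intro j; rw [hw]; simp [_root_.map_mul]
  have hw3 : ∀ j, σ j (w 3) = σ j (c 1) := by intro j; rw [hw]; simp
  have hrmem : r ∈ LinearMap.ker Φ.mulVecLin := by
    rw [LinearMap.mem_ker, Matrix.mulVecLin_apply]
    funext j
    simp only [Matrix.mulVec, dotProduct, Fin.sum_univ_four, hΦw, hrdef,
      Matrix.cons_val_zero, Matrix.cons_val_one, Matrix.head_cons, Matrix.cons_val_two,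
      Matrix.cons_val_three, Matrix.tail_cons, hw0 j, hw1 j, hw2 j, hw3 j, Pi.zero_apply]
    linear_combination σ j (c 1) * key2 j - σ j (c 2) * key1 j
  have hrne : r ≠ 0 := by
    intro h0
    have h1 : u₁ = 0 := by simpa [hrdef] using congrFun h0 0
    have h2 : v₁ = 0 := by simpa [hrdef] using congrFun h0 1
    have h3 := key1 0
    rw [h1, h2] at h3
    simp only [zero_mul, add_zero] at h3
    exact mul_ne_zero (ne_of_gt (hx 0)) (hAne 1 0) h3
  -- rows of T express every vector
  have hrow : ∀ v : Fin 3 → ℝ, ∀ j, v j =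
      (v ᵥ* T⁻¹) 0 * σ j (c 0) + (v ᵥ* T⁻¹) 1 * σ j (c 1) + (v ᵥ* T⁻¹) 2 * σ j (c 2) := by
    intro v j
    have hv : (v ᵥ* T⁻¹) ᵥ* T = v := by
      rw [Matrix.vecMul_vecMul, Matrix.nonsing_inv_mul T hTunit, Matrix.vecMul_one]
    conv_lhs => rw [← hv]
    simp [Matrix.vecMul, dotProduct, Fin.sum_univ_three, hT]
  set aa : Fin 3 → ℝ := (fun j => σ j α * σ j (c 1)) ᵥ* T⁻¹ with haa
  set ee : Fin 3 → ℝ := (fun j => σ j α * σ j (c 2)) ᵥ* T⁻¹ with hee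
  have haarow : ∀ j, σ j α * σ j (c 1) =
      aa 0 * σ j (c 0) + aa 1 * σ j (c 1) + aa 2 * σ j (c 2) := by
    intro j
    have h := hrow (fun j => σ j α * σ j (c 1)) j
    rw [← haa] at h
    simpa using h
  have heerow : ∀ j, σ j α * σ j (c 2) =
      ee 0 * σ j (c 0) + ee 1 * σ j (c 1) + ee 2 * σ j (c 2) := by
    intro j
    have h := hrow (fun j => σ j α * σ j (c 2)) j
    rw [← hee] at h
    simpa using h
  have haad : aa 0 ≠ 0 ∨ ee 0 ≠ 0 := by
    by_contra hcon
    push_neg at hcon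
    obtain ⟨ha0, he0⟩ := hcon
    have hq : ∀ j, (σ j α - aa 1) * (σ j α - ee 2) = aa 2 * ee 1 := by
      intro j
      have h1 := haarow j
      have h2 := heerow j
      rw [ha0] at h1
      rw [he0] at h2
      apply mul_right_cancel₀ (mul_ne_zero (hAne 1 j) (hAne 2 j))
      linear_combination (σ j α - ee 2) * σ j (c 2) * h1 + aa 2 * σ j (c 2) * h2
    have hq01 : (σ 0 α - σ 1 α) * (σ 0 α + σ 1 α - aa 1 - ee 2) = 0 := by
      linear_combination hq 0 - hq 1
    have hq02 : (σ 0 α - σ 2 α) * (σ 0 α + σ 2 α - aa 1 - ee 2) = 0 := by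
      linear_combination hq 0 - hq 2
    have h01 := (mul_eq_zero.mp hq01).resolve_left
      (sub_ne_zero_of_ne (hyne 0 1 (by decide)))
    have h02 := (mul_eq_zero.mp hq02).resolve_left
      (sub_ne_zero_of_ne (hyne 0 2 (by decide)))
    exact hyne 1 2 (by decide) (by linarith)
  -- surjectivity of Φ
  have hsurj : Function.Surjective Φ.mulVecLin := by
    intro v
    set m : Fin 3 → ℝ := v ᵥ* T⁻¹ with hm
    have hvrow : ∀ j, v j = m 0 * σ j (c 0) + m 1 * σ j (c 1) + m 2 * σ j (c 2) := by
      intro j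
      have h := hrow v j
      rw [← hm] at h
      exact h
    rcases haad with ha | he
    · refine ⟨![0, m 2 - m 0 / aa 0 * aa 2, m 0 / aa 0, m 1 - m 0 / aa 0 * aa 1], ?_⟩
      funext j
      rw [Matrix.mulVecLin_apply]
      simp only [Matrix.mulVec, dotProduct, Fin.sum_univ_four, hΦw,
        Matrix.cons_val_zero, Matrix.cons_val_one, Matrix.head_cons, Matrix.cons_val_two,
        Matrix.cons_val_three, Matrix.tail_cons, hw0 j, hw1 j, hw2 j, hw3 j]
      rw [hvrow j]
      have h1 := haarow j
      have hcancel : m 0 / aa 0 * aa 0 = m 0 := div_mul_cancel₀ _ ha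
      linear_combination (m 0 / aa 0) * h1 + σ j (c 0) * hcancel
    · refine ⟨![m 0 / ee 0, m 2 - m 0 / ee 0 * ee 2, 0, m 1 - m 0 / ee 0 * ee 1], ?_⟩
      funext j
      rw [Matrix.mulVecLin_apply]
      simp only [Matrix.mulVec, dotProduct, Fin.sum_univ_four, hΦw,
        Matrix.cons_val_zero, Matrix.cons_val_one, Matrix.head_cons, Matrix.cons_val_two,
        Matrix.cons_val_three, Matrix.tail_cons, hw0 j, hw1 j, hw2 j, hw3 j]
      rw [hvrow j]
      have h2 := heerow j
      have hcancel : m 0 / ee 0 * ee 0 = m 0 := div_mul_cancel₀ _ he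
      linear_combination (m 0 / ee 0) * h2 + σ j (c 0) * hcancel
  -- the kernel is one-dimensional, hence r is proportional to pc
  have hker : Module.finrank ℝ (LinearMap.ker Φ.mulVecLin) = 1 := by
    have h1 := LinearMap.finrank_range_add_finrank_ker Φ.mulVecLin
    rw [LinearMap.range_eq_top.mpr hsurj, finrank_top] at h1
    simp only [Module.finrank_fin_fun] at h1
    omega
  have hspan : (Submodule.span ℝ {pc}) = LinearMap.ker Φ.mulVecLin := by
    apply Submodule.eq_of_le_of_finrank_le
    · exact (Submodule.span_singleton_le_iff_mem _ _).mpr hpcmem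
    · rw [hker, finrank_span_singleton hpcne]
  obtain ⟨s, hs⟩ := Submodule.mem_span_singleton.mp (hspan ▸ hrmem)
  have hs0 : s ≠ 0 := by
    intro h0
    apply hrne
    rw [← hs, h0, zero_smul]
  have hu₁ : u₁ = s * ((p 0 : ℚ) : ℝ) := by
    have := congrFun hs 0
    simpa [hrdef, hpcdef] using this.symm
  have hv₁ : v₁ = s * ((p 1 : ℚ) : ℝ) := by
    have := congrFun hs 1
    simpa [hrdef, hpcdef] using this.symm
  -- the element ξ₀
  set η : K := (p 0 : K) * α + (p 1 : K) with hη
  have hση : ∀ j, σ j η = ((p 0 : ℚ) : ℝ) * σ j α + ((p 1 : ℚ) : ℝ) := by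
    intro j
    rw [hη]
    simp [_root_.map_mul, map_ratCast]
  set ξ₀ : K := η / c 1 with hξ₀
  have hxσ : ∀ j, x j = s * σ j ξ₀ := by
    intro j
    rw [hξ₀, map_div₀, ← mul_div_assoc, eq_div_iff (hAne 1 j), hση j]
    rw [key1 j, hu₁, hv₁]
    ring
  obtain ⟨ξ₁, s₁, hs₁pos, hx₁⟩ : ∃ (ξ₁ : K) (s₁ : ℝ), 0 < s₁ ∧ ∀ j, x j = s₁ * σ j ξ₁ := by
    rcases lt_or_gt_of_ne hs0 with hneg | hposi
    · exact ⟨-ξ₀, -s, by linarith, fun j => by rw [map_neg, hxσ j]; ring⟩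
    · exact ⟨ξ₀, s, hposi, hxσ⟩
  have hσξ₁pos : ∀ j, 0 < σ j ξ₁ := by
    intro j
    by_contra hcon
    push_neg at hcon
    have h1 : s₁ * σ j ξ₁ ≤ 0 := mul_nonpos_iff.mpr (Or.inl ⟨hs₁pos.le, hcon⟩)
    have := hx₁ j
    linarith [hx j]
  -- I is nonzero
  have hbmem : ∀ i, b i ∈ (I : Submodule (𝓞 K) K) := by
    intro i
    have hmem : b i ∈ Submodule.span ℤ (Set.range b) := Submodule.subset_span ⟨i, rfl⟩
    rw [hb] at hmem
    exact hmem
  have hIne : I ≠ 0 := by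
    intro h0
    apply hdIne
    have hb0 : ∀ i, b i = 0 := by
      intro i
      have := hbmem i
      rw [h0] at this
      simpa using this
    rw [hdI]
    apply Matrix.det_eq_zero_of_row_eq_zero 0
    intro j
    simp [hS, hb0]
  have hIinvne : (I⁻¹ : FractionalIdeal (nonZeroDivisors (𝓞 K)) K) ≠ 0 := by
    intro h0
    have hmul := mul_inv_cancel₀ hIne
    rw [h0, mul_zero] at hmul
    exact zero_ne_one hmul
  obtain ⟨β, hβmem, hβne⟩ : ∃ β ∈ (I⁻¹ : FractionalIdeal (nonZeroDivisors (𝓞 K)) K),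
      β ≠ 0 := by
    by_contra hcon
    push_neg at hcon
    exact hIinvne (FractionalIdeal.eq_zero_iff.mpr hcon)
  -- rescale ξ₁ by a positive rational to land in I⁻¹
  have halg : IsAlgebraic ℤ (ξ₁ / β) := by
    have h1 : Algebra.IsAlgebraic ℚ K := Algebra.IsAlgebraic.of_finite ℚ K
    exact (IsFractionRing.isAlgebraic_iff ℤ ℚ K).mpr (h1.isAlgebraic _)
  obtain ⟨gg, n, hn0, hgn⟩ : ∃ gg : integralClosure ℤ K, ∃ n : ℤ, n ≠ 0 ∧
      algebraMap ℤ K n * (ξ₁ / β) = gg := by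
    obtain ⟨n, hn0, hint'⟩ := halg.exists_integral_multiple
    exact ⟨⟨n • (ξ₁ / β), hint'⟩, n, hn0, (Algebra.smul_def _ _).symm⟩
  have hnK : ((n : ℤ) : K) ≠ 0 := Int.cast_ne_zero.mpr hn0
  have hGint : ((n : K) * (ξ₁ / β)) ∈ integralClosure ℤ K := by
    have : (n : K) * (ξ₁ / β) = (gg : K) := by
      rw [← hgn, eq_intCast]
    rw [this]
    exact gg.2
  set G : 𝓞 K := ⟨(n : K) * (ξ₁ / β), hGint⟩ with hG
  have hGβ : (G : K) * β = (n : K) * ξ₁ := by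
    have h1 : (G : K) = (n : K) * (ξ₁ / β) := rfl
    rw [h1]
    field_simp
  refine ⟨(n : K) ^ 2 * ξ₁, s₁ / (n : ℝ) ^ 2, ?_, ?_, ?_, ?_⟩
  · -- membership in I⁻¹
    have h2 : ((n • G : 𝓞 K)) • β = (n : K) ^ 2 * ξ₁ := by
      rw [Algebra.smul_def]
      have h3 : algebraMap (𝓞 K) K (n • G) = (n : K) * (G : K) := by
        rw [map_zsmul, zsmul_eq_mul]
      rw [h3, mul_assoc, hGβ]
      ring
    rw [← h2, ← FractionalIdeal.mem_coe]
    exact Submodule.smul_mem _ _ (FractionalIdeal.mem_coe.mpr hβmem)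
  · intro j
    rw [_root_.map_mul, map_pow, map_intCast]
    have hn2 : (0:ℝ) < (n : ℝ) ^ 2 := by
      positivity
    exact mul_pos hn2 (hσξ₁pos j)
  · have hn2 : (0:ℝ) < (n : ℝ) ^ 2 := by positivity
    positivity
  · intro j
    rw [_root_.map_mul, map_pow, map_intCast, hx₁ j]
    have hn2 : ((n : ℝ)) ^ 2 ≠ 0 := by positivity
    field_simp
end
end

section
/- Let p be a prime and μ ∈ ℤ with p² ∣ F(μ) and p ∣ F′(μ). Then in the ring ℤ[α], the ideals I₁ = (α − μ, p) (generated by α − μ and p) and I₂ = (α² + (μ + a₁)α + (μ² + a₁μ + a₂), p) satisfy the ideal identity I₁·I₂ = (p)·I₁, i.e. the product of I₁ and I₂ equals the product of the principal ideal generated by p with I₁. -/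
open Polynomial

noncomputable section

/-- The cubic polynomial `F(X) = X³ + a₁X² + a₂X + a₃ ∈ ℤ[X]`. -/
def Fcubic (a₁ a₂ a₃ : ℤ) : ℤ[X] := X ^ 3 + C a₁ * X ^ 2 + C a₂ * X + C a₃

/-- The ring `ℤ[α] = ℤ[X]/(F(X))`. -/
abbrev Zalpha (a₁ a₂ a₃ : ℤ) := AdjoinRoot (Fcubic a₁ a₂ a₃)

/-- `α`, the image of `X` in `ℤ[α]`. -/
def alphaRoot (a₁ a₂ a₃ : ℤ) : Zalpha a₁ a₂ a₃ := AdjoinRoot.root (Fcubic a₁ a₂ a₃)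

/-- **Lemma `noninvertibility`**: if `p` is a prime and `μ ∈ ℤ` with `p² ∣ F(μ)` and
`p ∣ F′(μ)`, then in `ℤ[α] = ℤ[X]/(F)` the ideals `I₁ = (α - μ, p)` and
`I₂ = (α² + (μ + a₁)α + (μ² + a₁μ + a₂), p)` satisfy `I₁ I₂ = (p) I₁`. -/
theorem noninvertibility
    (a₁ a₂ a₃ : ℤ)
    (hirr : Irreducible (Fcubic a₁ a₂ a₃))
    (p : ℕ) (hp : p.Prime) (μ : ℤ)
    (hFμ : (p : ℤ) ^ 2 ∣ μ ^ 3 + a₁ * μ ^ 2 + a₂ * μ + a₃)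
    (hF'μ : (p : ℤ) ∣ 3 * μ ^ 2 + 2 * a₁ * μ + a₂) :
    Ideal.span {alphaRoot a₁ a₂ a₃ - (μ : Zalpha a₁ a₂ a₃), (p : Zalpha a₁ a₂ a₃)} *
      Ideal.span {alphaRoot a₁ a₂ a₃ ^ 2 + ((μ + a₁ : ℤ) : Zalpha a₁ a₂ a₃) * alphaRoot a₁ a₂ a₃ +
          ((μ ^ 2 + a₁ * μ + a₂ : ℤ) : Zalpha a₁ a₂ a₃), (p : Zalpha a₁ a₂ a₃)} =
    Ideal.span {(p : Zalpha a₁ a₂ a₃)} *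
      Ideal.span {alphaRoot a₁ a₂ a₃ - (μ : Zalpha a₁ a₂ a₃), (p : Zalpha a₁ a₂ a₃)} := by
  set R := Zalpha a₁ a₂ a₃
  set α : R := alphaRoot a₁ a₂ a₃ with hα
  obtain ⟨m, hm⟩ := hFμ
  obtain ⟨k, hk⟩ := hF'μ
  have hroot : α ^ 3 + (a₁ : R) * α ^ 2 + (a₂ : R) * α + (a₃ : R) = 0 := by
    have h := AdjoinRoot.eval₂_root (Fcubic a₁ a₂ a₃)
    rw [Fcubic] at h
    simp only [eval₂_add, eval₂_mul, eval₂_pow, eval₂_C, eval₂_X] at h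
    simp only [eq_intCast] at h
    exact h
  have hm' : (μ : R) ^ 3 + (a₁ : R) * (μ : R) ^ 2 + (a₂ : R) * (μ : R) + (a₃ : R)
      = (p : R) ^ 2 * (m : R) := by
    have h := congrArg (Int.castRingHom R) hm
    simp only [map_add, map_mul, map_pow, map_natCast, eq_intCast] at h
    linear_combination h
  have hk' : 3 * (μ : R) ^ 2 + 2 * (a₁ : R) * (μ : R) + (a₂ : R) = (p : R) * (k : R) := by
    have h := congrArg (Int.castRingHom R) hk
    simp only [map_add, map_mul, map_pow, map_natCast, map_ofNat, eq_intCast] at h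
    linear_combination h
  rw [Ideal.span_pair_mul_span_pair]
  have hRHS : Ideal.span {(p : R)} * Ideal.span {α - (μ : R), (p : R)}
      = Ideal.span {(p : R) * (α - (μ : R)), (p : R) * (p : R)} := by
    rw [Ideal.span_insert, Ideal.mul_sup, Ideal.span_singleton_mul_span_singleton,
      Ideal.span_singleton_mul_span_singleton, ← Ideal.span_insert]
  rw [hRHS]
  apply le_antisymm <;> rw [Ideal.span_le] <;> intro x hx <;>
    simp only [Set.mem_insert_iff, Set.mem_singleton_iff] at hx
  · rcases hx with h | h | h | h <;> subst h <;> rw [SetLike.mem_coe, Ideal.mem_span_pair]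
    · refine ⟨0, -(m : R), ?_⟩
      push_cast
      linear_combination hm' - hroot
    · exact ⟨1, 0, by ring⟩
    · refine ⟨α + (2 * (μ : R) + (a₁ : R)), (k : R), ?_⟩
      push_cast
      linear_combination (-(p : R)) * hk'
    · exact ⟨0, 1, by ring⟩
  · rcases hx with h | h <;> subst h
    · have e : (p : R) * (α - (μ : R)) = (α - (μ : R)) * (p : R) := mul_comm _ _
      rw [e]
      exact Ideal.subset_span (by simp)
    · exact Ideal.subset_span (by simp)
end
end

section
/- Assume ℤ[α] is integrally closed (equivalently, ℤ[α] is the maximal order, i.e. the ring of integers, of ℚ(α)). Then there do not exist a prime p and an integer μ with F(μ) ≡ 0 (mod p²) and F′(μ) ≡ 0 (mod p). -/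
open Polynomial

noncomputable section

/-- If `ℤ[α]` is integrally closed (i.e. `ℤ[α]` is the maximal order of `ℚ(α)`), then
there are no prime `p` and integer `μ` with `F(μ) ≡ 0 (mod p²)` and
`F′(μ) ≡ 0 (mod p)`. -/
theorem no_singular_roots_of_integrally_closed
    (a₁ a₂ a₃ : ℤ)
    (hirr : Irreducible (Fcubic a₁ a₂ a₃))
    (hic : IsIntegrallyClosed (Zalpha a₁ a₂ a₃)) :
    ¬ ∃ (p : ℕ) (μ : ℤ), p.Prime ∧
      (p : ℤ) ^ 2 ∣ μ ^ 3 + a₁ * μ ^ 2 + a₂ * μ + a₃ ∧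
      (p : ℤ) ∣ 3 * μ ^ 2 + 2 * a₁ * μ + a₂ := by
  rintro ⟨p, μ, hp, hFμ, hF'μ⟩
  set F : ℤ[X] := Fcubic a₁ a₂ a₃ with hF
  have hmon : F.Monic := by rw [hF]; unfold Fcubic; monicity!
  have hdeg : F.natDegree = 3 := by rw [hF]; unfold Fcubic; compute_degree!
  have hprime : Prime F := UniqueFactorizationMonoid.irreducible_iff_prime.mp hirr
  haveI hsp : (Ideal.span {F} : Ideal ℤ[X]).IsPrime :=
    (Ideal.span_singleton_prime hprime.ne_zero).mpr hprime
  haveI hdom : IsDomain (Zalpha a₁ a₂ a₃) := Ideal.Quotient.isDomain _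
  set R := Zalpha a₁ a₂ a₃
  set α : R := AdjoinRoot.root F with hα
  have hroot : α ^ 3 + (a₁ : R) * α ^ 2 + (a₂ : R) * α + (a₃ : R) = 0 := by
    have h0 := AdjoinRoot.eval₂_root F
    rw [hF] at h0
    unfold Fcubic at h0
    simp only [eval₂_add, eval₂_mul, eval₂_pow, eval₂_X, eval₂_C] at h0
    rw [eq_intCast, eq_intCast, eq_intCast] at h0
    exact h0
  set a : ℤ := μ ^ 3 + a₁ * μ ^ 2 + a₂ * μ + a₃ with ha
  set b : ℤ := 3 * μ ^ 2 + 2 * a₁ * μ + a₂ with hb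
  set c : ℤ := 3 * μ + a₁ with hc
  set t : R := α - (μ : R) with ht
  have hG : t ^ 3 + (c : R) * t ^ 2 + (b : R) * t + (a : R) = 0 := by
    rw [ht, ha, hb, hc]
    push_cast [Int.cast_mul (α := R)]
    linear_combination hroot
  obtain ⟨a2, ha2⟩ := hFμ
  obtain ⟨b1, hb1⟩ := hF'μ
  set s : R := t ^ 2 + (c : R) * t + (b : R) with hs
  have hs2 : s ^ 2 = ((((p : ℤ)) * b1 : ℤ) : R) * s - ((((p : ℤ)) ^ 2 * a2 : ℤ) : R) * (t + (c : R)) := by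
    rw [hs, ← hb1, ← ha2]; linear_combination (t + (c : R)) * hG
  -- pass to the fraction field
  set K := FractionRing R
  set u : R →+* K := algebraMap R K with hu
  have huinj : Function.Injective u := IsFractionRing.injective R K
  have hZinj : Function.Injective (algebraMap ℤ R) :=
    (AdjoinRoot.powerBasis' hmon).basis.algebraMap_injective
  have hpR : ((p : ℤ) : R) ≠ 0 := by
    intro h
    have h2 : ((p : ℤ)) = 0 := hZinj (by simpa using h)
    exact hp.ne_zero (by exact_mod_cast h2)
  have hpK : ((p : ℤ) : K) ≠ 0 := by
    intro h
    exact hpR (huinj (by simpa using h))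
  set x : K := u s / ((p : ℤ) : K) with hx
  have hxp : x * ((p : ℤ) : K) = u s := by rw [hx, div_mul_cancel₀ _ hpK]
  -- x is integral over R
  have hxeq : x ^ 2 = u ((b1 : R)) * x - u ((a2 : R) * (t + (c : R))) := by
    apply mul_right_cancel₀ (pow_ne_zero 2 hpK)
    calc x ^ 2 * ((p : ℤ) : K) ^ 2 = (x * ((p : ℤ) : K)) ^ 2 := by ring
      _ = u s ^ 2 := by rw [hxp]
      _ = u (s ^ 2) := (map_pow u s 2).symm
      _ = ((((p : ℤ)) * b1 : ℤ) : K) * u s - ((((p : ℤ)) ^ 2 * a2 : ℤ) : K) * u (t + (c : R)) := by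
          rw [hs2, map_sub, map_mul, map_mul, map_intCast, map_intCast]
      _ = (u ((b1 : R)) * x - u ((a2 : R) * (t + (c : R)))) * ((p : ℤ) : K) ^ 2 := by
          rw [map_intCast, map_mul, map_intCast, ← hxp]
          push_cast [Int.cast_mul (α := K)]
          ring
  have hxint : IsIntegral R x := by
    refine ⟨X ^ 2 - Polynomial.C ((b1 : R)) * X + Polynomial.C ((a2 : R) * (t + (c : R))), ?_, ?_⟩
    · monicity!
    · simp only [eval₂_add, eval₂_sub, eval₂_mul, eval₂_pow, eval₂_X, eval₂_C]
      linear_combination hxeq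
  obtain ⟨y, hy⟩ := IsIntegrallyClosed.isIntegral_iff.mp hxint
  have hy' : u y = x := hy
  have hsy : s = y * ((p : ℤ) : R) := by
    apply huinj
    rw [map_mul, map_intCast, hy', hxp]
  -- basis argument
  set B := (AdjoinRoot.powerBasis' hmon).basis with hB
  have hdim : (AdjoinRoot.powerBasis' hmon).dim = F.natDegree := rfl
  have h3 : (2 : ℕ) < F.natDegree := by rw [hdeg]; norm_num
  have h1 : (1 : ℕ) < F.natDegree := by rw [hdeg]; norm_num
  have h0 : (0 : ℕ) < F.natDegree := by rw [hdeg]; norm_num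
  set i2 : Fin (AdjoinRoot.powerBasis' hmon).dim := ⟨2, h3⟩
  set i1 : Fin (AdjoinRoot.powerBasis' hmon).dim := ⟨1, h1⟩
  set i0 : Fin (AdjoinRoot.powerBasis' hmon).dim := ⟨0, h0⟩
  have hB2 : B i2 = α ^ 2 := by
    rw [hB, (AdjoinRoot.powerBasis' hmon).basis_eq_pow, AdjoinRoot.powerBasis'_gen]
  have hB1 : B i1 = α := by
    rw [hB, (AdjoinRoot.powerBasis' hmon).basis_eq_pow, AdjoinRoot.powerBasis'_gen]
    simp [i1, hα]
  have hB0 : B i0 = 1 := by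
    rw [hB, (AdjoinRoot.powerBasis' hmon).basis_eq_pow, AdjoinRoot.powerBasis'_gen]
    simp [i0]
  have heq : B i2 = (p : ℤ) • y + (-(c - 2 * μ)) • B i1 + (-(μ ^ 2 - c * μ + b)) • B i0 := by
    rw [hB2, hB1, hB0]
    simp only [zsmul_eq_mul]
    push_cast
    rw [hs, ht] at hsy
    push_cast at hsy
    linear_combination hsy
  have hrep := congrArg (fun v => B.repr v i2) heq
  simp only [map_add, map_smul, Finsupp.coe_add, Finsupp.coe_smul, Pi.add_apply,
    Pi.smul_apply, B.repr_self, smul_eq_mul] at hrep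
  have hne12 : i1 ≠ i2 := by simp [i1, i2, Fin.ext_iff]
  have hne02 : i0 ≠ i2 := by simp [i0, i2, Fin.ext_iff]
  rw [Finsupp.single_apply, Finsupp.single_apply, Finsupp.single_apply,
    if_pos rfl, if_neg hne12, if_neg hne02] at hrep
  simp only [mul_zero, add_zero] at hrep
  have hdvd : (p : ℤ) ∣ 1 := ⟨B.repr y i2, hrep⟩
  have hle := Int.le_of_dvd one_pos hdvd
  have := hp.two_le
  omega
end
end

section
/- Let p be a prime and μ ∈ ℤ with F(μ) ≡ 0 (mod p). Then in ℤ[α], the ℤ-submodule spanned by {α² − μ², α − μ, p} coincides with the ideal of ℤ[α] generated by {α − μ, p}; in particular this ℤ-span is an ideal of ℤ[α] of index p. -/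
open Polynomial

noncomputable section

theorem cubic_rel (a₁ a₂ a₃ : ℤ) :
    alphaRoot a₁ a₂ a₃ ^ 3 = -(a₁ : Zalpha a₁ a₂ a₃) * alphaRoot a₁ a₂ a₃ ^ 2
      - a₂ * alphaRoot a₁ a₂ a₃ - a₃ := by
  have h0 : (AdjoinRoot.mk (Fcubic a₁ a₂ a₃)) (X ^ 3 + C a₁ * X ^ 2 + C a₂ * X + C a₃) = 0 :=
    AdjoinRoot.mk_self
  simp only [map_add, map_mul, map_pow, AdjoinRoot.mk_X, AdjoinRoot.mk_C,
    algebraMap_int_eq, eq_intCast, map_intCast] at h0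
  simp only [alphaRoot]
  linear_combination h0


/-- If `p` is a prime and `F(μ) ≡ 0 (mod p)`, then the `ℤ`-span of
`{α² - μ², α - μ, p}` in `ℤ[α]` coincides with the ideal of `ℤ[α]` generated by
`{α - μ, p}`; in particular this `ℤ`-span is an ideal of `ℤ[α]` of index `p`. -/
theorem span_eq_ideal_first_example
    (a₁ a₂ a₃ : ℤ)
    (hirr : Irreducible (Fcubic a₁ a₂ a₃))
    (p : ℕ) (hp : p.Prime) (μ : ℤ)
    (hFμ : (p : ℤ) ∣ μ ^ 3 + a₁ * μ ^ 2 + a₂ * μ + a₃) :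
    Submodule.span ℤ ({alphaRoot a₁ a₂ a₃ ^ 2 - ((μ ^ 2 : ℤ) : Zalpha a₁ a₂ a₃),
        alphaRoot a₁ a₂ a₃ - (μ : Zalpha a₁ a₂ a₃),
        (p : Zalpha a₁ a₂ a₃)} : Set (Zalpha a₁ a₂ a₃)) =
      (Ideal.span {alphaRoot a₁ a₂ a₃ - (μ : Zalpha a₁ a₂ a₃),
        (p : Zalpha a₁ a₂ a₃)}).restrictScalars ℤ ∧
    Nat.card (Zalpha a₁ a₂ a₃ ⧸ Ideal.span {alphaRoot a₁ a₂ a₃ - (μ : Zalpha a₁ a₂ a₃),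
        (p : Zalpha a₁ a₂ a₃)}) = p := by
  classical
  set R := Zalpha a₁ a₂ a₃
  set α : R := alphaRoot a₁ a₂ a₃ with hαdef
  obtain ⟨k, hk⟩ := hFμ
  have hrel : α ^ 3 = -(a₁ : R) * α ^ 2 - a₂ * α - a₃ := cubic_rel a₁ a₂ a₃
  have hkz : ((μ : R) ^ 3 + a₁ * μ ^ 2 + a₂ * μ + a₃) = (p : R) * k := by
    have := congrArg (fun n : ℤ => (n : R)) hk
    simp only [Int.cast_add, Int.cast_pow] at this
    rw [Int.cast_mul, Int.cast_mul, Int.cast_mul, Int.cast_natCast, Int.cast_pow] at this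
    exact this
  set g₁ : R := α ^ 2 - ((μ ^ 2 : ℤ) : R) with hg₁
  set g₂ : R := α - (μ : R) with hg₂
  set g₃ : R := (p : R) with hg₃
  set T : Submodule ℤ R := Submodule.span ℤ {g₁, g₂, g₃} with hT
  set I : Ideal R := Ideal.span {g₂, g₃} with hI
  have m₁ : g₁ ∈ T := Submodule.subset_span (by simp)
  have m₂ : g₂ ∈ T := Submodule.subset_span (by simp)
  have m₃ : g₃ ∈ T := Submodule.subset_span (by simp)
  -- T is closed under multiplication by α
  have Lα : ∀ x ∈ T, α * x ∈ T := by
    intro x hx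
    induction hx using Submodule.span_induction with
    | mem y hy =>
      rcases hy with h | h | h
      · subst h
        have hid : α * g₁ = (-a₁) • g₁ + (-(a₂ + μ ^ 2)) • g₂ + (-k) • g₃ := by
          simp only [hg₁, hg₂, hg₃, zsmul_eq_mul]
          push_cast
          linear_combination hrel - hkz
        rw [hid]
        exact T.add_mem (T.add_mem (T.smul_mem _ m₁) (T.smul_mem _ m₂)) (T.smul_mem _ m₃)
      · subst h
        have hid : α * g₂ = (1 : ℤ) • g₁ + (-μ) • g₂ := by
          simp only [hg₁, hg₂, zsmul_eq_mul]
          push_cast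
          ring
        rw [hid]
        exact T.add_mem (T.smul_mem _ m₁) (T.smul_mem _ m₂)
      · subst h
        have hid : α * g₃ = (p : ℤ) • g₂ + μ • g₃ := by
          simp only [hg₂, hg₃, zsmul_eq_mul]
          push_cast
          ring
        rw [hid]
        exact T.add_mem (T.smul_mem _ m₂) (T.smul_mem _ m₃)
    | zero => simpa using T.zero_mem
    | add y z _ _ hy hz => rw [mul_add]; exact T.add_mem hy hz
    | smul c y _ hy => rw [mul_smul_comm]; exact T.smul_mem c hy
  -- T closed under multiplication by powers of α
  have Lpow : ∀ (n : ℕ), ∀ x ∈ T, α ^ n * x ∈ T := by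
    intro n
    induction n with
    | zero => intro x hx; simpa using hx
    | succ n ih =>
      intro x hx
      have : α ^ (n + 1) * x = α ^ n * (α * x) := by ring
      rw [this]
      exact ih _ (Lα x hx)
  -- T closed under multiplication by arbitrary ring elements
  have Lmul : ∀ (r : R), ∀ x ∈ T, r * x ∈ T := by
    intro r x hx
    obtain ⟨f, rfl⟩ := AdjoinRoot.mk_surjective r
    induction f using Polynomial.induction_on' with
    | add f g hf hg => rw [map_add, add_mul]; exact T.add_mem hf hg
    | monomial n a =>
      have : (AdjoinRoot.mk (Fcubic a₁ a₂ a₃)) ((monomial n) a) = (a : R) * α ^ n := by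
        rw [← Polynomial.C_mul_X_pow_eq_monomial, map_mul, map_pow, AdjoinRoot.mk_X,
          AdjoinRoot.mk_C, eq_intCast]; rfl
      rw [this, mul_assoc, ← zsmul_eq_mul]
      exact T.smul_mem a (Lpow n x hx)
  -- Part 1 : the span equals the ideal
  have hspan_eq : T = I.restrictScalars ℤ := by
    apply le_antisymm
    · rw [hT, Submodule.span_le]
      intro y hy
      simp only [Set.mem_insert_iff, Set.mem_singleton_iff] at hy
      rcases hy with rfl | rfl | rfl
      · have hfac : g₁ = (α + μ) * g₂ := by
          simp only [hg₁, hg₂]; push_cast; ring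
        simpa [Submodule.restrictScalars_mem] using
          hfac ▸ Ideal.mul_mem_left I (α + μ) (Ideal.subset_span (by simp))
      · exact Ideal.subset_span (by simp)
      · exact Ideal.subset_span (by simp)
    · intro y hy
      have hy' : y ∈ I := hy
      refine Submodule.span_induction ?_ ?_ ?_ ?_ hy'
      · intro z hz
        simp only [Set.mem_insert_iff, Set.mem_singleton_iff] at hz
        rcases hz with rfl | rfl
        · exact m₂
        · exact m₃
      · exact T.zero_mem
      · intro u v _ _ hu hv; exact T.add_mem hu hv
      · intro r u _ hu; rw [smul_eq_mul]; exact Lmul r u hu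
  -- Part 2 : the quotient has cardinality p
  have hroot : (Fcubic a₁ a₂ a₃).eval₂ (Int.castRingHom (ZMod p)) (μ : ZMod p) = 0 := by
    rw [show Fcubic a₁ a₂ a₃ = X ^ 3 + C a₁ * X ^ 2 + C a₂ * X + C a₃ from rfl]
    simp only [eval₂_add, eval₂_mul, eval₂_pow, eval₂_X, eval₂_C, Int.coe_castRingHom]
    have h0 : ((μ ^ 3 + a₁ * μ ^ 2 + a₂ * μ + a₃ : ℤ) : ZMod p) = 0 := by
      rw [hk]; push_cast; simp
    push_cast at h0
    linear_combination h0
  set φ : R →+* ZMod p := AdjoinRoot.lift (Int.castRingHom (ZMod p)) (μ : ZMod p) hroot with hφ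
  have hφα : φ α = (μ : ZMod p) := AdjoinRoot.lift_root hroot
  have hsurj : Function.Surjective φ := by
    intro y
    obtain ⟨n, rfl⟩ := ZMod.intCast_surjective y
    exact ⟨(n : R), map_intCast φ n⟩
  have hker : RingHom.ker φ = I := by
    apply le_antisymm
    · intro x hx
      rw [RingHom.mem_ker] at hx
      obtain ⟨f, rfl⟩ := AdjoinRoot.mk_surjective x
      rw [hφ, AdjoinRoot.lift_mk] at hx
      have hx' : ((f.eval μ : ℤ) : ZMod p) = 0 := by
        rw [← hx]
        rw [show ((μ : ZMod p)) = (Int.castRingHom (ZMod p)) μ from rfl, Polynomial.eval₂_hom]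
        rfl
      have hdvd : (p : ℤ) ∣ f.eval μ := (ZMod.intCast_zmod_eq_zero_iff_dvd _ p).mp hx'
      obtain ⟨c, hc⟩ := hdvd
      have hdvd2 : (X - C μ) ∣ (f - C (f.eval μ)) :=
        dvd_iff_isRoot.mpr (by simp [IsRoot])
      obtain ⟨g, hg⟩ := hdvd2
      have hmk : (AdjoinRoot.mk (Fcubic a₁ a₂ a₃)) f
          = g₂ * (AdjoinRoot.mk (Fcubic a₁ a₂ a₃)) g + (p : R) * (c : R) := by
        have h2 := congrArg (AdjoinRoot.mk (Fcubic a₁ a₂ a₃)) hg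
        simp only [map_sub, map_mul, AdjoinRoot.mk_X, AdjoinRoot.mk_C, eq_intCast, map_intCast] at h2
        have hc' : ((f.eval μ : ℤ) : R) = (p : R) * (c : R) := by
          rw [hc, Int.cast_mul, Int.cast_natCast]
        simp only [hg₂, hαdef, alphaRoot]
        linear_combination h2 + hc'
      rw [hmk]
      exact I.add_mem (Ideal.mul_mem_right _ I (Ideal.subset_span (by simp)))
        (Ideal.mul_mem_right _ I (Ideal.subset_span (by simp [hg₃])))
    · rw [hI, Ideal.span_le]
      intro z hz
      simp only [Set.mem_insert_iff, Set.mem_singleton_iff] at hz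
      rcases hz with rfl | rfl
      · simp only [SetLike.mem_coe, RingHom.mem_ker, hg₂, map_sub, hφα, map_intCast, sub_self]
        rw [map_intCast, sub_self]
      · simp only [SetLike.mem_coe, RingHom.mem_ker, hg₃, map_natCast, ZMod.natCast_self]
        exact (map_natCast φ p).trans (ZMod.natCast_self p)
  have hcard : Nat.card (R ⧸ I) = p := by
    rw [← hker]
    exact (Nat.card_congr (RingHom.quotientKerEquivOfSurjective hsurj).toEquiv).trans
      (Nat.card_zmod p)
  exact ⟨hspan_eq, hcard⟩
end
end

section
/- Let p be a prime and μ ∈ ℤ with F(μ) ≡ 0 (mod p). Then in ℤ[α], the ℤ-submodule spanned by {α² + (μ + a₁)α + (μ² + a₁μ + a₂), pα, p} coincides with the ideal of ℤ[α] generated by {α² + (μ + a₁)α + (μ² + a₁μ + a₂), p}; in particular this ℤ-span is an ideal of ℤ[α] of index p². -/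
open Polynomial

noncomputable section

def Bpoly (a₁ a₂ μ : ℤ) : ℤ[X] := X ^ 2 + C (μ + a₁) * X + C (μ ^ 2 + a₁ * μ + a₂)

lemma Fcubic_eq (a₁ a₂ a₃ μ : ℤ) :
    Fcubic a₁ a₂ a₃ = (X - C μ) * Bpoly a₁ a₂ μ + C (μ ^ 3 + a₁ * μ ^ 2 + a₂ * μ + a₃) := by
  simp only [Fcubic, Bpoly, C_add, C_mul, C_pow]; ring

lemma Bpoly_monic (a₁ a₂ μ : ℤ) : (Bpoly a₁ a₂ μ).Monic := by
  unfold Bpoly; monicity!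

lemma beta_eq (a₁ a₂ a₃ μ : ℤ) :
    AdjoinRoot.mk (Fcubic a₁ a₂ a₃) (Bpoly a₁ a₂ μ) =
    alphaRoot a₁ a₂ a₃ ^ 2 + ((μ + a₁ : ℤ) : Zalpha a₁ a₂ a₃) * alphaRoot a₁ a₂ a₃ +
      ((μ ^ 2 + a₁ * μ + a₂ : ℤ) : Zalpha a₁ a₂ a₃) := by
  simp only [Bpoly, map_add, map_mul, map_pow, AdjoinRoot.mk_X, AdjoinRoot.mk_C, alphaRoot]
  norm_num [AdjoinRoot.algebraMap_eq, map_intCast]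

section Phi
variable (a₁ a₂ a₃ : ℤ) (p : ℕ) [Fact p.Prime] (μ : ℤ)

abbrev Bbar : (ZMod p)[X] := (Bpoly a₁ a₂ μ).map (Int.castRingHom (ZMod p))

abbrev Rquot := AdjoinRoot (Bbar a₁ a₂ p μ)

lemma eval₂_F_zero (hFμ : (p : ℤ) ∣ μ ^ 3 + a₁ * μ ^ 2 + a₂ * μ + a₃) :
    eval₂ (Int.castRingHom (Rquot a₁ a₂ p μ)) (AdjoinRoot.root (Bbar a₁ a₂ p μ))
      (Fcubic a₁ a₂ a₃) = 0 := by
  have h1 : (Int.castRingHom (Rquot a₁ a₂ p μ)) =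
      (algebraMap (ZMod p) (Rquot a₁ a₂ p μ)).comp (Int.castRingHom (ZMod p)) := by
    apply RingHom.ext_int
  rw [h1, ← eval₂_map, ← aeval_def, Fcubic_eq a₁ a₂ a₃ μ]
  obtain ⟨k, hk⟩ := hFμ
  rw [hk]
  simp [AdjoinRoot.aeval_eq, map_mul, ZMod.natCast_self]

def phi (hFμ : (p : ℤ) ∣ μ ^ 3 + a₁ * μ ^ 2 + a₂ * μ + a₃) : Zalpha a₁ a₂ a₃ →+* Rquot a₁ a₂ p μ :=
  AdjoinRoot.lift (Int.castRingHom _) (AdjoinRoot.root _) (eval₂_F_zero a₁ a₂ a₃ p μ hFμ)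

lemma phi_mk (hFμ : (p : ℤ) ∣ μ ^ 3 + a₁ * μ ^ 2 + a₂ * μ + a₃) (g : ℤ[X]) :
    phi a₁ a₂ a₃ p μ hFμ (AdjoinRoot.mk _ g) =
      AdjoinRoot.mk (Bbar a₁ a₂ p μ) (g.map (Int.castRingHom (ZMod p))) := by
  rw [phi, AdjoinRoot.lift_mk]
  have h1 : (Int.castRingHom (Rquot a₁ a₂ p μ)) =
      (algebraMap (ZMod p) (Rquot a₁ a₂ p μ)).comp (Int.castRingHom (ZMod p)) := by
    apply RingHom.ext_int
  rw [h1, ← eval₂_map, ← aeval_def, AdjoinRoot.aeval_eq]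


lemma phi_surjective (hFμ : (p : ℤ) ∣ μ ^ 3 + a₁ * μ ^ 2 + a₂ * μ + a₃) :
    Function.Surjective (phi a₁ a₂ a₃ p μ hFμ) := by
  intro y
  obtain ⟨g, rfl⟩ := AdjoinRoot.mk_surjective y
  obtain ⟨g', rfl⟩ := Polynomial.map_surjective (Int.castRingHom (ZMod p)) (fun x => ZMod.intCast_surjective x) g
  exact ⟨AdjoinRoot.mk _ g', phi_mk a₁ a₂ a₃ p μ hFμ g'⟩

lemma ker_phi (hFμ : (p : ℤ) ∣ μ ^ 3 + a₁ * μ ^ 2 + a₂ * μ + a₃) :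
    RingHom.ker (phi a₁ a₂ a₃ p μ hFμ) =
      Ideal.span {AdjoinRoot.mk (Fcubic a₁ a₂ a₃) (Bpoly a₁ a₂ μ), (p : Zalpha a₁ a₂ a₃)} := by
  apply le_antisymm
  · intro z hz
    obtain ⟨g, rfl⟩ := AdjoinRoot.mk_surjective z
    rw [RingHom.mem_ker, phi_mk, AdjoinRoot.mk_eq_zero] at hz
    obtain ⟨h, hh⟩ := hz
    obtain ⟨q, rfl⟩ := Polynomial.map_surjective (Int.castRingHom (ZMod p)) (fun x => ZMod.intCast_surjective x) h
    have hd : C (p : ℤ) ∣ g - Bpoly a₁ a₂ μ * q := by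
      rw [C_dvd_iff_dvd_coeff]
      intro n
      have hmap : g.map (Int.castRingHom (ZMod p)) =
          (Bpoly a₁ a₂ μ * q).map (Int.castRingHom (ZMod p)) := by
        rw [Polynomial.map_mul]; exact hh
      have h2 := congrArg (fun P => Polynomial.coeff P n) hmap
      simp only [Polynomial.coeff_map] at h2
      simp only [eq_intCast] at h2
      have h3 : ((g.coeff n - (Bpoly a₁ a₂ μ * q).coeff n : ℤ) : ZMod p) = 0 := by
        push_cast
        rw [h2]; ring
      simpa using (ZMod.intCast_zmod_eq_zero_iff_dvd _ _).mp h3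
    obtain ⟨r, hr⟩ := hd
    have hg : g = Bpoly a₁ a₂ μ * q + C (p : ℤ) * r := by linear_combination hr
    rw [hg]
    rw [Ideal.mem_span_pair]
    refine ⟨AdjoinRoot.mk _ q, AdjoinRoot.mk _ r, ?_⟩
    simp only [map_add, map_mul, AdjoinRoot.mk_C, map_natCast]
    ring
  · rw [Ideal.span_le]
    rintro z (rfl | rfl)
    · rw [SetLike.mem_coe, RingHom.mem_ker, phi_mk]
      exact AdjoinRoot.mk_self
    · rw [SetLike.mem_coe, RingHom.mem_ker, map_natCast]
      calc ((p : ℕ) : Rquot a₁ a₂ p μ)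
          = algebraMap (ZMod p) _ ((p : ℕ) : ZMod p) := by rw [map_natCast]
        _ = 0 := by rw [ZMod.natCast_self, map_zero]

lemma card_Rquot : Nat.card (Rquot a₁ a₂ p μ) = p ^ 2 := by
  have hm : (Bbar a₁ a₂ p μ).Monic := (Bpoly_monic a₁ a₂ μ).map _
  have hne : (Bbar a₁ a₂ p μ) ≠ 0 := hm.ne_zero
  have hdeg : (Bbar a₁ a₂ p μ).natDegree = 2 := by
    rw [(Bpoly_monic a₁ a₂ μ).natDegree_map]
    unfold Bpoly; compute_degree!
  have b : Module.Basis (Fin 2) (ZMod p) (Rquot a₁ a₂ p μ) := hdeg ▸ AdjoinRoot.powerBasisAux' hm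
  rw [Nat.card_congr b.equivFun.toEquiv]
  simp [Nat.card_eq_fintype_card, ZMod.card]


lemma span_eq_ideal_aux (hFμ : (p : ℤ) ∣ μ ^ 3 + a₁ * μ ^ 2 + a₂ * μ + a₃) :
    Submodule.span ℤ
        ({AdjoinRoot.mk (Fcubic a₁ a₂ a₃) (Bpoly a₁ a₂ μ),
          (p : Zalpha a₁ a₂ a₃) * alphaRoot a₁ a₂ a₃,
          (p : Zalpha a₁ a₂ a₃)} : Set (Zalpha a₁ a₂ a₃)) =
      (Ideal.span {AdjoinRoot.mk (Fcubic a₁ a₂ a₃) (Bpoly a₁ a₂ μ),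
          (p : Zalpha a₁ a₂ a₃)}).restrictScalars ℤ := by
  obtain ⟨k, hk⟩ := hFμ
  set β := AdjoinRoot.mk (Fcubic a₁ a₂ a₃) (Bpoly a₁ a₂ μ) with hβdef
  set α := alphaRoot a₁ a₂ a₃ with hαdef
  set M := Submodule.span ℤ
      ({β, (p : Zalpha a₁ a₂ a₃) * α, (p : Zalpha a₁ a₂ a₃)} : Set (Zalpha a₁ a₂ a₃)) with hMdef
  have hβmem : β ∈ M := Submodule.subset_span (by simp)
  have hpαmem : (p : Zalpha a₁ a₂ a₃) * α ∈ M := Submodule.subset_span (by simp)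
  have hpmem : (p : Zalpha a₁ a₂ a₃) ∈ M := Submodule.subset_span (by simp)
  -- the key polynomial identity in Zalpha
  have h0 : AdjoinRoot.mk (Fcubic a₁ a₂ a₃)
      ((X - C μ) * Bpoly a₁ a₂ μ + C (μ ^ 3 + a₁ * μ ^ 2 + a₂ * μ + a₃)) = 0 := by
    rw [← Fcubic_eq]; exact AdjoinRoot.mk_self
  rw [hk] at h0
  have h0' : (α - (μ : Zalpha a₁ a₂ a₃)) * β + ((p : ℤ) * k : ℤ) = 0 := by
    have h0s := h0
    simp [map_add, map_mul, map_sub, AdjoinRoot.mk_X, AdjoinRoot.mk_C, alphaRoot] at h0s ⊢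
    exact h0s
  have hβ' := beta_eq a₁ a₂ a₃ μ
  rw [← hβdef, ← hαdef] at hβ'
  -- closure of M under multiplication by α
  have key1 : α * β = μ • β + (-k) • (p : Zalpha a₁ a₂ a₃) := by
    simp only [zsmul_eq_mul]
    push_cast
    push_cast at h0'
    linear_combination h0'
  have key2 : α * ((p : Zalpha a₁ a₂ a₃) * α) =
      (p : ℤ) • β + (-(μ + a₁)) • ((p : Zalpha a₁ a₂ a₃) * α) +
        (-(μ ^ 2 + a₁ * μ + a₂)) • (p : Zalpha a₁ a₂ a₃) := by
    simp only [zsmul_eq_mul]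
    push_cast
    push_cast at hβ'
    linear_combination (-(p : ℕ) : Zalpha a₁ a₂ a₃) * hβ'
  have hαM : ∀ x ∈ M, α * x ∈ M := by
    intro x hx
    induction hx using Submodule.span_induction with
    | mem x hx =>
      rcases hx with rfl | rfl | rfl
      · rw [key1]; exact M.add_mem (M.smul_mem _ hβmem) (M.smul_mem _ hpmem)
      · rw [key2]
        exact M.add_mem (M.add_mem (M.smul_mem _ hβmem) (M.smul_mem _ hpαmem))
          (M.smul_mem _ hpmem)
      · rw [mul_comm]; exact hpαmem
    | zero => simpa using M.zero_mem
    | add x y _ _ hx hy => rw [mul_add]; exact M.add_mem hx hy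
    | smul a x _ hx => rw [mul_smul_comm]; exact M.smul_mem _ hx
  have hmul : ∀ (z x : Zalpha a₁ a₂ a₃), x ∈ M → z * x ∈ M := by
    intro z
    induction z using AdjoinRoot.induction_on with
    | ih g =>
      induction g using Polynomial.induction_on with
      | C a =>
        intro x hx
        have : AdjoinRoot.mk (Fcubic a₁ a₂ a₃) (C a) * x = a • x := by
          rw [AdjoinRoot.mk_C, zsmul_eq_mul, ← AdjoinRoot.algebraMap_eq,
            eq_intCast]
        rw [this]; exact M.smul_mem _ hx
      | add g₁ g₂ h₁ h₂ =>
        intro x hx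
        rw [map_add, add_mul]
        exact M.add_mem (h₁ x hx) (h₂ x hx)
      | monomial n a h =>
        intro x hx
        have : AdjoinRoot.mk (Fcubic a₁ a₂ a₃) (C a * X ^ (n + 1)) * x =
            α * (AdjoinRoot.mk (Fcubic a₁ a₂ a₃) (C a * X ^ n) * x) := by
          simp only [map_mul, map_pow, AdjoinRoot.mk_X]
          rw [show AdjoinRoot.root (Fcubic a₁ a₂ a₃) = α from rfl]
          ring
        rw [this]
        exact hαM _ (h x hx)
  apply le_antisymm
  · rw [Submodule.span_le]
    rintro z (rfl | rfl | rfl)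
    · exact Ideal.subset_span (by simp)
    · exact Ideal.mul_mem_right _ _ (Ideal.subset_span (by simp))
    · exact Ideal.subset_span (by simp)
  · intro x hx
    rw [Submodule.restrictScalars_mem] at hx
    induction hx using Submodule.span_induction with
    | mem x hx => rcases hx with rfl | rfl; exacts [hβmem, hpmem]
    | zero => exact M.zero_mem
    | add x y _ _ hx hy => exact M.add_mem hx hy
    | smul a x _ hx => rw [smul_eq_mul]; exact hmul a x hx

end Phi

/-- If `p` is a prime and `F(μ) ≡ 0 (mod p)`, then the `ℤ`-span of
`{α² + (μ + a₁)α + (μ² + a₁μ + a₂), pα, p}` in `ℤ[α]` coincides with the ideal of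
`ℤ[α]` generated by `{α² + (μ + a₁)α + (μ² + a₁μ + a₂), p}`; in particular this
`ℤ`-span is an ideal of `ℤ[α]` of index `p²`. -/
theorem span_eq_ideal_second_example
    (a₁ a₂ a₃ : ℤ)
    (hirr : Irreducible (Fcubic a₁ a₂ a₃))
    (p : ℕ) (hp : p.Prime) (μ : ℤ)
    (hFμ : (p : ℤ) ∣ μ ^ 3 + a₁ * μ ^ 2 + a₂ * μ + a₃) :
    Submodule.span ℤ
        ({alphaRoot a₁ a₂ a₃ ^ 2 + ((μ + a₁ : ℤ) : Zalpha a₁ a₂ a₃) * alphaRoot a₁ a₂ a₃ +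
            ((μ ^ 2 + a₁ * μ + a₂ : ℤ) : Zalpha a₁ a₂ a₃),
          (p : Zalpha a₁ a₂ a₃) * alphaRoot a₁ a₂ a₃,
          (p : Zalpha a₁ a₂ a₃)} : Set (Zalpha a₁ a₂ a₃)) =
      (Ideal.span {alphaRoot a₁ a₂ a₃ ^ 2 + ((μ + a₁ : ℤ) : Zalpha a₁ a₂ a₃) * alphaRoot a₁ a₂ a₃ +
            ((μ ^ 2 + a₁ * μ + a₂ : ℤ) : Zalpha a₁ a₂ a₃),
          (p : Zalpha a₁ a₂ a₃)}).restrictScalars ℤ ∧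
    Nat.card (Zalpha a₁ a₂ a₃ ⧸
        Ideal.span {alphaRoot a₁ a₂ a₃ ^ 2 + ((μ + a₁ : ℤ) : Zalpha a₁ a₂ a₃) * alphaRoot a₁ a₂ a₃ +
            ((μ ^ 2 + a₁ * μ + a₂ : ℤ) : Zalpha a₁ a₂ a₃),
          (p : Zalpha a₁ a₂ a₃)}) = p ^ 2 := by
  haveI : Fact p.Prime := ⟨hp⟩
  have hβ := beta_eq a₁ a₂ a₃ μ
  constructor
  · rw [← hβ]
    exact span_eq_ideal_aux a₁ a₂ a₃ p μ hFμ
  · rw [← hβ, ← ker_phi a₁ a₂ a₃ p μ hFμ,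
      Nat.card_congr (RingHom.quotientKerEquivOfSurjective
        (phi_surjective a₁ a₂ a₃ p μ hFμ)).toEquiv]
    exact card_Rquot a₁ a₂ p μ
end
end

section
/- Let m₁, m₂ be positive integers and μ₁, μ₂ ∈ ℤ with m₁ ∣ F(μ₁), m₂ ∣ F(μ₂), and gcd(gcd(m₁, m₂), μ₁ − μ₂) = 1. Then gcd(m₁, m₂) divides μ₁² + μ₁μ₂ + μ₂² + a₁(μ₁ + μ₂) + a₂. -/
/-- If `m₁ ∣ F(μ₁)`, `m₂ ∣ F(μ₂)` and `gcd(gcd(m₁, m₂), μ₁ - μ₂) = 1` for the cubic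
`F(X) = X³ + a₁X² + a₂X + a₃`, then `gcd(m₁, m₂)` divides
`μ₁² + μ₁μ₂ + μ₂² + a₁(μ₁ + μ₂) + a₂`. -/
theorem gcd_dvd_symmetric_expression
    (a₁ a₂ a₃ : ℤ)
    (m₁ m₂ : ℤ) (hm₁ : 0 < m₁) (hm₂ : 0 < m₂) (μ₁ μ₂ : ℤ)
    (h₁ : m₁ ∣ μ₁ ^ 3 + a₁ * μ₁ ^ 2 + a₂ * μ₁ + a₃)
    (h₂ : m₂ ∣ μ₂ ^ 3 + a₁ * μ₂ ^ 2 + a₂ * μ₂ + a₃)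
    (hgcd : Int.gcd ((Int.gcd m₁ m₂ : ℕ) : ℤ) (μ₁ - μ₂) = 1) :
    ((Int.gcd m₁ m₂ : ℕ) : ℤ) ∣
      μ₁ ^ 2 + μ₁ * μ₂ + μ₂ ^ 2 + a₁ * (μ₁ + μ₂) + a₂ := by
  set g : ℤ := ((Int.gcd m₁ m₂ : ℕ) : ℤ) with hg
  have hd1 : g ∣ μ₁ ^ 3 + a₁ * μ₁ ^ 2 + a₂ * μ₁ + a₃ :=
    (Int.gcd_dvd_left m₁ m₂).trans h₁
  have hd2 : g ∣ μ₂ ^ 3 + a₁ * μ₂ ^ 2 + a₂ * μ₂ + a₃ :=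
    (Int.gcd_dvd_right m₁ m₂).trans h₂
  have hdiff : g ∣ (μ₁ - μ₂) * (μ₁ ^ 2 + μ₁ * μ₂ + μ₂ ^ 2 + a₁ * (μ₁ + μ₂) + a₂) := by
    have := dvd_sub hd1 hd2
    have heq : (μ₁ ^ 3 + a₁ * μ₁ ^ 2 + a₂ * μ₁ + a₃) - (μ₂ ^ 3 + a₁ * μ₂ ^ 2 + a₂ * μ₂ + a₃)
        = (μ₁ - μ₂) * (μ₁ ^ 2 + μ₁ * μ₂ + μ₂ ^ 2 + a₁ * (μ₁ + μ₂) + a₂) := by ring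
    rwa [heq] at this
  exact (Int.isCoprime_iff_gcd_eq_one.mpr hgcd).dvd_of_dvd_mul_left hdiff
end

section
/- Let m₁, m₂ be positive integers and μ₁, μ₂ ∈ ℤ with F(μ₁) ≡ 0 (mod m₁), F(μ₂) ≡ 0 (mod m₂), and gcd(m₁, m₂, μ₁ − μ₂) = 1. Then there exists λ ∈ ℤ, unique modulo m₁m₂, such that the ℤ-submodule of ℤ[α] spanned by {α² + (μ₁ + a₁)α + λ, m₁α − μ₂m₁, m₁m₂} is an ideal of ℤ[α] (i.e. is closed under multiplication by α). -/
open Polynomial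

noncomputable section

/-- The `ℤ`-submodule of `ℤ[α]` spanned by
`{α² + (μ₁ + a₁)α + λ, m₁α - μ₂m₁, m₁m₂}`. -/
def idealSpan (a₁ a₂ a₃ m₁ m₂ μ₁ μ₂ lam : ℤ) : Submodule ℤ (Zalpha a₁ a₂ a₃) :=
  Submodule.span ℤ
    ({alphaRoot a₁ a₂ a₃ ^ 2 + ((μ₁ + a₁ : ℤ) : Zalpha a₁ a₂ a₃) * alphaRoot a₁ a₂ a₃ +
        (lam : Zalpha a₁ a₂ a₃),
      (m₁ : Zalpha a₁ a₂ a₃) * alphaRoot a₁ a₂ a₃ - ((μ₂ * m₁ : ℤ) : Zalpha a₁ a₂ a₃),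
      ((m₁ * m₂ : ℤ) : Zalpha a₁ a₂ a₃)} : Set (Zalpha a₁ a₂ a₃))

/-- The cubic relation satisfied by `α`. -/
lemma alphaRoot_cube (a₁ a₂ a₃ : ℤ) :
    alphaRoot a₁ a₂ a₃ ^ 3 + (a₁ : Zalpha a₁ a₂ a₃) * alphaRoot a₁ a₂ a₃ ^ 2 +
      (a₂ : Zalpha a₁ a₂ a₃) * alphaRoot a₁ a₂ a₃ + (a₃ : Zalpha a₁ a₂ a₃) = 0 := by
  have h0 := AdjoinRoot.eval₂_root (Fcubic a₁ a₂ a₃)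
  have h : eval₂ (AdjoinRoot.of (Fcubic a₁ a₂ a₃)) (AdjoinRoot.root (Fcubic a₁ a₂ a₃))
      (X ^ 3 + C a₁ * X ^ 2 + C a₂ * X + C a₃) = 0 := h0
  simp only [eval₂_add, eval₂_mul, eval₂_pow, eval₂_C, eval₂_X,
    eq_intCast (AdjoinRoot.of (Fcubic a₁ a₂ a₃))] at h
  exact h

/-- `1, α, α²` are `ℤ`-linearly independent. -/
lemma indep (a₁ a₂ a₃ u v w : ℤ)
    (h : (u : Zalpha a₁ a₂ a₃) + (v : Zalpha a₁ a₂ a₃) * alphaRoot a₁ a₂ a₃ +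
      (w : Zalpha a₁ a₂ a₃) * alphaRoot a₁ a₂ a₃ ^ 2 = 0) :
    u = 0 ∧ v = 0 ∧ w = 0 := by
  have hmk : (AdjoinRoot.mk (Fcubic a₁ a₂ a₃)) (C u + C v * X + C w * X ^ 2) = 0 := by
    simpa only [map_add, map_mul, map_pow, AdjoinRoot.mk_X, AdjoinRoot.mk_C, alphaRoot,
      eq_intCast (AdjoinRoot.of (Fcubic a₁ a₂ a₃))] using h
  rw [AdjoinRoot.mk_eq_zero] at hmk
  have hdegF : (Fcubic a₁ a₂ a₃).degree = 3 := by unfold Fcubic; compute_degree!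
  have hdeg : (C u + C v * X + C w * X ^ 2).degree < (Fcubic a₁ a₂ a₃).degree := by
    rw [hdegF]
    have : (C u + C v * X + C w * X ^ 2).degree ≤ 2 := by compute_degree
    exact lt_of_le_of_lt this (by norm_num)
  have hp0 : C u + C v * X + C w * X ^ 2 = 0 :=
    Polynomial.eq_zero_of_dvd_of_degree_lt hmk hdeg
  refine ⟨?_, ?_, ?_⟩
  · have := congrArg (fun p => Polynomial.coeff p 0) hp0
    simpa using this
  · have := congrArg (fun p => Polynomial.coeff p 1) hp0
    simp only [coeff_add, coeff_C_mul, coeff_C, coeff_X_one, coeff_X, coeff_zero, mul_one,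
      coeff_X_pow] at this
    simpa using this
  · have := congrArg (fun p => Polynomial.coeff p 2) hp0
    simp only [coeff_add, coeff_C_mul, coeff_C, coeff_X_one, coeff_X, coeff_zero, mul_one,
      coeff_X_pow] at this
    simpa using this

lemma combo_mem (a₁ a₂ a₃ m₁ m₂ μ₁ μ₂ lam c₁ c₂ c₃ : ℤ) :
    c₁ • (alphaRoot a₁ a₂ a₃ ^ 2 + ((μ₁ + a₁ : ℤ) : Zalpha a₁ a₂ a₃) * alphaRoot a₁ a₂ a₃ +
        (lam : Zalpha a₁ a₂ a₃)) +
    c₂ • ((m₁ : Zalpha a₁ a₂ a₃) * alphaRoot a₁ a₂ a₃ - ((μ₂ * m₁ : ℤ) : Zalpha a₁ a₂ a₃)) +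
    c₃ • ((m₁ * m₂ : ℤ) : Zalpha a₁ a₂ a₃) ∈ idealSpan a₁ a₂ a₃ m₁ m₂ μ₁ μ₂ lam := by
  refine Submodule.add_mem _ (Submodule.add_mem _ ?_ ?_) ?_ <;>
    exact Submodule.smul_mem _ _ (Submodule.subset_span (by simp))

lemma mem_combo (a₁ a₂ a₃ m₁ m₂ μ₁ μ₂ lam : ℤ) (x : Zalpha a₁ a₂ a₃)
    (hx : x ∈ idealSpan a₁ a₂ a₃ m₁ m₂ μ₁ μ₂ lam) :
    ∃ c₁ c₂ c₃ : ℤ,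
      x = c₁ • (alphaRoot a₁ a₂ a₃ ^ 2 + ((μ₁ + a₁ : ℤ) : Zalpha a₁ a₂ a₃) * alphaRoot a₁ a₂ a₃ +
        (lam : Zalpha a₁ a₂ a₃)) +
      c₂ • ((m₁ : Zalpha a₁ a₂ a₃) * alphaRoot a₁ a₂ a₃ - ((μ₂ * m₁ : ℤ) : Zalpha a₁ a₂ a₃)) +
      c₃ • ((m₁ * m₂ : ℤ) : Zalpha a₁ a₂ a₃) := by
  rw [idealSpan, Submodule.mem_span_insert] at hx
  obtain ⟨c₁, z, hz, rfl⟩ := hx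
  rw [Submodule.mem_span_insert] at hz
  obtain ⟨c₂, w, hw, rfl⟩ := hz
  rw [Submodule.mem_span_singleton] at hw
  obtain ⟨c₃, rfl⟩ := hw
  exact ⟨c₁, c₂, c₃, by ring⟩

/-- If `F(μ₁) ≡ 0 (mod m₁)`, `F(μ₂) ≡ 0 (mod m₂)` and `gcd(m₁, m₂, μ₁ - μ₂) = 1`,
then there is a `λ ∈ ℤ`, unique modulo `m₁m₂`, such that the `ℤ`-span of
`{α² + (μ₁ + a₁)α + λ, m₁α - μ₂m₁, m₁m₂}` is an ideal of `ℤ[α]`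
(i.e. is closed under multiplication by `α`). -/
theorem exists_lambda_ideal
    (a₁ a₂ a₃ : ℤ)
    (hirr : Irreducible (Fcubic a₁ a₂ a₃))
    (m₁ m₂ : ℤ) (hm₁ : 0 < m₁) (hm₂ : 0 < m₂) (μ₁ μ₂ : ℤ)
    (h₁ : m₁ ∣ μ₁ ^ 3 + a₁ * μ₁ ^ 2 + a₂ * μ₁ + a₃)
    (h₂ : m₂ ∣ μ₂ ^ 3 + a₁ * μ₂ ^ 2 + a₂ * μ₂ + a₃)
    (hgcd : Int.gcd ((Int.gcd m₁ m₂ : ℕ) : ℤ) (μ₁ - μ₂) = 1) :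
    ∃ lam : ℤ,
      (∀ x ∈ idealSpan a₁ a₂ a₃ m₁ m₂ μ₁ μ₂ lam,
        alphaRoot a₁ a₂ a₃ * x ∈ idealSpan a₁ a₂ a₃ m₁ m₂ μ₁ μ₂ lam) ∧
      ∀ lam' : ℤ,
        (∀ x ∈ idealSpan a₁ a₂ a₃ m₁ m₂ μ₁ μ₂ lam',
          alphaRoot a₁ a₂ a₃ * x ∈ idealSpan a₁ a₂ a₃ m₁ m₂ μ₁ μ₂ lam') →
        m₁ * m₂ ∣ lam' - lam := by
  obtain ⟨f₁, hf₁⟩ := h₁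
  obtain ⟨f₂, hf₂⟩ := h₂
  obtain ⟨u, v, huv⟩ := Int.isCoprime_iff_gcd_eq_one.mpr hgcd
  have hab := Int.gcd_eq_gcd_ab m₁ m₂
  have hxyz : (u * Int.gcdA m₁ m₂) * m₁ + (u * Int.gcdB m₁ m₂) * m₂ + v * (μ₁ - μ₂) = 1 := by
    calc (u * Int.gcdA m₁ m₂) * m₁ + (u * Int.gcdB m₁ m₂) * m₂ + v * (μ₁ - μ₂)
        = u * (m₁ * Int.gcdA m₁ m₂ + m₂ * Int.gcdB m₁ m₂) + v * (μ₁ - μ₂) := by ring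
      _ = u * ((Int.gcd m₁ m₂ : ℤ)) + v * (μ₁ - μ₂) := by rw [← hab]
      _ = 1 := huv
  set x : ℤ := u * Int.gcdA m₁ m₂
  set y : ℤ := u * Int.gcdB m₁ m₂
  set z : ℤ := v
  set lam : ℤ := y * m₂ * (a₂ + μ₁ ^ 2 + a₁ * μ₁) - x * m₁ * (μ₂ ^ 2 + μ₁ * μ₂ + a₁ * μ₂)
      - z * (a₃ + a₂ * μ₂ + μ₁ ^ 2 * μ₂ + a₁ * μ₁ * μ₂) with hlamdef
  have hA : ∃ c : ℤ, lam - (a₂ + μ₁ ^ 2 + a₁ * μ₁) = m₁ * c := by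
    refine ⟨x * (-(μ₂ ^ 2 + μ₁ * μ₂ + a₁ * μ₂) - (a₂ + μ₁ ^ 2 + a₁ * μ₁)) - z * f₁, ?_⟩
    rw [hlamdef]
    linear_combination (-z) * hf₁ + (a₂ + μ₁ ^ 2 + a₁ * μ₁) * hxyz
  have hB : ∃ c : ℤ, lam + (μ₂ ^ 2 + μ₁ * μ₂ + a₁ * μ₂) = m₂ * c := by
    refine ⟨y * ((a₂ + μ₁ ^ 2 + a₁ * μ₁) + (μ₂ ^ 2 + μ₁ * μ₂ + a₁ * μ₂)) - z * f₂, ?_⟩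
    rw [hlamdef]
    linear_combination (-z) * hf₂ - (μ₂ ^ 2 + μ₁ * μ₂ + a₁ * μ₂) * hxyz
  have hC : ∃ c : ℤ, (μ₁ - μ₂) * lam + (a₃ + a₂ * μ₂ + μ₁ ^ 2 * μ₂ + a₁ * μ₁ * μ₂)
      = m₁ * m₂ * c := by
    refine ⟨y * f₁ + x * f₂, ?_⟩
    rw [hlamdef]
    linear_combination y * m₂ * hf₁ + x * m₁ * hf₂
      - (a₃ + a₂ * μ₂ + μ₁ ^ 2 * μ₂ + a₁ * μ₁ * μ₂) * hxyz
  have hcube := alphaRoot_cube a₁ a₂ a₃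
  have closure : ∀ l : ℤ,
      (∃ c : ℤ, l - (a₂ + μ₁ ^ 2 + a₁ * μ₁) = m₁ * c) →
      (∃ c : ℤ, l + (μ₂ ^ 2 + μ₁ * μ₂ + a₁ * μ₂) = m₂ * c) →
      (∃ c : ℤ, (μ₁ - μ₂) * l + (a₃ + a₂ * μ₂ + μ₁ ^ 2 * μ₂ + a₁ * μ₁ * μ₂) = m₁ * m₂ * c) →
      ∀ w ∈ idealSpan a₁ a₂ a₃ m₁ m₂ μ₁ μ₂ l,
        alphaRoot a₁ a₂ a₃ * w ∈ idealSpan a₁ a₂ a₃ m₁ m₂ μ₁ μ₂ l := by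
    rintro l ⟨cA, hcA⟩ ⟨cB, hcB⟩ ⟨cC, hcC⟩ w hw
    have hcA' := congrArg (fun t : ℤ => (t : Zalpha a₁ a₂ a₃)) hcA
    have hcB' := congrArg (fun t : ℤ => (t : Zalpha a₁ a₂ a₃)) hcB
    have hcC' := congrArg (fun t : ℤ => (t : Zalpha a₁ a₂ a₃)) hcC
    push_cast at hcA' hcB' hcC'
    refine Submodule.span_induction ?_ ?_ ?_ ?_ hw
    · intro g hg
      simp only [Set.mem_insert_iff, Set.mem_singleton_iff] at hg
      rcases hg with rfl | rfl | rfl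
      · have hid : alphaRoot a₁ a₂ a₃ *
            (alphaRoot a₁ a₂ a₃ ^ 2 + ((μ₁ + a₁ : ℤ) : Zalpha a₁ a₂ a₃) * alphaRoot a₁ a₂ a₃ +
              (l : Zalpha a₁ a₂ a₃)) =
            μ₁ • (alphaRoot a₁ a₂ a₃ ^ 2 +
                ((μ₁ + a₁ : ℤ) : Zalpha a₁ a₂ a₃) * alphaRoot a₁ a₂ a₃ +
                (l : Zalpha a₁ a₂ a₃)) +
            cA • ((m₁ : Zalpha a₁ a₂ a₃) * alphaRoot a₁ a₂ a₃ -
                ((μ₂ * m₁ : ℤ) : Zalpha a₁ a₂ a₃)) +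
            (-cC) • ((m₁ * m₂ : ℤ) : Zalpha a₁ a₂ a₃) := by
          simp only [zsmul_eq_mul]
          push_cast
          linear_combination hcube + (alphaRoot a₁ a₂ a₃ - (μ₂ : Zalpha a₁ a₂ a₃)) * hcA' - hcC'
        rw [hid]
        exact combo_mem a₁ a₂ a₃ m₁ m₂ μ₁ μ₂ l μ₁ cA (-cC)
      · have hid : alphaRoot a₁ a₂ a₃ *
            ((m₁ : Zalpha a₁ a₂ a₃) * alphaRoot a₁ a₂ a₃ -
              ((μ₂ * m₁ : ℤ) : Zalpha a₁ a₂ a₃)) =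
            m₁ • (alphaRoot a₁ a₂ a₃ ^ 2 +
                ((μ₁ + a₁ : ℤ) : Zalpha a₁ a₂ a₃) * alphaRoot a₁ a₂ a₃ +
                (l : Zalpha a₁ a₂ a₃)) +
            (-(μ₁ + μ₂ + a₁)) • ((m₁ : Zalpha a₁ a₂ a₃) * alphaRoot a₁ a₂ a₃ -
                ((μ₂ * m₁ : ℤ) : Zalpha a₁ a₂ a₃)) +
            (-cB) • ((m₁ * m₂ : ℤ) : Zalpha a₁ a₂ a₃) := by
          simp only [zsmul_eq_mul]
          push_cast
          linear_combination (-(m₁ : Zalpha a₁ a₂ a₃)) * hcB'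
        rw [hid]
        exact combo_mem a₁ a₂ a₃ m₁ m₂ μ₁ μ₂ l m₁ (-(μ₁ + μ₂ + a₁)) (-cB)
      · have hid : alphaRoot a₁ a₂ a₃ * ((m₁ * m₂ : ℤ) : Zalpha a₁ a₂ a₃) =
            (0 : ℤ) • (alphaRoot a₁ a₂ a₃ ^ 2 +
                ((μ₁ + a₁ : ℤ) : Zalpha a₁ a₂ a₃) * alphaRoot a₁ a₂ a₃ +
                (l : Zalpha a₁ a₂ a₃)) +
            m₂ • ((m₁ : Zalpha a₁ a₂ a₃) * alphaRoot a₁ a₂ a₃ -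
                ((μ₂ * m₁ : ℤ) : Zalpha a₁ a₂ a₃)) +
            μ₂ • ((m₁ * m₂ : ℤ) : Zalpha a₁ a₂ a₃) := by
          simp only [zsmul_eq_mul]
          push_cast
          ring
        rw [hid]
        exact combo_mem a₁ a₂ a₃ m₁ m₂ μ₁ μ₂ l 0 m₂ μ₂
    · simp
    · intro p q _ _ hp hq
      rw [mul_add]
      exact Submodule.add_mem _ hp hq
    · intro c p _ hp
      rw [mul_smul_comm]
      exact Submodule.smul_mem _ _ hp
  refine ⟨lam, closure lam hA hB hC, ?_⟩
  intro lam' hcl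
  have hg₁mem : (alphaRoot a₁ a₂ a₃ ^ 2 +
      ((μ₁ + a₁ : ℤ) : Zalpha a₁ a₂ a₃) * alphaRoot a₁ a₂ a₃ +
      (lam' : Zalpha a₁ a₂ a₃)) ∈ idealSpan a₁ a₂ a₃ m₁ m₂ μ₁ μ₂ lam' := by
    rw [idealSpan]; exact Submodule.subset_span (by simp)
  have hg₂mem : ((m₁ : Zalpha a₁ a₂ a₃) * alphaRoot a₁ a₂ a₃ -
      ((μ₂ * m₁ : ℤ) : Zalpha a₁ a₂ a₃)) ∈ idealSpan a₁ a₂ a₃ m₁ m₂ μ₁ μ₂ lam' := by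
    rw [idealSpan]; exact Submodule.subset_span (by simp)
  have hm₁ne : m₁ ≠ 0 := ne_of_gt hm₁
  -- condition from α * g₂ : m₂ ∣ lam' + (μ₂² + μ₁μ₂ + a₁μ₂)
  have hU1 : ∃ c : ℤ, lam' + (μ₂ ^ 2 + μ₁ * μ₂ + a₁ * μ₂) = m₂ * c := by
    have hmem : ((-(m₁ * (lam' + (μ₂ ^ 2 + μ₁ * μ₂ + a₁ * μ₂))) : ℤ) : Zalpha a₁ a₂ a₃)
        ∈ idealSpan a₁ a₂ a₃ m₁ m₂ μ₁ μ₂ lam' := by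
      have hE : ((-(m₁ * (lam' + (μ₂ ^ 2 + μ₁ * μ₂ + a₁ * μ₂))) : ℤ) : Zalpha a₁ a₂ a₃) =
          alphaRoot a₁ a₂ a₃ * ((m₁ : Zalpha a₁ a₂ a₃) * alphaRoot a₁ a₂ a₃ -
            ((μ₂ * m₁ : ℤ) : Zalpha a₁ a₂ a₃)) -
          m₁ • (alphaRoot a₁ a₂ a₃ ^ 2 +
            ((μ₁ + a₁ : ℤ) : Zalpha a₁ a₂ a₃) * alphaRoot a₁ a₂ a₃ +
            (lam' : Zalpha a₁ a₂ a₃)) +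
          (μ₁ + μ₂ + a₁) • ((m₁ : Zalpha a₁ a₂ a₃) * alphaRoot a₁ a₂ a₃ -
            ((μ₂ * m₁ : ℤ) : Zalpha a₁ a₂ a₃)) := by
        simp only [zsmul_eq_mul]
        push_cast
        ring
      rw [hE]
      exact Submodule.add_mem _
        (Submodule.sub_mem _ (hcl _ hg₂mem) (Submodule.smul_mem _ _ hg₁mem))
        (Submodule.smul_mem _ _ hg₂mem)
    obtain ⟨c₁, c₂, c₃, hcombo⟩ := mem_combo a₁ a₂ a₃ m₁ m₂ μ₁ μ₂ lam' _ hmem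
    simp only [zsmul_eq_mul] at hcombo
    obtain ⟨hu, hv, hw⟩ := indep a₁ a₂ a₃
      (c₁ * lam' - c₂ * (μ₂ * m₁) + c₃ * (m₁ * m₂) +
        m₁ * (lam' + (μ₂ ^ 2 + μ₁ * μ₂ + a₁ * μ₂)))
      (c₁ * (μ₁ + a₁) + c₂ * m₁) c₁ (by push_cast at hcombo ⊢; linear_combination -hcombo)
    refine ⟨-c₃, mul_left_cancel₀ hm₁ne ?_⟩
    linear_combination hu + μ₂ * hv + (-lam' - μ₂ * (μ₁ + a₁)) * hw
  -- conditions from α * g₁'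
  have hU23 : (∃ c : ℤ, lam' - (a₂ + μ₁ ^ 2 + a₁ * μ₁) = m₁ * c) ∧
      (∃ c : ℤ, (μ₁ - μ₂) * lam' + (a₃ + a₂ * μ₂ + μ₁ ^ 2 * μ₂ + a₁ * μ₁ * μ₂)
        = m₁ * m₂ * c) := by
    have hmem : (((lam' - (a₂ + μ₁ ^ 2 + a₁ * μ₁) : ℤ)) : Zalpha a₁ a₂ a₃) *
        alphaRoot a₁ a₂ a₃ + ((-(a₃ + μ₁ * lam') : ℤ) : Zalpha a₁ a₂ a₃)
        ∈ idealSpan a₁ a₂ a₃ m₁ m₂ μ₁ μ₂ lam' := by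
      have hE : (((lam' - (a₂ + μ₁ ^ 2 + a₁ * μ₁) : ℤ)) : Zalpha a₁ a₂ a₃) *
          alphaRoot a₁ a₂ a₃ + ((-(a₃ + μ₁ * lam') : ℤ) : Zalpha a₁ a₂ a₃) =
          alphaRoot a₁ a₂ a₃ * (alphaRoot a₁ a₂ a₃ ^ 2 +
            ((μ₁ + a₁ : ℤ) : Zalpha a₁ a₂ a₃) * alphaRoot a₁ a₂ a₃ +
            (lam' : Zalpha a₁ a₂ a₃)) -
          μ₁ • (alphaRoot a₁ a₂ a₃ ^ 2 +
            ((μ₁ + a₁ : ℤ) : Zalpha a₁ a₂ a₃) * alphaRoot a₁ a₂ a₃ +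
            (lam' : Zalpha a₁ a₂ a₃)) := by
        simp only [zsmul_eq_mul]
        push_cast
        linear_combination -hcube
      rw [hE]
      exact Submodule.sub_mem _ (hcl _ hg₁mem) (Submodule.smul_mem _ _ hg₁mem)
    obtain ⟨c₁, c₂, c₃, hcombo⟩ := mem_combo a₁ a₂ a₃ m₁ m₂ μ₁ μ₂ lam' _ hmem
    simp only [zsmul_eq_mul] at hcombo
    obtain ⟨hu, hv, hw⟩ := indep a₁ a₂ a₃
      (c₁ * lam' - c₂ * (μ₂ * m₁) + c₃ * (m₁ * m₂) + (a₃ + μ₁ * lam'))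
      (c₁ * (μ₁ + a₁) + c₂ * m₁ - (lam' - (a₂ + μ₁ ^ 2 + a₁ * μ₁))) c₁
      (by push_cast at hcombo ⊢; linear_combination -hcombo)
    have h6 : c₂ * m₁ = lam' - (a₂ + μ₁ ^ 2 + a₁ * μ₁) := by
      linear_combination hv - (μ₁ + a₁) * hw
    refine ⟨⟨c₂, by linear_combination -h6⟩, ⟨-c₃, ?_⟩⟩
    linear_combination hu + μ₂ * h6 - lam' * hw
  obtain ⟨hU2, hU3⟩ := hU23
  obtain ⟨cA, hcA⟩ := hA
  obtain ⟨cB, hcB⟩ := hB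
  obtain ⟨cC, hcC⟩ := hC
  obtain ⟨dA, hdA⟩ := hU2
  obtain ⟨dB, hdB⟩ := hU1
  obtain ⟨dC, hdC⟩ := hU3
  have hd₁ : lam' - lam = m₁ * (dA - cA) := by linear_combination hdA - hcA
  have hd₂ : lam' - lam = m₂ * (dB - cB) := by linear_combination hdB - hcB
  have hd₃ : (μ₁ - μ₂) * (lam' - lam) = m₁ * m₂ * (dC - cC) := by
    linear_combination hdC - hcC
  exact ⟨x * (dB - cB) + y * (dA - cA) + z * (dC - cC), by
    linear_combination (-(lam' - lam)) * hxyz + x * m₁ * hd₂ + y * m₂ * hd₁ + z * hd₃⟩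
end
end

section
/- Let v₁, v₂ ∈ ℝ³ be linearly independent vectors lying in the plane {x ∈ ℝ³ : x₁ + x₂ + x₃ = 0}, and define Φ : ℝ² → ℝ³ by Φ(s₁, s₂) = (exp(w₁), exp(w₂), exp(w₃)) where w = s₁v₁ + s₂v₂. Then for every nonzero linear functional L : ℝ³ → ℝ there exists a constant C > 0 such that for all ε > 0, the two-dimensional Lebesgue measure of the set {(s₁, s₂) ∈ [0,1]² : |L(Φ(s₁, s₂))| ≤ ε} is at most C·ε. -/
open MeasureTheory

lemma mvt_piece (f f' : ℝ → ℝ) (hf : ∀ x, HasDerivAt f (f' x) x)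
    (δ ε : ℝ) (hδ : 0 < δ) (S : Set ℝ)
    (hS1 : ∀ u ∈ S, |f u| ≤ ε)
    (hS2 : ∀ u ∈ S, ∀ u' ∈ S, u ≤ u' → ∀ w ∈ Set.Icc u u', δ ≤ f' w) :
    volume S ≤ ENNReal.ofReal (4 * (ε / δ)) := by
  rcases S.eq_empty_or_nonempty with h | ⟨u₀, hu₀⟩
  · simp [h]
  have hε0 : 0 ≤ ε := le_trans (abs_nonneg _) (hS1 u₀ hu₀)
  have key : ∀ u ∈ S, ∀ u' ∈ S, u ≤ u' → u' - u ≤ 2 * (ε / δ) := by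
    intro u hu u' hu' hle
    rcases eq_or_lt_of_le hle with rfl | hlt
    · simp; positivity
    · obtain ⟨c, hc, hc2⟩ := exists_hasDerivAt_eq_slope f f' hlt
        (fun x _ => (hf x).continuousAt.continuousWithinAt)
        (fun x _ => hf x)
      have h1 : δ ≤ (f u' - f u) / (u' - u) := hc2 ▸ hS2 u hu u' hu' hle c
        ⟨hc.1.le, hc.2.le⟩
      have h2 : f u' - f u ≤ 2 * ε := by
        have := hS1 u hu; have := hS1 u' hu'
        have := abs_le.1 (hS1 u hu); have := abs_le.1 (hS1 u' hu')
        linarith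
      have hpos : 0 < u' - u := by linarith
      rw [le_div_iff₀ hpos] at h1
      rw [show 2 * (ε / δ) = 2 * ε / δ by ring, le_div_iff₀ hδ]
      nlinarith
  have hsub : S ⊆ Set.Icc (u₀ - 2 * (ε / δ)) (u₀ + 2 * (ε / δ)) := by
    intro u hu
    rcases le_total u u₀ with h | h
    · have := key u hu u₀ hu₀ h
      constructor <;> [linarith; linarith [mul_nonneg (by norm_num : (0:ℝ) ≤ 2) (div_nonneg hε0 hδ.le)]]
    · have := key u₀ hu₀ u hu h
      constructor <;> [linarith [mul_nonneg (by norm_num : (0:ℝ) ≤ 2) (div_nonneg hε0 hδ.le)]; linarith]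
  calc volume S ≤ volume (Set.Icc (u₀ - 2 * (ε / δ)) (u₀ + 2 * (ε / δ))) := measure_mono hsub
    _ = ENNReal.ofReal (4 * (ε / δ)) := by rw [Real.volume_Icc]; congr 1; ring

lemma plus_bound (A B C δ ε : ℝ) (hδ : 0 < δ) (hε : 0 ≤ ε) :
    volume {u : ℝ | |A * Real.exp u + B + C * Real.exp (-u)| ≤ ε ∧
      δ ≤ A * Real.exp u - C * Real.exp (-u)} ≤ ENNReal.ofReal (8 * (ε / δ)) := by
  set f : ℝ → ℝ := fun u => A * Real.exp u + B + C * Real.exp (-u) with hfdef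
  set f' : ℝ → ℝ := fun u => A * Real.exp u - C * Real.exp (-u) with hf'def
  have hf : ∀ x, HasDerivAt f (f' x) x := by
    intro x
    have h2 : HasDerivAt (fun u : ℝ => Real.exp (-u)) (-Real.exp (-x)) x := by
      exact ((Real.hasDerivAt_exp (-x)).comp x ((hasDerivAt_id x).neg)).congr_deriv (by simp)
    have := (((Real.hasDerivAt_exp x).const_mul A).add_const B).add (h2.const_mul C)
    exact this.congr_deriv (by ring)
  -- q w := A * (exp w)^2 - δ * exp w - C ; q w ≥ 0 ↔ f' w ≥ δ
  have trans1 : ∀ w, 0 ≤ A * (Real.exp w)^2 - δ * Real.exp w - C → δ ≤ f' w := by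
    intro w h
    have he : (0:ℝ) < Real.exp w := Real.exp_pos w
    have hei : Real.exp (-w) = (Real.exp w)⁻¹ := Real.exp_neg w
    simp only [hf'def, hei]
    rw [← sub_nonneg]
    have expand : A * Real.exp w - C * (Real.exp w)⁻¹ - δ
        = (A * (Real.exp w)^2 - δ * Real.exp w - C) / Real.exp w := by
      field_simp; ring
    rw [expand]
    positivity
  have trans2 : ∀ w, δ ≤ f' w → 0 ≤ A * (Real.exp w)^2 - δ * Real.exp w - C := by
    intro w h
    have he : (0:ℝ) < Real.exp w := Real.exp_pos w
    have hei : Real.exp (-w) = (Real.exp w)⁻¹ := Real.exp_neg w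
    simp only [hf'def, hei] at h
    rw [← sub_nonneg] at h
    have expand : A * Real.exp w - C * (Real.exp w)⁻¹ - δ
        = (A * (Real.exp w)^2 - δ * Real.exp w - C) / Real.exp w := by
      field_simp; ring
    rw [expand, le_div_iff₀ he] at h
    linarith
  set S : Set ℝ := {u : ℝ | |f u| ≤ ε ∧ δ ≤ f' u} with hSdef
  have hS1 : ∀ u ∈ S, |f u| ≤ ε := fun u hu => hu.1
  rcases le_or_gt A 0 with hA | hA
  · -- q antitone everywhere
    refine le_trans (mvt_piece f f' hf δ ε hδ S hS1 ?_) (ENNReal.ofReal_le_ofReal (by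
      have : 0 ≤ ε / δ := div_nonneg hε hδ.le
      linarith))
    intro u hu u' hu' hle w hw
    apply trans1
    have hq' := trans2 u' hu'.2
    have hxy : Real.exp w ≤ Real.exp u' := Real.exp_le_exp.2 hw.2
    have hAx : A * (Real.exp w + Real.exp u') ≤ 0 :=
      mul_nonpos_of_nonpos_of_nonneg hA (by positivity)
    have hfac : 0 ≤ (Real.exp u' - Real.exp w) * (δ - A*(Real.exp w + Real.exp u')) :=
      mul_nonneg (by linarith) (by linarith)
    have hid : A * Real.exp w ^ 2 - δ * Real.exp w - C
        = (A * Real.exp u' ^ 2 - δ * Real.exp u' - C)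
          + (Real.exp u' - Real.exp w) * (δ - A*(Real.exp w + Real.exp u')) := by ring
    linarith
  · set t := Real.log (δ / (2*A)) with htdef
    have het : Real.exp t = δ / (2*A) := Real.exp_log (by positivity)
    have hcover : S ⊆ (S ∩ Set.Iic t) ∪ (S ∩ Set.Ici t) := by
      intro u hu; rcases le_total u t with h | h
      · exact Or.inl ⟨hu, h⟩
      · exact Or.inr ⟨hu, h⟩
    have hb1 : volume (S ∩ Set.Iic t) ≤ ENNReal.ofReal (4 * (ε / δ)) := by
      apply mvt_piece f f' hf δ ε hδ _ (fun u hu => hu.1.1)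
      intro u hu u' hu' hle w hw
      apply trans1
      have hq' := trans2 u' hu'.1.2
      have hxy : Real.exp w ≤ Real.exp u' := Real.exp_le_exp.2 hw.2
      have hyt : Real.exp u' ≤ δ / (2*A) := het ▸ Real.exp_le_exp.2 hu'.2
      have h2A : 2 * A * Real.exp u' ≤ δ := by
        rw [le_div_iff₀ (by positivity)] at hyt; linarith
      have hfac : 0 ≤ (Real.exp u' - Real.exp w) * (δ - A*(Real.exp w + Real.exp u')) :=
        mul_nonneg (by linarith) (by nlinarith [Real.exp_pos w, Real.exp_pos u'])
      have hid : A * Real.exp w ^ 2 - δ * Real.exp w - C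
          = (A * Real.exp u' ^ 2 - δ * Real.exp u' - C)
            + (Real.exp u' - Real.exp w) * (δ - A*(Real.exp w + Real.exp u')) := by ring
      linarith
    have hb2 : volume (S ∩ Set.Ici t) ≤ ENNReal.ofReal (4 * (ε / δ)) := by
      apply mvt_piece f f' hf δ ε hδ _ (fun u hu => hu.1.1)
      intro u hu u' hu' hle w hw
      apply trans1
      have hq := trans2 u hu.1.2
      have hxy : Real.exp u ≤ Real.exp w := Real.exp_le_exp.2 hw.1
      have hxt : δ / (2*A) ≤ Real.exp u := het ▸ Real.exp_le_exp.2 hu.2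
      have h2A : δ ≤ 2 * A * Real.exp u := by
        rw [div_le_iff₀ (by positivity)] at hxt; linarith
      have hfac : 0 ≤ (Real.exp w - Real.exp u) * (A*(Real.exp w + Real.exp u) - δ) :=
        mul_nonneg (by linarith) (by nlinarith [Real.exp_pos u, Real.exp_pos w])
      have hid : A * Real.exp w ^ 2 - δ * Real.exp w - C
          = (A * Real.exp u ^ 2 - δ * Real.exp u - C)
            + (Real.exp w - Real.exp u) * (A*(Real.exp w + Real.exp u) - δ) := by ring
      linarith
    calc volume S ≤ volume ((S ∩ Set.Iic t) ∪ (S ∩ Set.Ici t)) := measure_mono hcover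
      _ ≤ volume (S ∩ Set.Iic t) + volume (S ∩ Set.Ici t) := measure_union_le _ _
      _ ≤ ENNReal.ofReal (4 * (ε / δ)) + ENNReal.ofReal (4 * (ε / δ)) := add_le_add hb1 hb2
      _ = ENNReal.ofReal (8 * (ε / δ)) := by
          rw [← ENNReal.ofReal_add (by positivity) (by positivity)]; congr 1; ring

lemma dichotomy (a b c R δ : ℝ) (hR : 0 < R)
    (hδdef : δ = Real.exp (-(2*R)) * max |a| (max |b| |c|) / 3)
    (hm : 0 < max |a| (max |b| |c|))
    (x : ℝ × ℝ) (hx1 : -R ≤ x.1) (hx1' : x.1 ≤ R) (hx2 : -R ≤ x.2) (hx2' : x.2 ≤ R)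
    (hg : |a * Real.exp x.1 + b * Real.exp x.2 + c * Real.exp (-x.1 - x.2)| ≤ δ) :
    δ ≤ |a * Real.exp x.1 - c * Real.exp (-x.1 - x.2)| ∨
    δ ≤ |b * Real.exp x.2 - c * Real.exp (-x.1 - x.2)| := by
  set m := max |a| (max |b| |c|) with hmdef
  have hepos : (0:ℝ) < Real.exp (-(2*R)) := Real.exp_pos _
  by_contra hcon
  push_neg at hcon
  obtain ⟨h1, h2⟩ := hcon
  set G := a * Real.exp x.1 + b * Real.exp x.2 + c * Real.exp (-x.1 - x.2) with hG
  set Gu := a * Real.exp x.1 - c * Real.exp (-x.1 - x.2) with hGu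
  set Gv := b * Real.exp x.2 - c * Real.exp (-x.1 - x.2) with hGv
  have hE1 : Real.exp (-(2*R)) ≤ Real.exp x.1 := Real.exp_le_exp.2 (by linarith)
  have hE2 : Real.exp (-(2*R)) ≤ Real.exp x.2 := Real.exp_le_exp.2 (by linarith)
  have hE3 : Real.exp (-(2*R)) ≤ Real.exp (-x.1 - x.2) := Real.exp_le_exp.2 (by linarith)
  have ida : 3*(a * Real.exp x.1) = G + 2*Gu + (-Gv) := by rw [hG, hGu, hGv]; ring
  have idb : 3*(b * Real.exp x.2) = G + (-Gu) + 2*Gv := by rw [hG, hGu, hGv]; ring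
  have idc : 3*(c * Real.exp (-x.1 - x.2)) = G + (-Gu) + (-Gv) := by rw [hG, hGu, hGv]; ring
  have ba : 3 * |a| * Real.exp (-(2*R)) ≤ 4*δ := by
    have h5 := abs_add_three G (2*Gu) (-Gv)
    rw [← ida, abs_mul, abs_mul, abs_mul, abs_neg,
      show |(3:ℝ)| = 3 by norm_num, show |(2:ℝ)| = 2 by norm_num,
      abs_of_pos (Real.exp_pos x.1)] at h5
    nlinarith [mul_nonneg (abs_nonneg a) (sub_nonneg.2 hE1)]
  have bb : 3 * |b| * Real.exp (-(2*R)) ≤ 4*δ := by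
    have h5 := abs_add_three G (-Gu) (2*Gv)
    rw [← idb, abs_mul, abs_mul, abs_mul, abs_neg,
      show |(3:ℝ)| = 3 by norm_num, show |(2:ℝ)| = 2 by norm_num,
      abs_of_pos (Real.exp_pos x.2)] at h5
    nlinarith [mul_nonneg (abs_nonneg b) (sub_nonneg.2 hE2)]
  have bc : 3 * |c| * Real.exp (-(2*R)) ≤ 4*δ := by
    have h5 := abs_add_three G (-Gu) (-Gv)
    rw [← idc, abs_mul, abs_mul, abs_neg, abs_neg,
      show |(3:ℝ)| = 3 by norm_num,
      abs_of_pos (Real.exp_pos (-x.1 - x.2))] at h5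
    nlinarith [mul_nonneg (abs_nonneg c) (sub_nonneg.2 hE3)]
  have hmle : m ≤ |a| ∨ m ≤ |b| ∨ m ≤ |c| := by
    rcases max_choice |a| (max |b| |c|) with h | h
    · exact Or.inl h.le
    · rcases max_choice |b| |c| with h' | h'
      · exact Or.inr (Or.inl (h.le.trans h'.le))
      · exact Or.inr (Or.inr (h.le.trans h'.le))
  have hkey : 3 * m * Real.exp (-(2*R)) ≤ 4 * δ := by
    rcases hmle with h | h | h
    · exact le_trans (mul_le_mul_of_nonneg_right (by linarith) hepos.le) ba
    · exact le_trans (mul_le_mul_of_nonneg_right (by linarith) hepos.le) bb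
    · exact le_trans (mul_le_mul_of_nonneg_right (by linarith) hepos.le) bc
  rw [hδdef] at hkey
  nlinarith [mul_pos hepos hm]

-- one-dimensional two-sided bound
lemma oneDim (A B C δ ε : ℝ) (hδ : 0 < δ) (hε : 0 ≤ ε) :
    volume {u : ℝ | |A * Real.exp u + B + C * Real.exp (-u)| ≤ ε ∧
      δ ≤ |A * Real.exp u - C * Real.exp (-u)|} ≤ ENNReal.ofReal (16 * (ε / δ)) := by
  have hsub : {u : ℝ | |A * Real.exp u + B + C * Real.exp (-u)| ≤ ε ∧
      δ ≤ |A * Real.exp u - C * Real.exp (-u)|} ⊆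
      {u : ℝ | |A * Real.exp u + B + C * Real.exp (-u)| ≤ ε ∧
        δ ≤ A * Real.exp u - C * Real.exp (-u)} ∪
      {u : ℝ | |(-A) * Real.exp u + (-B) + (-C) * Real.exp (-u)| ≤ ε ∧
        δ ≤ (-A) * Real.exp u - (-C) * Real.exp (-u)} := by
    intro u ⟨hu1, hu2⟩
    rcases le_abs.1 hu2 with h | h
    · exact Or.inl ⟨hu1, h⟩
    · refine Or.inr ⟨?_, by linarith⟩
      rw [show (-A) * Real.exp u + (-B) + (-C) * Real.exp (-u)
        = -(A * Real.exp u + B + C * Real.exp (-u)) by ring, abs_neg]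
      exact hu1
  refine le_trans (measure_mono hsub) (le_trans (measure_union_le _ _) ?_)
  refine le_trans (add_le_add (plus_bound A B C δ ε hδ hε) (plus_bound (-A) (-B) (-C) δ ε hδ hε)) ?_
  rw [← ENNReal.ofReal_add (by positivity) (by positivity)]
  apply ENNReal.ofReal_le_ofReal; linarith

lemma twoDim (a b c R : ℝ) (hR : 0 < R) (hm : 0 < max |a| (max |b| |c|)) :
    ∃ C : ℝ, 0 < C ∧ ∀ ε : ℝ, 0 < ε →
      volume {x : ℝ × ℝ | x ∈ Set.Icc (-R) R ×ˢ Set.Icc (-R) R ∧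
        |a * Real.exp x.1 + b * Real.exp x.2 + c * Real.exp (-x.1 - x.2)| ≤ ε} ≤
      ENNReal.ofReal (C * ε) := by
  obtain ⟨δ, hδ, hδdef⟩ : ∃ δ : ℝ, 0 < δ ∧ δ = Real.exp (-(2*R)) * max |a| (max |b| |c|) / 3 :=
    ⟨_, by positivity, rfl⟩
  refine ⟨64*R/δ + 4*R^2/δ, by positivity, ?_⟩
  intro ε hε
  rcases lt_or_ge δ ε with hcase | hcase
  · -- trivial case
    have h1 : volume {x : ℝ × ℝ | x ∈ Set.Icc (-R) R ×ˢ Set.Icc (-R) R ∧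
        |a * Real.exp x.1 + b * Real.exp x.2 + c * Real.exp (-x.1 - x.2)| ≤ ε}
        ≤ volume (Set.Icc (-R) R ×ˢ Set.Icc (-R) R) := measure_mono (fun x hx => hx.1)
    have h2 : volume (Set.Icc (-R) R ×ˢ Set.Icc (-R) R)
        = ENNReal.ofReal (2*R) * ENNReal.ofReal (2*R) := by
      rw [Measure.volume_eq_prod, Measure.prod_prod, Real.volume_Icc,
        show R - -R = 2*R by ring]
    refine h1.trans (h2 ▸ ?_)
    rw [← ENNReal.ofReal_mul (by positivity)]
    apply ENNReal.ofReal_le_ofReal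
    have h3 : 4*R^2 ≤ 4*R^2/δ * ε := by
      rw [div_mul_eq_mul_div, le_div_iff₀ hδ]; nlinarith
    nlinarith [mul_pos (div_pos (by positivity : (0:ℝ) < 64*R) hδ) hε]
  · -- main case: split by which partial derivative is large
    set Su : Set (ℝ × ℝ) := {x : ℝ × ℝ | x ∈ Set.Icc (-R) R ×ˢ Set.Icc (-R) R ∧
        |a * Real.exp x.1 + b * Real.exp x.2 + c * Real.exp (-x.1 - x.2)| ≤ ε ∧
        δ ≤ |a * Real.exp x.1 - c * Real.exp (-x.1 - x.2)|} with hSudef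
    set Sv : Set (ℝ × ℝ) := {x : ℝ × ℝ | x ∈ Set.Icc (-R) R ×ˢ Set.Icc (-R) R ∧
        |a * Real.exp x.1 + b * Real.exp x.2 + c * Real.exp (-x.1 - x.2)| ≤ ε ∧
        δ ≤ |b * Real.exp x.2 - c * Real.exp (-x.1 - x.2)|} with hSvdef
    have hsub : {x : ℝ × ℝ | x ∈ Set.Icc (-R) R ×ˢ Set.Icc (-R) R ∧
        |a * Real.exp x.1 + b * Real.exp x.2 + c * Real.exp (-x.1 - x.2)| ≤ ε} ⊆ Su ∪ Sv := by
      intro x ⟨hxbox, hxg⟩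
      rcases dichotomy a b c R δ hR hδdef hm x hxbox.1.1 hxbox.1.2 hxbox.2.1 hxbox.2.2
        (hxg.trans hcase) with h | h
      · exact Or.inl ⟨hxbox, hxg, h⟩
      · exact Or.inr ⟨hxbox, hxg, h⟩
    have hcontg : Continuous fun x : ℝ × ℝ =>
        |a * Real.exp x.1 + b * Real.exp x.2 + c * Real.exp (-x.1 - x.2)| := by fun_prop
    have hcontgu : Continuous fun x : ℝ × ℝ =>
        |a * Real.exp x.1 - c * Real.exp (-x.1 - x.2)| := by fun_prop
    have hcontgv : Continuous fun x : ℝ × ℝ =>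
        |b * Real.exp x.2 - c * Real.exp (-x.1 - x.2)| := by fun_prop
    have hmeasSu : MeasurableSet Su := by
      have : Su = (Set.Icc (-R) R ×ˢ Set.Icc (-R) R) ∩
          ({x : ℝ × ℝ | |a * Real.exp x.1 + b * Real.exp x.2 + c * Real.exp (-x.1 - x.2)| ≤ ε} ∩
           {x : ℝ × ℝ | δ ≤ |a * Real.exp x.1 - c * Real.exp (-x.1 - x.2)|}) := by
        ext x; simp only [hSudef, Set.mem_inter_iff, Set.mem_setOf_eq]
      rw [this]
      exact (measurableSet_Icc.prod measurableSet_Icc).inter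
        ((measurableSet_le hcontg.measurable measurable_const).inter
         (measurableSet_le measurable_const hcontgu.measurable))
    have hmeasSv : MeasurableSet Sv := by
      have : Sv = (Set.Icc (-R) R ×ˢ Set.Icc (-R) R) ∩
          ({x : ℝ × ℝ | |a * Real.exp x.1 + b * Real.exp x.2 + c * Real.exp (-x.1 - x.2)| ≤ ε} ∩
           {x : ℝ × ℝ | δ ≤ |b * Real.exp x.2 - c * Real.exp (-x.1 - x.2)|}) := by
        ext x; simp only [hSvdef, Set.mem_inter_iff, Set.mem_setOf_eq]
      rw [this]
      exact (measurableSet_Icc.prod measurableSet_Icc).inter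
        ((measurableSet_le hcontg.measurable measurable_const).inter
         (measurableSet_le measurable_const hcontgv.measurable))
    have hSu : volume Su ≤ ENNReal.ofReal (32*R*(ε/δ)) := by
      have h1 : volume Su = ∫⁻ y : ℝ, volume ((fun u : ℝ => (u, y)) ⁻¹' Su) := by
        rw [Measure.volume_eq_prod]; exact Measure.prod_apply_symm hmeasSu
      rw [h1]
      have h2 : ∀ y : ℝ, volume ((fun u : ℝ => (u, y)) ⁻¹' Su) ≤
          Set.indicator (Set.Icc (-R) R) (fun _ => ENNReal.ofReal (16*(ε/δ))) y := by
        intro y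
        by_cases hy : y ∈ Set.Icc (-R) R
        · rw [Set.indicator_of_mem hy]
          have hsub2 : ((fun u : ℝ => (u, y)) ⁻¹' Su) ⊆
              {u : ℝ | |a * Real.exp u + (b * Real.exp y) + (c * Real.exp (-y)) * Real.exp (-u)| ≤ ε ∧
                δ ≤ |a * Real.exp u - (c * Real.exp (-y)) * Real.exp (-u)|} := by
            intro u hu
            simp only [hSudef, Set.mem_preimage, Set.mem_setOf_eq] at hu
            obtain ⟨hbox, hle, hgu⟩ := hu
            have hexp : Real.exp (-u - y) = Real.exp (-y) * Real.exp (-u) := by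
              rw [← Real.exp_add]; ring_nf
            constructor
            · rw [show a * Real.exp u + b * Real.exp y + c * Real.exp (-y) * Real.exp (-u)
                  = a * Real.exp u + b * Real.exp y + c * Real.exp (-u - y) by rw [hexp]; ring]
              exact hle
            · rw [show a * Real.exp u - c * Real.exp (-y) * Real.exp (-u)
                  = a * Real.exp u - c * Real.exp (-u - y) by rw [hexp]; ring]
              exact hgu
          exact le_trans (measure_mono hsub2)
            (oneDim a (b*Real.exp y) (c*Real.exp (-y)) δ ε hδ hε.le)
        · rw [Set.indicator_of_notMem hy]
          have hempty : ((fun u : ℝ => (u, y)) ⁻¹' Su) = ∅ := by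
            ext u
            simp only [hSudef, Set.mem_preimage, Set.mem_setOf_eq, Set.mem_empty_iff_false,
              iff_false, not_and]
            intro hbox
            exact absurd hbox.2 hy
          rw [hempty]; simp
      calc ∫⁻ y : ℝ, volume ((fun u : ℝ => (u, y)) ⁻¹' Su)
          ≤ ∫⁻ y : ℝ, Set.indicator (Set.Icc (-R) R) (fun _ => ENNReal.ofReal (16*(ε/δ))) y :=
            lintegral_mono h2
        _ = ENNReal.ofReal (16*(ε/δ)) * volume (Set.Icc (-R) R) :=
            lintegral_indicator_const measurableSet_Icc _
        _ = ENNReal.ofReal (32*R*(ε/δ)) := by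
            rw [Real.volume_Icc, ← ENNReal.ofReal_mul (by positivity)]
            congr 1; ring
    have hSv : volume Sv ≤ ENNReal.ofReal (32*R*(ε/δ)) := by
      have h1 : volume Sv = ∫⁻ x : ℝ, volume (Prod.mk x ⁻¹' Sv) := by
        rw [Measure.volume_eq_prod]; exact Measure.prod_apply hmeasSv
      rw [h1]
      have h2 : ∀ x : ℝ, volume (Prod.mk x ⁻¹' Sv) ≤
          Set.indicator (Set.Icc (-R) R) (fun _ => ENNReal.ofReal (16*(ε/δ))) x := by
        intro x
        by_cases hx : x ∈ Set.Icc (-R) R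
        · rw [Set.indicator_of_mem hx]
          have hsub2 : (Prod.mk x ⁻¹' Sv) ⊆
              {y : ℝ | |b * Real.exp y + (a * Real.exp x) + (c * Real.exp (-x)) * Real.exp (-y)| ≤ ε ∧
                δ ≤ |b * Real.exp y - (c * Real.exp (-x)) * Real.exp (-y)|} := by
            intro y hy
            simp only [hSvdef, Set.mem_preimage, Set.mem_setOf_eq] at hy
            obtain ⟨hbox, hle, hgv⟩ := hy
            have hexp : Real.exp (-x - y) = Real.exp (-x) * Real.exp (-y) := by
              rw [← Real.exp_add]; ring_nf
            constructor
            · rw [show b * Real.exp y + a * Real.exp x + c * Real.exp (-x) * Real.exp (-y)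
                  = a * Real.exp x + b * Real.exp y + c * Real.exp (-x - y) by rw [hexp]; ring]
              exact hle
            · rw [show b * Real.exp y - c * Real.exp (-x) * Real.exp (-y)
                  = b * Real.exp y - c * Real.exp (-x - y) by rw [hexp]; ring]
              exact hgv
          exact le_trans (measure_mono hsub2)
            (oneDim b (a*Real.exp x) (c*Real.exp (-x)) δ ε hδ hε.le)
        · rw [Set.indicator_of_notMem hx]
          have hempty : (Prod.mk x ⁻¹' Sv) = ∅ := by
            ext y
            simp only [hSvdef, Set.mem_preimage, Set.mem_setOf_eq, Set.mem_empty_iff_false,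
              iff_false, not_and]
            intro hbox
            exact absurd hbox.1 hx
          rw [hempty]; simp
      calc ∫⁻ x : ℝ, volume (Prod.mk x ⁻¹' Sv)
          ≤ ∫⁻ x : ℝ, Set.indicator (Set.Icc (-R) R) (fun _ => ENNReal.ofReal (16*(ε/δ))) x :=
            lintegral_mono h2
        _ = ENNReal.ofReal (16*(ε/δ)) * volume (Set.Icc (-R) R) :=
            lintegral_indicator_const measurableSet_Icc _
        _ = ENNReal.ofReal (32*R*(ε/δ)) := by
            rw [Real.volume_Icc, ← ENNReal.ofReal_mul (by positivity)]
            congr 1; ring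
    calc volume {x : ℝ × ℝ | x ∈ Set.Icc (-R) R ×ˢ Set.Icc (-R) R ∧
        |a * Real.exp x.1 + b * Real.exp x.2 + c * Real.exp (-x.1 - x.2)| ≤ ε}
        ≤ volume (Su ∪ Sv) := measure_mono hsub
      _ ≤ volume Su + volume Sv := measure_union_le _ _
      _ ≤ ENNReal.ofReal (32*R*(ε/δ)) + ENNReal.ofReal (32*R*(ε/δ)) := add_le_add hSu hSv
      _ ≤ ENNReal.ofReal ((64*R/δ + 4*R^2/δ) * ε) := by
          rw [← ENNReal.ofReal_add (by positivity) (by positivity)]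
          apply ENNReal.ofReal_le_ofReal
          have h4 : 0 ≤ 4*R^2/δ * ε := by positivity
          have : 32*R*(ε/δ) + 32*R*(ε/δ) = 64*R/δ * ε := by ring
          rw [this]; linarith [this]

noncomputable def mkT (p q r s : ℝ) : (ℝ×ℝ) →ₗ[ℝ] (ℝ×ℝ) where
  toFun x := (p * x.1 + q * x.2, r * x.1 + s * x.2)
  map_add' x y := by dsimp; refine Prod.ext ?_ ?_ <;> dsimp <;> ring
  map_smul' c x := by dsimp; refine Prod.ext ?_ ?_ <;> dsimp <;> ring

lemma mkT_det (p q r s : ℝ) : LinearMap.det (mkT p q r s) = p * s - q * r := by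
  rw [← LinearMap.det_toMatrix (Module.Basis.finTwoProd ℝ), Matrix.det_fin_two]
  simp [LinearMap.toMatrix_apply, Module.Basis.finTwoProd, mkT]

/-- **Lemma `badLU`**: let `v₁, v₂ ∈ ℝ³` be linearly independent vectors in the plane
`x₁ + x₂ + x₃ = 0` and let `Φ(s₁, s₂) = exp(s₁v₁ + s₂v₂)` (coordinatewise
exponential). Then for every nonzero linear functional `L : ℝ³ → ℝ` there is a
constant `C > 0` such that for all `ε > 0` the Lebesgue measure of
`{s ∈ [0,1]² : |L(Φ(s))| ≤ ε}` is at most `C ε`. -/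
theorem badLU_measure_bound
    (v₁ v₂ : Fin 3 → ℝ)
    (hindep : LinearIndependent ℝ ![v₁, v₂])
    (hv₁ : v₁ 0 + v₁ 1 + v₁ 2 = 0)
    (hv₂ : v₂ 0 + v₂ 1 + v₂ 2 = 0)
    (L : (Fin 3 → ℝ) →ₗ[ℝ] ℝ) (hL : L ≠ 0) :
    ∃ C : ℝ, 0 < C ∧ ∀ ε : ℝ, 0 < ε →
      volume {s : ℝ × ℝ | s ∈ (Set.Icc (0:ℝ) 1) ×ˢ (Set.Icc (0:ℝ) 1) ∧
        |L (fun i => Real.exp (s.1 * v₁ i + s.2 * v₂ i))| ≤ ε} ≤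
      ENNReal.ofReal (C * ε) := by
  set a := L (Pi.single 0 1) with ha
  set b := L (Pi.single 1 1) with hb
  set c := L (Pi.single (2 : Fin 3) 1) with hc
  -- evaluation of L
  have hL_eval : ∀ x : Fin 3 → ℝ, L x = x 0 * a + x 1 * b + x 2 * c := by
    intro x
    have hx : x = x 0 • (Pi.single 0 1 : Fin 3 → ℝ) + x 1 • (Pi.single 1 1 : Fin 3 → ℝ)
        + x 2 • (Pi.single (2 : Fin 3) 1 : Fin 3 → ℝ) := by
      funext i
      fin_cases i <;> simp [Pi.single_apply]
    conv_lhs => rw [hx]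
    rw [map_add, map_add, LinearMap.map_smul, LinearMap.map_smul, LinearMap.map_smul,
      smul_eq_mul, smul_eq_mul, smul_eq_mul, ← ha, ← hb, ← hc]
  -- nontriviality
  have hm : 0 < max |a| (max |b| |c|) := by
    by_contra hcon
    push_neg at hcon
    have h1 : |a| ≤ 0 := le_trans (le_max_left _ _) hcon
    have h2 : |b| ≤ 0 := le_trans (le_trans (le_max_left _ _) (le_max_right _ _)) hcon
    have h3 : |c| ≤ 0 := le_trans (le_trans (le_max_right _ _) (le_max_right _ _)) hcon
    have ha0 : a = 0 := abs_eq_zero.1 (le_antisymm h1 (abs_nonneg _))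
    have hb0 : b = 0 := abs_eq_zero.1 (le_antisymm h2 (abs_nonneg _))
    have hc0 : c = 0 := abs_eq_zero.1 (le_antisymm h3 (abs_nonneg _))
    apply hL
    apply LinearMap.ext
    intro x
    rw [hL_eval x, ha0, hb0, hc0]
    simp
  -- key determinant nonzero
  have hkey : ∀ α β : ℝ, α * v₁ 0 + β * v₂ 0 = 0 → α * v₁ 1 + β * v₂ 1 = 0 → α = 0 ∧ β = 0 := by
    intro α β h0 h1
    apply (LinearIndependent.pair_iff.1 hindep) α β
    funext i
    have hv12 : v₁ 2 = -v₁ 0 - v₁ 1 := by linarith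
    have hv22 : v₂ 2 = -v₂ 0 - v₂ 1 := by linarith
    fin_cases i
    · show α * v₁ 0 + β * v₂ 0 = 0
      exact h0
    · show α * v₁ 1 + β * v₂ 1 = 0
      exact h1
    · show α * v₁ 2 + β * v₂ 2 = 0
      rw [hv12, hv22]; nlinarith [h0, h1]
  have hd : v₁ 0 * v₂ 1 - v₂ 0 * v₁ 1 ≠ 0 := by
    intro hd0
    obtain ⟨h1, h2⟩ := hkey (v₂ 0) (-(v₁ 0)) (by ring) (by nlinarith [hd0])
    have hv10 : v₁ 0 = 0 := by linarith
    obtain ⟨h3, h4⟩ := hkey (v₂ 1) (-(v₁ 1)) (by rw [h1, hv10]; ring) (by ring)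
    have hv11 : v₁ 1 = 0 := by linarith
    obtain ⟨h5, _⟩ := hkey 1 0 (by rw [hv10]; ring) (by rw [hv11]; ring)
    exact one_ne_zero h5
  -- the linear change of variables
  set T := mkT (v₁ 0) (v₂ 0) (v₁ 1) (v₂ 1) with hT
  have hdetT : LinearMap.det T = v₁ 0 * v₂ 1 - v₂ 0 * v₁ 1 := mkT_det _ _ _ _
  have hdet : LinearMap.det T ≠ 0 := by rw [hdetT]; exact hd
  set R : ℝ := |v₁ 0| + |v₂ 0| + |v₁ 1| + |v₂ 1| + 1 with hR
  have hRpos : 0 < R := by positivity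
  obtain ⟨C₂, hC₂, hbound⟩ := twoDim a b c R hRpos hm
  refine ⟨|(LinearMap.det T)⁻¹| * C₂, by positivity, ?_⟩
  intro ε hε
  have hsub : {s : ℝ × ℝ | s ∈ (Set.Icc (0:ℝ) 1) ×ˢ (Set.Icc (0:ℝ) 1) ∧
      |L (fun i => Real.exp (s.1 * v₁ i + s.2 * v₂ i))| ≤ ε} ⊆
      T ⁻¹' {x : ℝ × ℝ | x ∈ Set.Icc (-R) R ×ˢ Set.Icc (-R) R ∧
        |a * Real.exp x.1 + b * Real.exp x.2 + c * Real.exp (-x.1 - x.2)| ≤ ε} := by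
    intro s hs
    obtain ⟨hsbox, hsval⟩ := hs
    obtain ⟨⟨hs10, hs11⟩, ⟨hs20, hs21⟩⟩ := hsbox
    have hTs : T s = (v₁ 0 * s.1 + v₂ 0 * s.2, v₁ 1 * s.1 + v₂ 1 * s.2) := rfl
    have habs1 : |v₁ 0 * s.1 + v₂ 0 * s.2| ≤ R := by
      have e1 : |v₁ 0 * s.1| ≤ |v₁ 0| := by
        rw [abs_mul]
        nlinarith [abs_nonneg (v₁ 0), abs_nonneg s.1, abs_le.2 ⟨by linarith, hs11⟩]
      have e2 : |v₂ 0 * s.2| ≤ |v₂ 0| := by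
        rw [abs_mul]
        nlinarith [abs_nonneg (v₂ 0), abs_nonneg s.2, abs_le.2 ⟨by linarith, hs21⟩]
      calc |v₁ 0 * s.1 + v₂ 0 * s.2| ≤ |v₁ 0 * s.1| + |v₂ 0 * s.2| := abs_add_le _ _
        _ ≤ R := by rw [hR]; have := abs_nonneg (v₁ 1); have := abs_nonneg (v₂ 1); linarith
    have habs2 : |v₁ 1 * s.1 + v₂ 1 * s.2| ≤ R := by
      have e1 : |v₁ 1 * s.1| ≤ |v₁ 1| := by
        rw [abs_mul]
        nlinarith [abs_nonneg (v₁ 1), abs_nonneg s.1, abs_le.2 ⟨by linarith, hs11⟩]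
      have e2 : |v₂ 1 * s.2| ≤ |v₂ 1| := by
        rw [abs_mul]
        nlinarith [abs_nonneg (v₂ 1), abs_nonneg s.2, abs_le.2 ⟨by linarith, hs21⟩]
      calc |v₁ 1 * s.1 + v₂ 1 * s.2| ≤ |v₁ 1 * s.1| + |v₂ 1 * s.2| := abs_add_le _ _
        _ ≤ R := by rw [hR]; have := abs_nonneg (v₁ 0); have := abs_nonneg (v₂ 0); linarith
    constructor
    · rw [hTs]
      exact ⟨Set.mem_Icc.2 (abs_le.1 habs1), Set.mem_Icc.2 (abs_le.1 habs2)⟩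
    · rw [hTs]
      have hval : L (fun i => Real.exp (s.1 * v₁ i + s.2 * v₂ i)) =
          a * Real.exp (v₁ 0 * s.1 + v₂ 0 * s.2) + b * Real.exp (v₁ 1 * s.1 + v₂ 1 * s.2)
          + c * Real.exp (-(v₁ 0 * s.1 + v₂ 0 * s.2) - (v₁ 1 * s.1 + v₂ 1 * s.2)) := by
        rw [hL_eval]
        have hv12 : v₁ 2 = -v₁ 0 - v₁ 1 := by linarith
        have hv22 : v₂ 2 = -v₂ 0 - v₂ 1 := by linarith
        have harg0 : s.1 * v₁ 0 + s.2 * v₂ 0 = v₁ 0 * s.1 + v₂ 0 * s.2 := by ring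
        have harg1 : s.1 * v₁ 1 + s.2 * v₂ 1 = v₁ 1 * s.1 + v₂ 1 * s.2 := by ring
        have harg2 : s.1 * v₁ 2 + s.2 * v₂ 2
            = -(v₁ 0 * s.1 + v₂ 0 * s.2) - (v₁ 1 * s.1 + v₂ 1 * s.2) := by
          rw [hv12, hv22]; ring
        rw [harg0, harg1, harg2]; ring
      rw [← hval]
      exact hsval
  calc volume {s : ℝ × ℝ | s ∈ (Set.Icc (0:ℝ) 1) ×ˢ (Set.Icc (0:ℝ) 1) ∧
        |L (fun i => Real.exp (s.1 * v₁ i + s.2 * v₂ i))| ≤ ε}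
      ≤ volume (T ⁻¹' {x : ℝ × ℝ | x ∈ Set.Icc (-R) R ×ˢ Set.Icc (-R) R ∧
        |a * Real.exp x.1 + b * Real.exp x.2 + c * Real.exp (-x.1 - x.2)| ≤ ε}) :=
        measure_mono hsub
    _ = ENNReal.ofReal |(LinearMap.det T)⁻¹| * volume {x : ℝ × ℝ |
          x ∈ Set.Icc (-R) R ×ˢ Set.Icc (-R) R ∧
          |a * Real.exp x.1 + b * Real.exp x.2 + c * Real.exp (-x.1 - x.2)| ≤ ε} :=
        Measure.addHaar_preimage_linearMap volume hdet _
    _ ≤ ENNReal.ofReal |(LinearMap.det T)⁻¹| * ENNReal.ofReal (C₂ * ε) :=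
        mul_le_mul_right (hbound ε hε) _
    _ = ENNReal.ofReal (|(LinearMap.det T)⁻¹| * C₂ * ε) := by
        rw [← ENNReal.ofReal_mul (abs_nonneg _)]; congr 1; ring
end

section
/- Let (q, r₁, r₂) and (q′, r₁′, r₂′) be triples of integers with q, q′ ≥ 1, gcd(q, r₁, r₂) = gcd(q′, r₁′, r₂′) = 1, and (r₁/q, r₂/q) ≠ (r₁′/q′, r₂′/q′) as points of ℝ². Suppose (c, d₁, d₂) ∈ ℤ³ with gcd(c, d₁, d₂) = 1 and (d₁, d₂) ≠ (0, 0) satisfies c·q + d₁·r₁ + d₂·r₂ = 0 and c·q′ + d₁·r₁′ + d₂·r₂′ = 0. Then the vector (r₁r₂′ − r₁′r₂, r₂q′ − r₂′q, r₁′q − r₁q′) equals k·(c, d₁, d₂) for some nonzero integer k, and consequently the Euclidean distance between (r₁/q, r₂/q) and (r₁′/q′, r₂′/q′) is at least √(d₁² + d₂²)/(q·q′). -/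
/-- **Spacing of Farey points on a rational line** (from Lemma `setincusp`): if two
distinct two-dimensional Farey fractions `(r₁/q, r₂/q)` and `(r₁′/q′, r₂′/q′)` both
lie on the line `c + d₁x₁ + d₂x₂ = 0` with `gcd(c, d₁, d₂) = 1` and `(d₁, d₂) ≠ 0`,
then `(r₁r₂′ - r₁′r₂, r₂q′ - r₂′q, r₁′q - r₁q′) = k(c, d₁, d₂)` for some nonzero
integer `k`, and hence the distance between the two points is at least
`√(d₁² + d₂²)/(qq′)`. -/
theorem farey_points_on_line_spacing
    (q r₁ r₂ q' r₁' r₂' c d₁ d₂ : ℤ)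
    (hq : 1 ≤ q) (hq' : 1 ≤ q')
    (hcop : Int.gcd ((Int.gcd q r₁ : ℕ) : ℤ) r₂ = 1)
    (hcop' : Int.gcd ((Int.gcd q' r₁' : ℕ) : ℤ) r₂' = 1)
    (hne : ¬ ((r₁ : ℝ) / q = (r₁' : ℝ) / q' ∧ (r₂ : ℝ) / q = (r₂' : ℝ) / q'))
    (hcopd : Int.gcd ((Int.gcd c d₁ : ℕ) : ℤ) d₂ = 1)
    (hd : ¬ (d₁ = 0 ∧ d₂ = 0))
    (hline : c * q + d₁ * r₁ + d₂ * r₂ = 0)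
    (hline' : c * q' + d₁ * r₁' + d₂ * r₂' = 0) :
    (∃ k : ℤ, k ≠ 0 ∧
      r₁ * r₂' - r₁' * r₂ = k * c ∧
      r₂ * q' - r₂' * q = k * d₁ ∧
      r₁' * q - r₁ * q' = k * d₂) ∧
    Real.sqrt (((d₁ : ℝ) ^ 2 + (d₂ : ℝ) ^ 2)) / ((q : ℝ) * (q' : ℝ)) ≤
      Real.sqrt (((r₁ : ℝ) / q - (r₁' : ℝ) / q') ^ 2 + ((r₂ : ℝ) / q - (r₂' : ℝ) / q') ^ 2) := by
  -- Bezout for three integers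
  obtain ⟨a, b, e, hbez⟩ : ∃ a b e : ℤ, c * a + d₁ * b + d₂ * e = 1 := by
    have h1 : ((Int.gcd c d₁ : ℕ) : ℤ) = c * Int.gcdA c d₁ + d₁ * Int.gcdB c d₁ :=
      Int.gcd_eq_gcd_ab c d₁
    have h2 : ((Int.gcd ((Int.gcd c d₁ : ℕ) : ℤ) d₂ : ℕ) : ℤ) =
        ((Int.gcd c d₁ : ℕ) : ℤ) * Int.gcdA ((Int.gcd c d₁ : ℕ) : ℤ) d₂
          + d₂ * Int.gcdB ((Int.gcd c d₁ : ℕ) : ℤ) d₂ :=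
      Int.gcd_eq_gcd_ab ((Int.gcd c d₁ : ℕ) : ℤ) d₂
    rw [hcopd] at h2
    push_cast at h2
    refine ⟨Int.gcdA c d₁ * Int.gcdA ((Int.gcd c d₁ : ℕ) : ℤ) d₂,
      Int.gcdB c d₁ * Int.gcdA ((Int.gcd c d₁ : ℕ) : ℤ) d₂,
      Int.gcdB ((Int.gcd c d₁ : ℕ) : ℤ) d₂, ?_⟩
    linear_combination -h2 - Int.gcdA ((Int.gcd c d₁ : ℕ) : ℤ) d₂ * h1
  have m1 : (r₁ * r₂' - r₁' * r₂) * d₁ = (r₂ * q' - r₂' * q) * c := by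
    linear_combination r₂' * hline - r₂ * hline'
  have m2 : (r₁ * r₂' - r₁' * r₂) * d₂ = (r₁' * q - r₁ * q') * c := by
    linear_combination -r₁' * hline + r₁ * hline'
  have m3 : (r₂ * q' - r₂' * q) * d₂ = (r₁' * q - r₁ * q') * d₁ := by
    linear_combination q' * hline - q * hline'
  set k : ℤ := a * (r₁ * r₂' - r₁' * r₂) + b * (r₂ * q' - r₂' * q) + e * (r₁' * q - r₁ * q')
    with hk
  have hk1 : r₁ * r₂' - r₁' * r₂ = k * c := by
    rw [hk]; linear_combination -((r₁ * r₂' - r₁' * r₂) * hbez) + b * m1 + e * m2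
  have hk2 : r₂ * q' - r₂' * q = k * d₁ := by
    rw [hk]; linear_combination -((r₂ * q' - r₂' * q) * hbez) - a * m1 + e * m3
  have hk3 : r₁' * q - r₁ * q' = k * d₂ := by
    rw [hk]; linear_combination -((r₁' * q - r₁ * q') * hbez) - a * m2 - b * m3
  have hq0 : (0:ℝ) < (q:ℝ) := by exact_mod_cast (by omega : (0:ℤ) < q)
  have hq0' : (0:ℝ) < (q':ℝ) := by exact_mod_cast (by omega : (0:ℤ) < q')
  have hkne : k ≠ 0 := by
    intro h0
    rw [h0, zero_mul] at hk2 hk3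
    apply hne
    constructor
    · rw [div_eq_div_iff hq0.ne' hq0'.ne']
      have : r₁ * q' = r₁' * q := by linarith
      exact_mod_cast this
    · rw [div_eq_div_iff hq0.ne' hq0'.ne']
      have : r₂ * q' = r₂' * q := by linarith
      exact_mod_cast this
  refine ⟨⟨k, hkne, hk1, hk2, hk3⟩, ?_⟩
  set Δ₁ : ℝ := (r₁ : ℝ) / q - (r₁' : ℝ) / q' with hΔ₁
  set Δ₂ : ℝ := (r₂ : ℝ) / q - (r₂' : ℝ) / q' with hΔ₂
  have c3 : ((r₁':ℝ) * q - (r₁:ℝ) * q') = (k:ℝ) * d₂ := by exact_mod_cast hk3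
  have c2 : ((r₂:ℝ) * q' - (r₂':ℝ) * q) = (k:ℝ) * d₁ := by exact_mod_cast hk2
  have e1 : (q:ℝ) * q' * Δ₁ = -((k:ℝ) * d₂) := by
    rw [hΔ₁]; field_simp; linarith
  have e2 : (q:ℝ) * q' * Δ₂ = (k:ℝ) * d₁ := by
    rw [hΔ₂]; field_simp; linarith
  have hk1le : (1:ℝ) ≤ (k:ℝ)^2 := by
    have : (1:ℤ) ≤ k^2 := by rcases lt_or_gt_of_ne hkne with h | h <;> nlinarith
    exact_mod_cast this
  have key : (d₁:ℝ)^2 + (d₂:ℝ)^2 ≤ ((q:ℝ) * q')^2 * (Δ₁^2 + Δ₂^2) := by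
    have a1 : ((q:ℝ) * q' * Δ₁)^2 = (-((k:ℝ) * d₂))^2 := by rw [e1]
    have a2 : ((q:ℝ) * q' * Δ₂)^2 = ((k:ℝ) * d₁)^2 := by rw [e2]
    nlinarith [sq_nonneg (d₁:ℝ), sq_nonneg (d₂:ℝ)]
  rw [div_le_iff₀ (by positivity)]
  calc Real.sqrt ((d₁:ℝ)^2 + (d₂:ℝ)^2)
      ≤ Real.sqrt (((q:ℝ) * q')^2 * (Δ₁^2 + Δ₂^2)) := Real.sqrt_le_sqrt key
    _ = Real.sqrt (Δ₁^2 + Δ₂^2) * ((q:ℝ) * q') := by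
        rw [Real.sqrt_mul (sq_nonneg _), Real.sqrt_sq (by positivity)]; ring
end

section
/- There exists a constant C > 0 such that for all real numbers Q ≥ 1 and B ≥ 1, the number of triples (q, r₁, r₂) ∈ ℤ³ with 1 ≤ q ≤ Q, 0 ≤ r₁ < q, 0 ≤ r₂ < q, gcd(q, r₁, r₂) = 1, for which there exists (c, d₁, d₂) ∈ ℤ³ with gcd(c, d₁, d₂) = 1, 0 < d₁² + d₂² ≤ B, and c·q + d₁·r₁ + d₂·r₂ = 0, is at most C·B·Q². -/
open Finset

lemma int_ediv_le_real_div (a w : ℤ) (hw : 0 < w) : ((a / w : ℤ) : ℝ) ≤ (a:ℝ)/(w:ℝ) := by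
  rw [le_div_iff₀ (by exact_mod_cast hw)]
  exact_mod_cast Int.ediv_mul_le a hw.ne'

/-- count of an AP in `[0,q)` -/
lemma ap_count (a w q : ℤ) (hw : 0 < w) (hq : 0 ≤ q) :
    (((Finset.Ico (0:ℤ) q).filter (fun r => w ∣ (r - a))).card : ℝ) ≤ (q:ℝ)/(w:ℝ) + 1 := by
  rcases eq_or_lt_of_le hq with h0 | h0
  · rw [← h0]; simp
  have hwa : w ∣ a - a % w := Int.dvd_self_sub_of_emod_eq rfl
  have hmod0 : 0 ≤ a % w := Int.emod_nonneg a hw.ne'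
  have hmodlt : a % w < w := Int.emod_lt_of_pos a hw
  have hcard : ((Finset.Ico (0:ℤ) q).filter (fun r => w ∣ (r - a))).card ≤
      (Finset.Icc (0:ℤ) ((q-1)/w)).card := by
    apply Finset.card_le_card_of_injOn (fun r => (r - a % w) / w)
    · intro r hr
      simp only [Finset.mem_coe, Finset.mem_filter, Finset.mem_Ico] at hr
      obtain ⟨⟨hr0, hrq⟩, hdvd⟩ := hr
      have hdvd' : w ∣ r - a % w := by
        have := dvd_add hdvd hwa
        simpa [sub_add_sub_cancel] using this
      obtain ⟨k, hk⟩ := hdvd'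
      have hk' : (r - a % w) / w = k := by rw [hk]; exact Int.mul_ediv_cancel_left _ hw.ne'
      simp only [Finset.mem_coe, Finset.mem_Icc, hk']
      constructor
      · nlinarith [hk]
      · rw [Int.le_ediv_iff_mul_le hw]; nlinarith [hk]
    · intro r hr r' hr' h
      simp only [Finset.mem_coe, Finset.mem_filter, Finset.mem_Ico] at hr hr'
      have d1 : w ∣ r - a % w := by
        have := dvd_add hr.2 hwa; simpa [sub_add_sub_cancel] using this
      have d2 : w ∣ r' - a % w := by
        have := dvd_add hr'.2 hwa; simpa [sub_add_sub_cancel] using this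
      have e1 := Int.ediv_mul_cancel d1
      have e2 := Int.ediv_mul_cancel d2
      simp only at h
      rw [h] at e1
      linarith [e1, e2]
  have hdivnn : (0:ℤ) ≤ (q-1)/w := Int.ediv_nonneg (by omega) hw.le
  have hw' : (0:ℝ) < w := by exact_mod_cast hw
  have h2 : ((Finset.Icc (0:ℤ) ((q-1)/w)).card : ℝ) ≤ (q:ℝ)/(w:ℝ) + 1 := by
    rw [Int.card_Icc]
    have key : ((((q-1)/w + 1 - 0).toNat : ℕ) : ℝ) = (((q-1)/w : ℤ) : ℝ) + 1 := by
      have : (((q-1)/w + 1 - 0).toNat : ℤ) = (q-1)/w + 1 := by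
        rw [Int.toNat_of_nonneg (by omega)]; ring
      exact_mod_cast congrArg (fun x : ℤ => (x : ℝ)) this
    rw [key]
    have h3 := int_ediv_le_real_div (q-1) w hw
    have h4 : ((q:ℝ)-1)/w ≤ (q:ℝ)/w := by
      gcongr <;> linarith
    push_cast at h3
    linarith
  calc _ ≤ ((Finset.Icc (0:ℤ) ((q-1)/w)).card : ℝ) := by exact_mod_cast hcard
    _ ≤ _ := h2

/-- count of solutions of `d₂ ∣ d₁ r + m` in `[0,q)` -/
lemma cong_count (d₁ d₂ m q : ℤ) (hd₂ : d₂ ≠ 0) (hq : 0 ≤ q) :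
    (((Finset.Ico (0:ℤ) q).filter (fun r => d₂ ∣ (d₁ * r + m))).card : ℝ) ≤
      (q:ℝ) * (Int.gcd d₁ d₂ : ℝ) / |(d₂:ℝ)| + 1 := by
  set g : ℕ := Int.gcd d₁ d₂ with hg
  have hg0 : 0 < g := Int.gcd_pos_of_ne_zero_right d₁ hd₂
  have hgd2 : (g:ℤ) ∣ d₂ := Int.gcd_dvd_right _ _
  have hgd1 : (g:ℤ) ∣ d₁ := Int.gcd_dvd_left _ _
  have hqg : (0:ℝ) ≤ (q:ℝ) * (g:ℝ) / |(d₂:ℝ)| := by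
    apply div_nonneg
    · positivity
    · positivity
  rcases Finset.eq_empty_or_nonempty ((Finset.Ico (0:ℤ) q).filter (fun r => d₂ ∣ (d₁ * r + m)))
    with he | ⟨r₀, hr₀⟩
  · rw [he]; simpa using by linarith
  set w : ℤ := |d₂| / g with hw
  have hgabs : (g:ℤ) ∣ |d₂| := (dvd_abs _ _).mpr hgd2
  have hwmul : w * g = |d₂| := Int.ediv_mul_cancel hgabs
  have hd2abs : (0:ℤ) < |d₂| := abs_pos.mpr hd₂
  have hw0 : 0 < w := by
    rcases lt_trichotomy w 0 with h|h|h
    · nlinarith [hwmul]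
    · rw [h] at hwmul; simp at hwmul; omega
    · exact h
  simp only [Finset.mem_filter, Finset.mem_Ico] at hr₀
  have hsub : ((Finset.Ico (0:ℤ) q).filter (fun r => d₂ ∣ (d₁ * r + m))) ⊆
      ((Finset.Ico (0:ℤ) q).filter (fun r => w ∣ (r - r₀))) := by
    intro r hr
    simp only [Finset.mem_filter, Finset.mem_Ico] at hr ⊢
    refine ⟨hr.1, ?_⟩
    have hdiff : d₂ ∣ d₁ * (r - r₀) := by
      have := dvd_sub hr.2 hr₀.2
      simpa [mul_sub] using this
    -- reduce by g
    obtain ⟨k, hk⟩ := hdiff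
    have hd1g := Int.ediv_mul_cancel hgd1
    have hd2g := Int.ediv_mul_cancel hgd2
    have hdiff' : (d₂/g) ∣ (d₁/g) * (r - r₀) := by
      refine ⟨k, ?_⟩
      have : (d₁/g) * (r - r₀) * (g:ℤ) = (d₂/g) * k * g := by
        rw [mul_right_comm, hd1g, mul_right_comm, hd2g]; linarith [hk]
      have hgne : (g:ℤ) ≠ 0 := by exact_mod_cast hg0.ne'
      exact mul_right_cancel₀ hgne this
    have hcop : Int.gcd (d₁/g) (d₂/g) = 1 := Int.gcd_div_gcd_div_gcd hg0
    have hcop' : IsCoprime (d₂/g) (d₁/g) := by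
      rw [Int.isCoprime_iff_gcd_eq_one, Int.gcd_comm]; exact hcop
    have : (d₂/g) ∣ (r - r₀) := hcop'.dvd_of_dvd_mul_left hdiff'
    have habs : w = |d₂/(g:ℤ)| := by
      have h1 : |d₂/(g:ℤ)| * g = |d₂| := by
        conv_rhs => rw [← hd2g]
        rw [abs_mul, Int.abs_natCast]
      have hgne : (g:ℤ) ≠ 0 := by exact_mod_cast hg0.ne'
      exact mul_right_cancel₀ hgne (by rw [hwmul, h1])
    rw [habs]
    exact (abs_dvd _ _).mpr this
  have hcard := Finset.card_le_card hsub
  have hap := ap_count r₀ w q hw0 hq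
  have hwg : (w:ℝ) * (g:ℝ) = |(d₂:ℝ)| := by
    have : ((w * g : ℤ) : ℝ) = ((|d₂| : ℤ) : ℝ) := by exact_mod_cast congrArg (fun x:ℤ => (x:ℝ)) hwmul
    push_cast at this
    simpa using this
  have hwr : (0:ℝ) < w := by exact_mod_cast hw0
  have hgr : (0:ℝ) < g := by exact_mod_cast hg0
  have hdiv : (q:ℝ)/(w:ℝ) = (q:ℝ) * (g:ℝ) / |(d₂:ℝ)| := by
    rw [← hwg]; field_simp
  calc (((Finset.Ico (0:ℤ) q).filter (fun r => d₂ ∣ (d₁ * r + m))).card : ℝ)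
      ≤ (((Finset.Ico (0:ℤ) q).filter (fun r => w ∣ (r - r₀))).card : ℝ) := by exact_mod_cast hcard
    _ ≤ (q:ℝ)/(w:ℝ) + 1 := hap
    _ = (q:ℝ) * (g:ℝ) / |(d₂:ℝ)| + 1 := by rw [hdiv]

noncomputable def lineF (n c d₁ d₂ : ℤ) : Finset (ℤ×ℤ×ℤ) :=
  ((Finset.Icc 1 n) ×ˢ (Finset.Icc 0 (n-1)) ×ˢ (Finset.Icc 0 (n-1))).filter
    (fun t => c*t.1 + d₁*t.2.1 + d₂*t.2.2 = 0 ∧ t.2.1 < t.1 ∧ t.2.2 < t.1)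

lemma lineF_card (n c d₁ d₂ : ℤ) (hn : 1 ≤ n) (hd₂ : d₂ ≠ 0)
    (hcg : Int.gcd c (Int.gcd d₁ d₂ : ℤ) = 1) :
    ((lineF n c d₁ d₂).card : ℝ) ≤ (n:ℝ)^2 / |(d₂:ℝ)| + (n:ℝ) / (Int.gcd d₁ d₂ : ℝ) := by
  set g : ℕ := Int.gcd d₁ d₂ with hgdef
  have hg0 : 0 < g := Int.gcd_pos_of_ne_zero_right d₁ hd₂
  have hgd1 : (g:ℤ) ∣ d₁ := Int.gcd_dvd_left _ _
  have hgd2 : (g:ℤ) ∣ d₂ := Int.gcd_dvd_right _ _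
  have hgr : (0:ℝ) < g := by exact_mod_cast hg0
  have hd2r : (0:ℝ) < |(d₂:ℝ)| := by
    rw [abs_pos]; exact_mod_cast hd₂
  set Qs : Finset ℤ := (Finset.Icc 1 n).filter (fun q => (g:ℤ) ∣ q) with hQs
  have hmaps : ∀ t ∈ lineF n c d₁ d₂, t.1 ∈ Qs := by
    intro t ht
    simp only [lineF, Finset.mem_filter, Finset.mem_product, Finset.mem_Icc] at ht
    obtain ⟨⟨hq, hr₁, hr₂⟩, heq, hlt₁, hlt₂⟩ := ht
    simp only [hQs, Finset.mem_filter, Finset.mem_Icc]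
    refine ⟨hq, ?_⟩
    have hdvd : (g:ℤ) ∣ c * t.1 := by
      have h1 : (g:ℤ) ∣ d₁ * t.2.1 + d₂ * t.2.2 :=
        dvd_add (hgd1.mul_right _) (hgd2.mul_right _)
      have : c * t.1 = -(d₁ * t.2.1 + d₂ * t.2.2) := by linarith
      rw [this]; exact h1.neg_right
    have hcop : IsCoprime ((g:ℤ)) c := by
      rw [Int.isCoprime_iff_gcd_eq_one, Int.gcd_comm]; exact hcg
    exact hcop.dvd_of_dvd_mul_left hdvd
  have hfib := Finset.card_eq_sum_card_fiberwise hmaps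
  -- fiber bound
  have hfibbound : ∀ q ∈ Qs, (((lineF n c d₁ d₂).filter (fun t => t.1 = q)).card : ℝ) ≤
      (n:ℝ) * (g:ℝ) / |(d₂:ℝ)| + 1 := by
    intro q hq
    simp only [hQs, Finset.mem_filter, Finset.mem_Icc] at hq
    obtain ⟨⟨hq1, hqn⟩, hgq⟩ := hq
    have hsub : (((lineF n c d₁ d₂).filter (fun t => t.1 = q)).card : ℝ) ≤
        (((Finset.Ico (0:ℤ) q).filter (fun r => d₂ ∣ (d₁ * r + c * q))).card : ℝ) := by
      have := Finset.card_le_card_of_injOn (fun t : ℤ×ℤ×ℤ => t.2.1) ?_ ?_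
        (s := (lineF n c d₁ d₂).filter (fun t => t.1 = q))
        (t := (Finset.Ico (0:ℤ) q).filter (fun r => d₂ ∣ (d₁ * r + c * q)))
      · exact_mod_cast this
      · intro t ht
        simp only [Finset.mem_coe, lineF, Finset.mem_filter, Finset.mem_product, Finset.mem_Icc] at ht
        obtain ⟨⟨⟨hqI, hr₁, hr₂⟩, heq, hlt₁, hlt₂⟩, hteq⟩ := ht
        simp only [Finset.mem_coe, Finset.mem_filter, Finset.mem_Ico]
        refine ⟨⟨hr₁.1, by omega⟩, ?_⟩
        refine ⟨-t.2.2, ?_⟩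
        rw [← hteq]; linarith
      · intro t ht t' ht' h
        simp only [Finset.mem_coe, lineF, Finset.mem_filter, Finset.mem_product,
          Finset.mem_Icc] at ht ht'
        obtain ⟨⟨⟨hqI, hr₁, hr₂⟩, heq, hlt₁, hlt₂⟩, hteq⟩ := ht
        obtain ⟨⟨⟨hqI', hr₁', hr₂'⟩, heq', hlt₁', hlt₂'⟩, hteq'⟩ := ht'
        simp only at h
        have h2 : t.2.2 = t'.2.2 := by
          have : d₂ * t.2.2 = d₂ * t'.2.2 := by rw [hteq] at heq; rw [hteq'] at heq'; rw [h] at heq; linarith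
          exact mul_left_cancel₀ hd₂ this
        have : t.2 = t'.2 := Prod.ext h h2
        have : t = t' := Prod.ext (by rw [hteq, hteq']) this
        exact this
    have hcc := cong_count d₁ d₂ (c*q) q hd₂ (by omega)
    have hmono : (q:ℝ) * (g:ℝ) / |(d₂:ℝ)| ≤ (n:ℝ) * (g:ℝ) / |(d₂:ℝ)| := by
      gcongr
      all_goals exact_mod_cast hqn
    rw [← hgdef] at hcc
    linarith
  -- count of multiples of g
  have hQscard : ((Qs.card : ℝ)) ≤ (n:ℝ) / (g:ℝ) := by
    have hcard : Qs.card ≤ (Finset.Icc (1:ℤ) (n / g)).card := by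
      apply Finset.card_le_card_of_injOn (fun q => q / (g:ℤ))
      · intro q hq
        simp only [hQs, Finset.mem_coe, Finset.mem_filter, Finset.mem_Icc] at hq ⊢
        obtain ⟨⟨hq1, hqn⟩, hgq⟩ := hq
        constructor
        · rw [Int.le_ediv_iff_mul_le (by exact_mod_cast hg0)]
          have := Int.le_of_dvd (by omega) hgq
          omega
        · exact Int.ediv_le_ediv (by exact_mod_cast hg0) hqn
      · intro q hq q' hq' h
        simp only [hQs, Finset.mem_coe, Finset.mem_filter, Finset.mem_Icc] at hq hq'
        have e1 := Int.ediv_mul_cancel hq.2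
        have e2 := Int.ediv_mul_cancel hq'.2
        simp only at h
        rw [h] at e1
        linarith
    have h2 : ((Finset.Icc (1:ℤ) (n / g)).card : ℝ) ≤ (n:ℝ) / (g:ℝ) := by
      rw [Int.card_Icc]
      have hnng : (0:ℤ) ≤ n / g := Int.ediv_nonneg (by omega) (by positivity)
      have key : (((n/(g:ℤ) + 1 - 1).toNat : ℕ) : ℝ) = ((n/(g:ℤ) : ℤ) : ℝ) := by
        have : ((n/(g:ℤ) + 1 - 1).toNat : ℤ) = n/(g:ℤ) := by
          rw [Int.toNat_of_nonneg (by omega)]; ring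
        exact_mod_cast congrArg (fun x : ℤ => (x:ℝ)) this
      rw [key]
      have := int_ediv_le_real_div n (g:ℤ) (by exact_mod_cast hg0)
      simpa using this
    calc ((Qs.card : ℝ)) ≤ ((Finset.Icc (1:ℤ) (n / g)).card : ℝ) := by exact_mod_cast hcard
      _ ≤ _ := h2
  -- combine
  have hsum : ((lineF n c d₁ d₂).card : ℝ) ≤ (Qs.card : ℝ) * ((n:ℝ) * (g:ℝ) / |(d₂:ℝ)| + 1) := by
    rw [hfib]
    push_cast
    calc (∑ q ∈ Qs, (((lineF n c d₁ d₂).filter (fun t => t.1 = q)).card : ℝ))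
        ≤ ∑ q ∈ Qs, ((n:ℝ) * (g:ℝ) / |(d₂:ℝ)| + 1) := Finset.sum_le_sum hfibbound
      _ = (Qs.card : ℝ) * ((n:ℝ) * (g:ℝ) / |(d₂:ℝ)| + 1) := by
          rw [Finset.sum_const, nsmul_eq_mul]
  have hterm : (0:ℝ) ≤ (n:ℝ) * (g:ℝ) / |(d₂:ℝ)| + 1 := by positivity
  have final : (Qs.card : ℝ) * ((n:ℝ) * (g:ℝ) / |(d₂:ℝ)| + 1) ≤
      ((n:ℝ)/(g:ℝ)) * ((n:ℝ) * (g:ℝ) / |(d₂:ℝ)| + 1) := by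
    gcongr
  have hexpand : ((n:ℝ)/(g:ℝ)) * ((n:ℝ) * (g:ℝ) / |(d₂:ℝ)| + 1) =
      (n:ℝ)^2 / |(d₂:ℝ)| + (n:ℝ)/(g:ℝ) := by
    field_simp
  linarith [hsum, final, hexpand.le, hexpand.ge]

lemma sum_cubes_aux : ∀ m : ℕ, ∑ g ∈ Finset.Icc 1 m, (1:ℝ)/(g:ℝ)^3 ≤ 2 - 1/(m+1)
  | 0 => by norm_num
  | (m+1) => by
    rw [Finset.sum_Icc_succ_top (by omega)]
    have IH := sum_cubes_aux m
    rcases Nat.eq_zero_or_pos m with hm | hm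
    · subst hm; norm_num
    have hm1 : (1:ℝ) ≤ (m:ℝ) := by exact_mod_cast hm
    have hstep : (1:ℝ)/((m:ℝ)+1)^3 ≤ 1/((m:ℝ)+1) - 1/((m:ℝ)+1+1) := by
      rw [div_sub_div _ _ (by positivity) (by positivity)]
      rw [div_le_div_iff₀ (by positivity) (by positivity)]
      nlinarith [sq_nonneg ((m:ℝ)-1), sq_nonneg ((m:ℝ)+1), hm1, sq_nonneg ((m:ℝ))]
    push_cast
    push_cast at IH
    linarith

lemma sum_cubes (m : ℕ) : ∑ g ∈ Finset.Icc 1 m, (1:ℝ)/(g:ℝ)^3 ≤ 2 := by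
  have := sum_cubes_aux m
  have : (0:ℝ) < 1/((m:ℝ)+1) := by positivity
  linarith [sum_cubes_aux m]

lemma sum_inv_gcd (s : ℤ) (hs : 1 ≤ s) :
    ∑ d ∈ ((Finset.Icc (-s) s) ×ˢ (Finset.Icc (-s) s)).erase (0,0),
      (1:ℝ)/(Int.gcd d.1 d.2 : ℝ) ≤ 18 * (s:ℝ)^2 := by
  set D := ((Finset.Icc (-s) s) ×ˢ (Finset.Icc (-s) s)).erase ((0:ℤ),(0:ℤ)) with hD
  have hmaps : ∀ d ∈ D, Int.gcd d.1 d.2 ∈ Finset.Icc 1 s.toNat := by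
    intro d hd
    simp only [hD, Finset.mem_erase, Finset.mem_product, Finset.mem_Icc] at hd
    obtain ⟨hne, ⟨h1a, h1b⟩, h2a, h2b⟩ := hd
    have hne' : d.1 ≠ 0 ∨ d.2 ≠ 0 := by
      by_contra h
      push_neg at h
      exact hne (Prod.ext h.1 h.2)
    have hg0 : 0 < Int.gcd d.1 d.2 := by
      rcases hne' with h | h
      · exact Int.gcd_pos_of_ne_zero_left _ h
      · exact Int.gcd_pos_of_ne_zero_right _ h
    have hgs : (Int.gcd d.1 d.2 : ℤ) ≤ s := by
      rcases hne' with h | h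
      · have : (Int.gcd d.1 d.2 : ℤ) ∣ |d.1| := (dvd_abs _ _).mpr (Int.gcd_dvd_left _ _)
        have := Int.le_of_dvd (abs_pos.mpr h) this
        have : |d.1| ≤ s := abs_le.mpr ⟨h1a, h1b⟩
        omega
      · have : (Int.gcd d.1 d.2 : ℤ) ∣ |d.2| := (dvd_abs _ _).mpr (Int.gcd_dvd_right _ _)
        have := Int.le_of_dvd (abs_pos.mpr h) this
        have : |d.2| ≤ s := abs_le.mpr ⟨h2a, h2b⟩
        omega
    simp only [Finset.mem_Icc]
    omega
  rw [← Finset.sum_fiberwise_of_maps_to hmaps]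
  have hfib : ∀ g' ∈ Finset.Icc 1 s.toNat,
      (∑ d ∈ D.filter (fun d => Int.gcd d.1 d.2 = g'), (1:ℝ)/(Int.gcd d.1 d.2 : ℝ))
      ≤ 9 * (s:ℝ)^2 / (g':ℝ)^3 := by
    intro g' hg'
    simp only [Finset.mem_Icc] at hg'
    obtain ⟨hg1, hgs⟩ := hg'
    have hg'z : (1:ℤ) ≤ (g':ℤ) := by exact_mod_cast hg1
    have hg'pos : (0:ℤ) < (g':ℤ) := by omega
    have hg'r : (0:ℝ) < (g':ℝ) := by exact_mod_cast hg'pos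
    have hgsz : (g':ℤ) ≤ s := by omega
    have hgsr : (g':ℝ) ≤ (s:ℝ) := by exact_mod_cast hgsz
    have hsr : (0:ℝ) < (s:ℝ) := by exact_mod_cast hs
    -- each term equals 1/g'
    have hrepl : (∑ d ∈ D.filter (fun d => Int.gcd d.1 d.2 = g'), (1:ℝ)/(Int.gcd d.1 d.2 : ℝ))
        = ∑ d ∈ D.filter (fun d => Int.gcd d.1 d.2 = g'), (1:ℝ)/(g' : ℝ) := by
      refine Finset.sum_congr rfl (fun d hd => ?_)
      simp only [Finset.mem_filter] at hd
      rw [hd.2]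
    rw [hrepl, Finset.sum_const, nsmul_eq_mul]
    -- card of fiber
    have hcardfib : (D.filter (fun d => Int.gcd d.1 d.2 = g')).card ≤
        ((Finset.Icc (-(s/(g':ℤ))) (s/(g':ℤ))) ×ˢ (Finset.Icc (-(s/(g':ℤ))) (s/(g':ℤ)))).card := by
      apply Finset.card_le_card_of_injOn (fun d : ℤ × ℤ => (d.1 / (g':ℤ), d.2 / (g':ℤ)))
      · intro d hd
        simp only [Finset.mem_coe, Finset.mem_filter, hD, Finset.mem_erase, Finset.mem_product,
          Finset.mem_Icc] at hd ⊢
        obtain ⟨⟨hne, ⟨h1a, h1b⟩, h2a, h2b⟩, hgcd⟩ := hd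
        have hd1 : ((g':ℕ):ℤ) ∣ d.1 := hgcd ▸ Int.gcd_dvd_left d.1 d.2
        have hd2 : ((g':ℕ):ℤ) ∣ d.2 := hgcd ▸ Int.gcd_dvd_right d.1 d.2
        have e1 := Int.ediv_mul_cancel hd1
        have e2 := Int.ediv_mul_cancel hd2
        refine ⟨⟨?_, ?_⟩, ?_, ?_⟩
        · rw [neg_le, Int.le_ediv_iff_mul_le hg'pos, neg_mul, e1]; omega
        · rw [Int.le_ediv_iff_mul_le hg'pos, e1]; exact h1b
        · rw [neg_le, Int.le_ediv_iff_mul_le hg'pos, neg_mul, e2]; omega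
        · rw [Int.le_ediv_iff_mul_le hg'pos, e2]; exact h2b
      · intro d hd d' hd' h
        simp only [Finset.mem_coe, Finset.mem_filter] at hd hd'
        have hd1 : ((g':ℕ):ℤ) ∣ d.1 := hd.2 ▸ Int.gcd_dvd_left d.1 d.2
        have hd2 : ((g':ℕ):ℤ) ∣ d.2 := hd.2 ▸ Int.gcd_dvd_right d.1 d.2
        have hd1' : ((g':ℕ):ℤ) ∣ d'.1 := hd'.2 ▸ Int.gcd_dvd_left d'.1 d'.2
        have hd2' : ((g':ℕ):ℤ) ∣ d'.2 := hd'.2 ▸ Int.gcd_dvd_right d'.1 d'.2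
        have e1 := Int.ediv_mul_cancel hd1
        have e2 := Int.ediv_mul_cancel hd2
        have e1' := Int.ediv_mul_cancel hd1'
        have e2' := Int.ediv_mul_cancel hd2'
        have h1 := congrArg Prod.fst h
        have h2 := congrArg Prod.snd h
        simp only at h1 h2
        rw [h1] at e1; rw [h2] at e2
        exact Prod.ext (by linarith) (by linarith)
    -- bound the target card
    have hsg : (0:ℤ) ≤ s/(g':ℤ) := Int.ediv_nonneg (by omega) (by omega)
    have h1g : (1:ℝ) ≤ (s:ℝ)/(g':ℝ) := by
      rw [le_div_iff₀ hg'r]; simpa using hgsr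
    have hfl : ((s/(g':ℤ) : ℤ):ℝ) ≤ (s:ℝ)/(g':ℝ) := by
      have := int_ediv_le_real_div s (g':ℤ) hg'pos
      simpa using this
    have hIcc : ((Finset.Icc (-(s/(g':ℤ))) (s/(g':ℤ))).card : ℝ) ≤ 3 * (s:ℝ)/(g':ℝ) := by
      rw [Int.card_Icc]
      have key : (((s/(g':ℤ) + 1 - -(s/(g':ℤ))).toNat : ℕ) : ℝ)
          = 2 * ((s/(g':ℤ) : ℤ):ℝ) + 1 := by
        have : ((s/(g':ℤ) + 1 - -(s/(g':ℤ))).toNat : ℤ) = 2 * (s/(g':ℤ)) + 1 := by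
          rw [Int.toNat_of_nonneg (by omega)]; ring
        have := congrArg (fun x : ℤ => (x:ℝ)) this
        push_cast at this ⊢
        linarith
      rw [key]
      push_cast at hfl h1g ⊢
      calc (2:ℝ) * ((s/(g':ℤ) : ℤ):ℝ) + 1 ≤ 2*((s:ℝ)/(g':ℝ)) + (s:ℝ)/(g':ℝ) := by linarith
        _ = 3 * (s:ℝ)/(g':ℝ) := by ring
    have hprod : (((Finset.Icc (-(s/(g':ℤ))) (s/(g':ℤ))) ×ˢ
        (Finset.Icc (-(s/(g':ℤ))) (s/(g':ℤ)))).card : ℝ) ≤ (3 * (s:ℝ)/(g':ℝ))^2 := by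
      rw [Finset.card_product]
      push_cast
      have h0 : (0:ℝ) ≤ ((Finset.Icc (-(s/(g':ℤ))) (s/(g':ℤ))).card : ℝ) := by positivity
      nlinarith [hIcc]
    have hcf : ((D.filter (fun d => Int.gcd d.1 d.2 = g')).card : ℝ) ≤ (3 * (s:ℝ)/(g':ℝ))^2 := by
      calc ((D.filter (fun d => Int.gcd d.1 d.2 = g')).card : ℝ)
          ≤ _ := by exact_mod_cast hcardfib
        _ ≤ _ := hprod
    calc ((D.filter (fun d => Int.gcd d.1 d.2 = g')).card : ℝ) * (1/(g':ℝ))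
        ≤ (3 * (s:ℝ)/(g':ℝ))^2 * (1/(g':ℝ)) := by
          apply mul_le_mul_of_nonneg_right hcf (by positivity)
      _ = 9 * (s:ℝ)^2 / (g':ℝ)^3 := by field_simp; ring
  calc (∑ g' ∈ Finset.Icc 1 s.toNat,
        ∑ d ∈ D.filter (fun d => Int.gcd d.1 d.2 = g'), (1:ℝ)/(Int.gcd d.1 d.2 : ℝ))
      ≤ ∑ g' ∈ Finset.Icc 1 s.toNat, 9 * (s:ℝ)^2 / (g':ℝ)^3 := Finset.sum_le_sum hfib
    _ = 9 * (s:ℝ)^2 * ∑ g' ∈ Finset.Icc 1 s.toNat, (1:ℝ)/(g':ℝ)^3 := by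
        rw [Finset.mul_sum]
        exact Finset.sum_congr rfl (fun g' _ => by ring)
    _ ≤ 9 * (s:ℝ)^2 * 2 := by
        have hsr : (0:ℝ) ≤ (s:ℝ)^2 := by positivity
        have := sum_cubes s.toNat
        nlinarith
    _ = 18 * (s:ℝ)^2 := by ring

lemma lineF_swap (n c d₁ d₂ : ℤ) : (lineF n c d₁ d₂).card = (lineF n c d₂ d₁).card := by
  apply Finset.card_nbij' (fun t => (t.1, t.2.2, t.2.1)) (fun t => (t.1, t.2.2, t.2.1))
  · intro t ht
    simp only [Finset.mem_coe, lineF, Finset.mem_filter, Finset.mem_product, Finset.mem_Icc] at ht ⊢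
    obtain ⟨⟨hq, hr₁, hr₂⟩, heq, h1, h2⟩ := ht
    exact ⟨⟨hq, hr₂, hr₁⟩, by linarith, h2, h1⟩
  · intro t ht
    simp only [Finset.mem_coe, lineF, Finset.mem_filter, Finset.mem_product, Finset.mem_Icc] at ht ⊢
    obtain ⟨⟨hq, hr₁, hr₂⟩, heq, h1, h2⟩ := ht
    exact ⟨⟨hq, hr₂, hr₁⟩, by linarith, h2, h1⟩
  · intro t _; rfl
  · intro t _; rfl

lemma lineF_card_max (n c d₁ d₂ : ℤ) (hn : 1 ≤ n) (hd : d₁ ≠ 0 ∨ d₂ ≠ 0)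
    (hcg : Int.gcd c (Int.gcd d₁ d₂ : ℤ) = 1) :
    ((lineF n c d₁ d₂).card : ℝ) ≤
      (n:ℝ)^2 / (max |(d₁:ℝ)| |(d₂:ℝ)|) + (n:ℝ) / (Int.gcd d₁ d₂ : ℝ) := by
  rcases le_or_gt |d₁| |d₂| with h | h
  · have hd₂ : d₂ ≠ 0 := by
      rcases hd with h1 | h2
      · intro h0; rw [h0] at h; simp at h; omega
      · exact h2
    have hmax : max |(d₁:ℝ)| |(d₂:ℝ)| = |(d₂:ℝ)| := by
      apply max_eq_right
      have : (|d₁| : ℝ) ≤ (|d₂| : ℝ) := by exact_mod_cast h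
      simpa [abs_of_nonneg] using by push_cast at this ⊢; exact this
    rw [hmax]
    exact lineF_card n c d₁ d₂ hn hd₂ hcg
  · have hd₁ : d₁ ≠ 0 := by
      intro h0; rw [h0] at h; simp at h
      have := abs_nonneg d₂; omega
    have hmax : max |(d₁:ℝ)| |(d₂:ℝ)| = |(d₁:ℝ)| := by
      apply max_eq_left
      have : (|d₂| : ℝ) ≤ (|d₁| : ℝ) := by exact_mod_cast h.le
      simpa using by push_cast at this ⊢; exact this
    rw [hmax, lineF_swap]
    have hcg' : Int.gcd c (Int.gcd d₂ d₁ : ℤ) = 1 := by rw [Int.gcd_comm d₂ d₁]; exact hcg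
    have := lineF_card n c d₂ d₁ hn hd₁ hcg'
    rw [Int.gcd_comm d₂ d₁] at this
    exact this

lemma my_gcd_assoc (c d₁ d₂ : ℤ) (h : Int.gcd ((Int.gcd c d₁ : ℕ) : ℤ) d₂ = 1) :
    Int.gcd c ((Int.gcd d₁ d₂ : ℕ) : ℤ) = 1 := by
  simp only [Int.gcd, Int.natAbs_natCast] at h ⊢
  rw [Nat.gcd_assoc] at h
  exact h

set_option maxHeartbeats 2000000 in
/-- **Counting Farey points on short rational lines** (from Lemma `setincusp`):
there is a constant `C > 0` such that for all `Q, B ≥ 1`, the number of Farey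
triples `(q, r₁, r₂)` with `1 ≤ q ≤ Q`, `0 ≤ r₁, r₂ < q`, `gcd(q, r₁, r₂) = 1`,
lying on some rational line `c + d₁x₁ + d₂x₂ = 0` with `gcd(c, d₁, d₂) = 1` and
`0 < d₁² + d₂² ≤ B`, is at most `C B Q²`. -/
theorem count_farey_points_on_lines :
    ∃ C : ℝ, 0 < C ∧ ∀ Q B : ℝ, 1 ≤ Q → 1 ≤ B →
      {t : ℤ × ℤ × ℤ | 1 ≤ t.1 ∧ (t.1 : ℝ) ≤ Q ∧
        0 ≤ t.2.1 ∧ t.2.1 < t.1 ∧ 0 ≤ t.2.2 ∧ t.2.2 < t.1 ∧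
        Int.gcd ((Int.gcd t.1 t.2.1 : ℕ) : ℤ) t.2.2 = 1 ∧
        ∃ c d₁ d₂ : ℤ, Int.gcd ((Int.gcd c d₁ : ℕ) : ℤ) d₂ = 1 ∧
          0 < d₁ ^ 2 + d₂ ^ 2 ∧ ((d₁ ^ 2 + d₂ ^ 2 : ℤ) : ℝ) ≤ B ∧
          c * t.1 + d₁ * t.2.1 + d₂ * t.2.2 = 0}.Finite ∧
      (Nat.card {t : ℤ × ℤ × ℤ | 1 ≤ t.1 ∧ (t.1 : ℝ) ≤ Q ∧
        0 ≤ t.2.1 ∧ t.2.1 < t.1 ∧ 0 ≤ t.2.2 ∧ t.2.2 < t.1 ∧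
        Int.gcd ((Int.gcd t.1 t.2.1 : ℕ) : ℤ) t.2.2 = 1 ∧
        ∃ c d₁ d₂ : ℤ, Int.gcd ((Int.gcd c d₁ : ℕ) : ℤ) d₂ = 1 ∧
          0 < d₁ ^ 2 + d₂ ^ 2 ∧ ((d₁ ^ 2 + d₂ ^ 2 : ℤ) : ℝ) ≤ B ∧
          c * t.1 + d₁ * t.2.1 + d₂ * t.2.2 = 0} : ℝ) ≤ C * B * Q ^ 2 := by
  classical
  refine ⟨200, by norm_num, fun Q B hQ hB => ?_⟩
  set S : Set (ℤ × ℤ × ℤ) := {t : ℤ × ℤ × ℤ | 1 ≤ t.1 ∧ (t.1 : ℝ) ≤ Q ∧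
        0 ≤ t.2.1 ∧ t.2.1 < t.1 ∧ 0 ≤ t.2.2 ∧ t.2.2 < t.1 ∧
        Int.gcd ((Int.gcd t.1 t.2.1 : ℕ) : ℤ) t.2.2 = 1 ∧
        ∃ c d₁ d₂ : ℤ, Int.gcd ((Int.gcd c d₁ : ℕ) : ℤ) d₂ = 1 ∧
          0 < d₁ ^ 2 + d₂ ^ 2 ∧ ((d₁ ^ 2 + d₂ ^ 2 : ℤ) : ℝ) ≤ B ∧
          c * t.1 + d₁ * t.2.1 + d₂ * t.2.2 = 0} with hSdef
  set n : ℤ := ⌊Q⌋ with hndef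
  have hn1 : (1:ℤ) ≤ n := by
    rw [hndef, Int.le_floor]; exact_mod_cast hQ
  have hnQ : (n:ℝ) ≤ Q := Int.floor_le Q
  have hnpos : (0:ℝ) < (n:ℝ) := by exact_mod_cast (by omega : (0:ℤ) < n)
  have hQ0 : (0:ℝ) < Q := by linarith
  have hB0 : (0:ℝ) < B := by linarith
  have hsqB1 : (1:ℝ) ≤ Real.sqrt B := by
    rw [show (1:ℝ) = Real.sqrt 1 by simp]
    exact Real.sqrt_le_sqrt hB
  set s : ℤ := ⌊Real.sqrt B⌋ with hsdef
  have hs1 : (1:ℤ) ≤ s := by rw [hsdef, Int.le_floor]; exact_mod_cast hsqB1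
  have hsB : (s:ℝ) ≤ Real.sqrt B := Int.floor_le _
  have hs0 : (0:ℝ) < (s:ℝ) := by exact_mod_cast (by omega : (0:ℤ) < s)
  have hs2B : (s:ℝ)^2 ≤ B := by
    have h1 : (s:ℝ)^2 ≤ Real.sqrt B ^ 2 := by nlinarith
    rwa [Real.sq_sqrt hB0.le] at h1
  set Box : Finset (ℤ × ℤ × ℤ) :=
    (Finset.Icc 1 n) ×ˢ (Finset.Icc 0 (n-1)) ×ˢ (Finset.Icc 0 (n-1)) with hBox
  have hSBox : S ⊆ ↑Box := by
    intro t ht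
    obtain ⟨h1, h2, h3, h4, h5, h6, -, -⟩ := ht
    simp only [hBox, Finset.coe_product, Set.mem_prod, Finset.mem_coe, Finset.mem_Icc]
    have hqn : t.1 ≤ n := by rw [hndef, Int.le_floor]; exact h2
    exact ⟨⟨h1, hqn⟩, ⟨h3, by omega⟩, ⟨h5, by omega⟩⟩
  have hfin : S.Finite := Set.Finite.subset Box.finite_toSet hSBox
  refine ⟨hfin, ?_⟩
  -- covering
  set Dset : Finset (ℤ × ℤ) := ((Finset.Icc (-s) s) ×ˢ (Finset.Icc (-s) s)).erase (0,0)
    with hDset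
  set Cs : ℤ × ℤ → Finset ℤ := fun d =>
    (Finset.Icc (-(2 * max |d.1| |d.2|)) (2 * max |d.1| |d.2|)).filter
      (fun c => Int.gcd c ((Int.gcd d.1 d.2 : ℕ) : ℤ) = 1) with hCs
  set Cover : Finset (ℤ × ℤ × ℤ) :=
    Dset.biUnion (fun d => (Cs d).biUnion (fun c => lineF n c d.1 d.2)) with hCover
  have hcov : S ⊆ ↑Cover := by
    intro t ht
    obtain ⟨h1, h2, h3, h4, h5, h6, -, c, d₁, d₂, hgcd, hpos, hBle, heq⟩ := ht
    have hqn : t.1 ≤ n := by rw [hndef, Int.le_floor]; exact h2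
    push_cast at hBle
    have hd1B : (d₁:ℝ)^2 ≤ B := by nlinarith [sq_nonneg ((d₂:ℝ))]
    have hd2B : (d₂:ℝ)^2 ≤ B := by nlinarith [sq_nonneg ((d₁:ℝ))]
    have habs1 : |(d₁:ℝ)| ≤ Real.sqrt B := by
      rw [← Real.sqrt_sq_eq_abs]; exact Real.sqrt_le_sqrt hd1B
    have habs2 : |(d₂:ℝ)| ≤ Real.sqrt B := by
      rw [← Real.sqrt_sq_eq_abs]; exact Real.sqrt_le_sqrt hd2B
    have hd1s : |d₁| ≤ s := by
      rw [hsdef, Int.le_floor]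
      calc ((|d₁| : ℤ):ℝ) = |(d₁:ℝ)| := by push_cast; rfl
        _ ≤ _ := habs1
    have hd2s : |d₂| ≤ s := by
      rw [hsdef, Int.le_floor]
      calc ((|d₂| : ℤ):ℝ) = |(d₂:ℝ)| := by push_cast; rfl
        _ ≤ _ := habs2
    have hdne : (d₁, d₂) ≠ ((0:ℤ), (0:ℤ)) := by
      intro h0
      have e1 : d₁ = 0 := congrArg Prod.fst h0
      have e2 : d₂ = 0 := congrArg Prod.snd h0
      rw [e1, e2] at hpos; simp at hpos
    have hdD : (d₁, d₂) ∈ Dset := by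
      simp only [hDset, Finset.mem_erase, Finset.mem_product, Finset.mem_Icc]
      have a1 := abs_le.mp hd1s
      have a2 := abs_le.mp hd2s
      exact ⟨hdne, ⟨by omega, by omega⟩, by omega, by omega⟩
    set M : ℤ := max |d₁| |d₂| with hM
    have hM1 : 1 ≤ M := by
      rcases (by simpa [Prod.ext_iff] using hdne : ¬(d₁ = 0 ∧ d₂ = 0)) with h
      by_contra hc
      push_neg at hc
      have := abs_nonneg d₁; have := abs_nonneg d₂
      have : |d₁| = 0 ∧ |d₂| = 0 := by omega
      exact h ⟨abs_eq_zero.mp this.1, abs_eq_zero.mp this.2⟩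
    have hcM : |c| ≤ 2 * M := by
      have hkey : |c| * t.1 ≤ 2 * M * t.1 := by
        have h0 : c * t.1 = -(d₁ * t.2.1 + d₂ * t.2.2) := by linarith
        have habs : |c * t.1| = |d₁ * t.2.1 + d₂ * t.2.2| := by rw [h0, abs_neg]
        have h1 : |d₁ * t.2.1 + d₂ * t.2.2| ≤ |d₁| * t.2.1 + |d₂| * t.2.2 := by
          calc |d₁ * t.2.1 + d₂ * t.2.2| ≤ |d₁ * t.2.1| + |d₂ * t.2.2| := abs_add_le _ _
            _ = |d₁| * t.2.1 + |d₂| * t.2.2 := by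
                rw [abs_mul, abs_mul, abs_of_nonneg h3, abs_of_nonneg h5]
        have h2' : |d₁| * t.2.1 + |d₂| * t.2.2 ≤ M * t.2.1 + M * t.2.2 :=
          add_le_add (mul_le_mul_of_nonneg_right (le_max_left _ _) h3)
            (mul_le_mul_of_nonneg_right (le_max_right _ _) h5)
        have h3' : M * t.2.1 + M * t.2.2 ≤ 2 * M * t.1 := by nlinarith
        calc |c| * t.1 = |c * t.1| := by rw [abs_mul, abs_of_nonneg (by omega : (0:ℤ) ≤ t.1)]
          _ ≤ _ := by rw [habs] at *; linarith
      exact le_of_mul_le_mul_right hkey (by omega)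
    have hcC : c ∈ Cs (d₁, d₂) := by
      simp only [hCs, Finset.mem_filter, Finset.mem_Icc]
      have := abs_le.mp hcM
      refine ⟨⟨by omega, by omega⟩, my_gcd_assoc c d₁ d₂ hgcd⟩
    have htl : t ∈ lineF n c d₁ d₂ := by
      simp only [lineF, Finset.mem_filter, Finset.mem_product, Finset.mem_Icc]
      exact ⟨⟨⟨h1, hqn⟩, ⟨h3, by omega⟩, ⟨h5, by omega⟩⟩, by linarith, h4, h6⟩
    simp only [hCover, Finset.coe_biUnion, Set.mem_iUnion, Finset.mem_coe]
    exact ⟨(d₁, d₂), hdD, c, hcC, htl⟩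
  -- cardinality chain
  have hNatCover : (Nat.card S : ℝ) ≤ (Cover.card : ℝ) := by
    have h1 : Nat.card S = S.ncard := Nat.card_coe_set_eq S
    have h2 : S.ncard ≤ (↑Cover : Set (ℤ×ℤ×ℤ)).ncard :=
      Set.ncard_le_ncard hcov Cover.finite_toSet
    rw [Set.ncard_coe_finset] at h2
    rw [h1]
    exact_mod_cast h2
  have hNatBox : (Nat.card S : ℝ) ≤ (n:ℝ)^3 := by
    have h1 : Nat.card S = S.ncard := Nat.card_coe_set_eq S
    have h2 : S.ncard ≤ (↑Box : Set (ℤ×ℤ×ℤ)).ncard :=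
      Set.ncard_le_ncard hSBox Box.finite_toSet
    rw [Set.ncard_coe_finset] at h2
    have h3 : (Box.card : ℝ) = (n:ℝ)^3 := by
      rw [hBox, Finset.card_product, Finset.card_product, Int.card_Icc, Int.card_Icc]
      have e1 : ((n + 1 - 1).toNat : ℤ) = n := by rw [Int.toNat_of_nonneg (by omega)]; ring
      have e2 : ((n - 1 + 1 - 0).toNat : ℤ) = n := by rw [Int.toNat_of_nonneg (by omega)]; ring
      have e1' : (((n + 1 - 1).toNat : ℕ) : ℝ) = (n:ℝ) := by exact_mod_cast congrArg (fun x:ℤ => (x:ℝ)) e1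
      have e2' : (((n - 1 + 1 - 0).toNat : ℕ) : ℝ) = (n:ℝ) := by exact_mod_cast congrArg (fun x:ℤ => (x:ℝ)) e2
      push_cast
      rw [e1', e2']
      ring
    rw [h1, ← h3]
    exact_mod_cast h2
  -- bound Cover.card
  have hCovBound : (Cover.card : ℝ) ≤ 45 * (n:ℝ)^2 * (s:ℝ)^2 + 90 * (n:ℝ) * (s:ℝ)^3 := by
    have hstep1 : Cover.card ≤ ∑ d ∈ Dset, ((Cs d).biUnion (fun c => lineF n c d.1 d.2)).card :=
      Finset.card_biUnion_le
    have hstep2 : ∀ d ∈ Dset, ((Cs d).biUnion (fun c => lineF n c d.1 d.2)).card ≤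
        ∑ c ∈ Cs d, (lineF n c d.1 d.2).card := fun d _ => Finset.card_biUnion_le
    have hchain : (Cover.card : ℝ) ≤ ∑ d ∈ Dset, ((∑ c ∈ Cs d, (lineF n c d.1 d.2).card : ℕ) : ℝ) := by
      calc (Cover.card : ℝ) ≤ ((∑ d ∈ Dset, ((Cs d).biUnion (fun c => lineF n c d.1 d.2)).card : ℕ) : ℝ) := by
            exact_mod_cast hstep1
        _ ≤ _ := by
            push_cast
            exact Finset.sum_le_sum (fun d hd => by exact_mod_cast hstep2 d hd)
    -- per-d bound
    have hperd : ∀ d ∈ Dset, ((∑ c ∈ Cs d, (lineF n c d.1 d.2).card : ℕ) : ℝ) ≤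
        5 * (n:ℝ)^2 + 5 * (s:ℝ) * (n:ℝ) * ((1:ℝ)/(Int.gcd d.1 d.2 : ℝ)) := by
      intro d hd
      simp only [hDset, Finset.mem_erase, Finset.mem_product, Finset.mem_Icc] at hd
      obtain ⟨hdne, ⟨h1a, h1b⟩, h2a, h2b⟩ := hd
      have hdor : d.1 ≠ 0 ∨ d.2 ≠ 0 := by
        by_contra h
        push_neg at h
        exact hdne (Prod.ext h.1 h.2)
      have hg0 : 0 < Int.gcd d.1 d.2 := by
        rcases hdor with h | h
        · exact Int.gcd_pos_of_ne_zero_left _ h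
        · exact Int.gcd_pos_of_ne_zero_right _ h
      have hgr : (0:ℝ) < (Int.gcd d.1 d.2 : ℝ) := by exact_mod_cast hg0
      set Mr : ℝ := max |(d.1:ℝ)| |(d.2:ℝ)| with hMr
      have hMr1 : (1:ℝ) ≤ Mr := by
        rcases hdor with h | h
        · have h1 : (1:ℤ) ≤ |d.1| := by have := abs_pos.mpr h; omega
          have : (1:ℝ) ≤ |(d.1:ℝ)| := by
            calc (1:ℝ) ≤ ((|d.1| : ℤ):ℝ) := by exact_mod_cast h1
              _ = |(d.1:ℝ)| := by push_cast; rfl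
          exact le_trans this (le_max_left _ _)
        · have h1 : (1:ℤ) ≤ |d.2| := by have := abs_pos.mpr h; omega
          have : (1:ℝ) ≤ |(d.2:ℝ)| := by
            calc (1:ℝ) ≤ ((|d.2| : ℤ):ℝ) := by exact_mod_cast h1
              _ = |(d.2:ℝ)| := by push_cast; rfl
          exact le_trans this (le_max_right _ _)
      have hMr0 : (0:ℝ) < Mr := by linarith
      have hMrs : Mr ≤ (s:ℝ) := by
        have e1 : |(d.1:ℝ)| ≤ (s:ℝ) := by
          have : |d.1| ≤ s := abs_le.mpr ⟨h1a, h1b⟩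
          calc |(d.1:ℝ)| = ((|d.1| : ℤ):ℝ) := by push_cast; rfl
            _ ≤ _ := by exact_mod_cast this
        have e2 : |(d.2:ℝ)| ≤ (s:ℝ) := by
          have : |d.2| ≤ s := abs_le.mpr ⟨h2a, h2b⟩
          calc |(d.2:ℝ)| = ((|d.2| : ℤ):ℝ) := by push_cast; rfl
            _ ≤ _ := by exact_mod_cast this
        exact max_le e1 e2
      have hsum1 : ((∑ c ∈ Cs d, (lineF n c d.1 d.2).card : ℕ) : ℝ) ≤
          ∑ c ∈ Cs d, ((n:ℝ)^2 / Mr + (n:ℝ)/(Int.gcd d.1 d.2 : ℝ)) := by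
        push_cast
        apply Finset.sum_le_sum
        intro c hc
        simp only [hCs, Finset.mem_filter, Finset.mem_Icc] at hc
        exact lineF_card_max n c d.1 d.2 hn1 hdor hc.2
      rw [Finset.sum_const, nsmul_eq_mul] at hsum1
      have hCscard : ((Cs d).card : ℝ) ≤ 5 * Mr := by
        have h1 : (Cs d).card ≤ (Finset.Icc (-(2 * max |d.1| |d.2|)) (2 * max |d.1| |d.2|)).card := by
          apply Finset.card_filter_le
        have h2 : ((Finset.Icc (-(2 * max |d.1| |d.2|)) (2 * max |d.1| |d.2|)).card : ℝ)
            = 4 * ((max |d.1| |d.2| : ℤ) : ℝ) + 1 := by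
          rw [Int.card_Icc]
          have hM0 : (0:ℤ) ≤ max |d.1| |d.2| := le_trans (abs_nonneg _) (le_max_left _ _)
          have e : ((2 * max |d.1| |d.2| + 1 - -(2 * max |d.1| |d.2|)).toNat : ℤ)
              = 4 * max |d.1| |d.2| + 1 := by
            rw [Int.toNat_of_nonneg (by omega)]; ring
          have := congrArg (fun x : ℤ => (x:ℝ)) e
          push_cast at this ⊢
          linarith
        have h3 : ((max |d.1| |d.2| : ℤ) : ℝ) = Mr := by
          rw [hMr]; push_cast; rfl
        have h4 : ((Cs d).card : ℝ) ≤ 4 * Mr + 1 := by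
          rw [← h3]
          calc ((Cs d).card : ℝ) ≤ _ := by exact_mod_cast h1
            _ = _ := h2
        linarith
      have hpos : (0:ℝ) ≤ (n:ℝ)^2 / Mr + (n:ℝ)/(Int.gcd d.1 d.2 : ℝ) := by positivity
      have hsum2 : ((Cs d).card : ℝ) * ((n:ℝ)^2 / Mr + (n:ℝ)/(Int.gcd d.1 d.2 : ℝ)) ≤
          5 * Mr * ((n:ℝ)^2 / Mr + (n:ℝ)/(Int.gcd d.1 d.2 : ℝ)) :=
        mul_le_mul_of_nonneg_right hCscard hpos
      have hexp : 5 * Mr * ((n:ℝ)^2 / Mr + (n:ℝ)/(Int.gcd d.1 d.2 : ℝ)) =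
          5 * (n:ℝ)^2 + 5 * Mr * (n:ℝ) * ((1:ℝ)/(Int.gcd d.1 d.2 : ℝ)) := by
        field_simp
      have hlast : 5 * Mr * (n:ℝ) * ((1:ℝ)/(Int.gcd d.1 d.2 : ℝ)) ≤
          5 * (s:ℝ) * (n:ℝ) * ((1:ℝ)/(Int.gcd d.1 d.2 : ℝ)) := by
        apply mul_le_mul_of_nonneg_right _ (by positivity)
        nlinarith
      linarith
    -- assemble
    have hDcard : ((Dset.card : ℕ) : ℝ) ≤ 9 * (s:ℝ)^2 := by
      have h1 : Dset.card ≤ ((Finset.Icc (-s) s) ×ˢ (Finset.Icc (-s) s)).card :=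
        Finset.card_le_card (Finset.erase_subset _ _)
      have h2 : (((Finset.Icc (-s) s) ×ˢ (Finset.Icc (-s) s)).card : ℝ) = (2*(s:ℝ)+1)^2 := by
        rw [Finset.card_product, Int.card_Icc]
        have e : ((s + 1 - -s).toNat : ℤ) = 2*s + 1 := by
          rw [Int.toNat_of_nonneg (by omega)]; ring
        have := congrArg (fun x : ℤ => (x:ℝ)) e
        push_cast at this ⊢
        nlinarith [this]
      have hs1' : (1:ℝ) ≤ (s:ℝ) := by exact_mod_cast hs1
      have h3 : (2*(s:ℝ)+1)^2 ≤ 9 * (s:ℝ)^2 := by nlinarith [hs0, hs1']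
      calc ((Dset.card : ℕ) : ℝ) ≤ _ := by exact_mod_cast h1
        _ = _ := h2
        _ ≤ _ := h3
    have hsumg : ∑ d ∈ Dset, (1:ℝ)/(Int.gcd d.1 d.2 : ℝ) ≤ 18 * (s:ℝ)^2 := by
      have := sum_inv_gcd s hs1
      rw [hDset]
      exact this
    calc (Cover.card : ℝ)
        ≤ ∑ d ∈ Dset, ((∑ c ∈ Cs d, (lineF n c d.1 d.2).card : ℕ) : ℝ) := hchain
      _ ≤ ∑ d ∈ Dset, (5 * (n:ℝ)^2 + 5 * (s:ℝ) * (n:ℝ) * ((1:ℝ)/(Int.gcd d.1 d.2 : ℝ))) :=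
          Finset.sum_le_sum hperd
      _ = 5 * (n:ℝ)^2 * Dset.card + 5 * (s:ℝ) * (n:ℝ) * ∑ d ∈ Dset, (1:ℝ)/(Int.gcd d.1 d.2 : ℝ) := by
          rw [Finset.sum_add_distrib, Finset.sum_const, nsmul_eq_mul, Finset.mul_sum]
          ring
      _ ≤ 5 * (n:ℝ)^2 * (9 * (s:ℝ)^2) + 5 * (s:ℝ) * (n:ℝ) * (18 * (s:ℝ)^2) := by
          apply add_le_add
          · apply mul_le_mul_of_nonneg_left hDcard (by positivity)
          · apply mul_le_mul_of_nonneg_left hsumg (by positivity)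
      _ = 45 * (n:ℝ)^2 * (s:ℝ)^2 + 90 * (n:ℝ) * (s:ℝ)^3 := by ring
  -- final case split
  rcases le_or_gt (s:ℝ) (n:ℝ) with hc | hc
  · have h1 : 45 * (n:ℝ)^2 * (s:ℝ)^2 ≤ 45 * Q^2 * B := by
      have : (n:ℝ)^2 ≤ Q^2 := by nlinarith
      nlinarith
    have h2 : 90 * (n:ℝ) * (s:ℝ)^3 ≤ 90 * Q^2 * B := by
      have e1 : (n:ℝ) * (s:ℝ) ≤ Q^2 := by nlinarith
      have e2 : 90 * (n:ℝ) * (s:ℝ)^3 = 90 * ((n:ℝ)*(s:ℝ)) * (s:ℝ)^2 := by ring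
      rw [e2]
      have : 90 * ((n:ℝ)*(s:ℝ)) * (s:ℝ)^2 ≤ 90 * Q^2 * (s:ℝ)^2 := by
        apply mul_le_mul_of_nonneg_right _ (by positivity)
        nlinarith
      nlinarith [sq_nonneg (s:ℝ)]
    have hBQ : (0:ℝ) ≤ B * Q^2 := by positivity
    calc (Nat.card S : ℝ) ≤ (Cover.card : ℝ) := hNatCover
      _ ≤ 45 * (n:ℝ)^2 * (s:ℝ)^2 + 90 * (n:ℝ) * (s:ℝ)^3 := hCovBound
      _ ≤ 45 * Q^2 * B + 90 * Q^2 * B := by linarith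
      _ ≤ 200 * B * Q^2 := by nlinarith
  · have hsqB_self : Real.sqrt B ≤ B := by
      nlinarith [Real.sq_sqrt hB0.le, hsqB1]
    have h1 : (n:ℝ)^3 ≤ B * Q^2 := by
      have e1 : (n:ℝ)^3 ≤ (n:ℝ)^2 * (s:ℝ) := by nlinarith
      have e2 : (n:ℝ)^2 * (s:ℝ) ≤ Q^2 * B := by
        have : (n:ℝ)^2 ≤ Q^2 := by nlinarith
        have hsB' : (s:ℝ) ≤ B := le_trans hsB hsqB_self
        nlinarith
      linarith [e1, e2]
    calc (Nat.card S : ℝ) ≤ (n:ℝ)^3 := hNatBox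
      _ ≤ B * Q^2 := h1
      _ ≤ 200 * B * Q^2 := by nlinarith [hB0, hQ0]
end

section
/- Let J be a fractional ideal of O_K and let ε₁, ε₂ be totally positive units of O_K whose logarithm vectors ℓ(εᵢ) = (log σ₁(εᵢ), log σ₂(εᵢ), log σ₃(εᵢ)) are linearly independent over ℝ. Then there exists a constant C > 0 such that for all X ≥ 1, the set of totally positive ξ ∈ J with N(ξ) ≤ X and ℓ(ξ) − (⅓ log N(ξ))·(1,1,1) = s₁ℓ(ε₁) + s₂ℓ(ε₂) for some s₁, s₂ ∈ [0,1) is finite of cardinality at most C·X. -/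
open NumberField

noncomputable section

/-- Counting elements of a fractional ideal in a box. -/
theorem box_count
    (K : Type*) [Field K] [NumberField K]
    (hrank : Module.finrank ℚ K = 3)
    (σ : Fin 3 → (K →+* ℝ)) (hσ : Function.Injective σ)
    (J : FractionalIdeal (nonZeroDivisors (𝓞 K)) K) :
    ∃ Λ : ℝ, 1 ≤ Λ ∧ ∀ R : ℝ, 1 ≤ R →
      {ξ : K | ξ ∈ J ∧ ∀ i, |σ i ξ| ≤ R}.Finite ∧
      (Nat.card {ξ : K | ξ ∈ J ∧ ∀ i, |σ i ξ| ≤ R} : ℝ) ≤ Λ * R ^ 3 := by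
  classical
  obtain ⟨d, hd, hdint⟩ := J.prop
  have hdne : (algebraMap (𝓞 K) K d) ≠ 0 := by
    have : d ≠ 0 := mem_nonZeroDivisors_iff_ne_zero.1 hd
    simpa [map_eq_zero_iff _ (IsFractionRing.injective (𝓞 K) K)] using this
  -- basis
  have hcard : Fintype.card (Module.Free.ChooseBasisIndex ℤ (𝓞 K)) = 3 := by
    rw [← Module.finrank_eq_card_chooseBasisIndex, RingOfIntegers.rank, hrank]
  let e := Fintype.equivFinOfCardEq hcard
  let b : Module.Basis (Fin 3) ℤ (𝓞 K) := (RingOfIntegers.basis K).reindex e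
  let bQ : Module.Basis (Fin 3) ℚ K := (integralBasis K).reindex e
  have hbQ : ∀ j, bQ j = algebraMap (𝓞 K) K (b j) := by
    intro j
    simp [bQ, b, Module.Basis.reindex_apply, integralBasis_apply]
  let M : Matrix (Fin 3) (Fin 3) ℝ := Matrix.of fun i j => σ i (algebraMap (𝓞 K) K (b j))
  have hdet : M.det ≠ 0 := by
    intro h0
    obtain ⟨c, hc0, hcM⟩ := (Matrix.exists_vecMul_eq_zero_iff).2 h0
    have hli : LinearIndependent ℝ (fun i : Fin 3 => ((σ i : K →* ℝ) : K → ℝ)) := by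
      refine (linearIndependent_monoidHom K ℝ).comp (fun i => (σ i : K →* ℝ)) ?_
      intro i i' h
      apply hσ
      ext x
      exact DFunLike.congr_fun h x
    have hf : (∑ i, c i • ((σ i).toRatAlgHom.toLinearMap : K →ₗ[ℚ] ℝ)) = 0 := by
      apply bQ.ext
      intro j
      simp only [LinearMap.sum_apply, LinearMap.smul_apply, LinearMap.zero_apply]
      have : ∀ i, ((σ i).toRatAlgHom.toLinearMap : K →ₗ[ℚ] ℝ) (bQ j) = M i j := by
        intro i; simp [hbQ j, M, RingHom.toRatAlgHom]
      simp only [this, smul_eq_mul]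
      have := congr_fun hcM j
      simpa [Matrix.vecMul, dotProduct] using this
    have : ∀ i, c i = 0 := by
      refine Fintype.linearIndependent_iff.1 hli c ?_
      funext x
      have h2 : (∑ i, c i • ((σ i).toRatAlgHom.toLinearMap : K →ₗ[ℚ] ℝ)) x = 0 := by
        rw [hf]; rfl
      simp only [LinearMap.sum_apply, LinearMap.smul_apply] at h2
      simp only [Finset.sum_apply, Pi.smul_apply, Pi.zero_apply, MonoidHom.coe_coe]
      simpa [RingHom.toRatAlgHom] using h2
    exact hc0 (funext this)
  have hMinv : M⁻¹ * M = 1 := Matrix.nonsing_inv_mul M (Ne.isUnit hdet)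
  set D : ℝ := (∑ i, |σ i (algebraMap (𝓞 K) K d)|) + 1 with hD
  have hD1 : 1 ≤ D := by
    rw [hD]
    have : 0 ≤ ∑ i, |σ i (algebraMap (𝓞 K) K d)| :=
      Finset.sum_nonneg fun i _ => abs_nonneg _
    linarith
  have hDentry : ∀ i, |σ i (algebraMap (𝓞 K) K d)| ≤ D := by
    intro i
    have h5 : |σ i (algebraMap (𝓞 K) K d)| ≤ ∑ i, |σ i (algebraMap (𝓞 K) K d)| :=
      Finset.single_le_sum (f := fun i => |σ i (algebraMap (𝓞 K) K d)|)
        (fun i _ => abs_nonneg _) (Finset.mem_univ i)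
    rw [hD]; linarith
  set Λ₀ : ℝ := (∑ j, ∑ i, |M⁻¹ j i|) + 1 with hΛ₀
  have hΛ₀1 : 1 ≤ Λ₀ := by
    rw [hΛ₀]
    have : 0 ≤ ∑ j, ∑ i, |M⁻¹ j i| :=
      Finset.sum_nonneg fun j _ => Finset.sum_nonneg fun i _ => abs_nonneg _
    linarith
  have hΛ₀row : ∀ j, (∑ i, |M⁻¹ j i|) ≤ Λ₀ := by
    intro j
    have h5 : (∑ i, |M⁻¹ j i|) ≤ ∑ j, ∑ i, |M⁻¹ j i| :=
      Finset.single_le_sum (f := fun j => ∑ i, |M⁻¹ j i|)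
        (fun j _ => Finset.sum_nonneg fun i _ => abs_nonneg _) (Finset.mem_univ j)
    rw [hΛ₀]; linarith
  set Λ : ℝ := Λ₀ * D with hΛdef
  have hΛ1 : 1 ≤ Λ := by rw [hΛdef]; nlinarith
  have hΛ3 : 1 ≤ Λ ^ 3 := one_le_pow₀ hΛ1
  refine ⟨27 * Λ ^ 3, by linarith, ?_⟩
  intro R hR
  set S : Set K := {ξ : K | ξ ∈ J ∧ ∀ i, |σ i ξ| ≤ R} with hS
  -- the coordinate map
  let F : K → (Fin 3 → ℤ) := fun ξ =>
    if h : ∃ a : 𝓞 K, algebraMap (𝓞 K) K a = algebraMap (𝓞 K) K d * ξ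
    then (fun j => b.repr h.choose j) else 0
  have hFspec : ∀ ξ ∈ S, ∃ h : ∃ a : 𝓞 K, algebraMap (𝓞 K) K a = algebraMap (𝓞 K) K d * ξ,
      F ξ = fun j => b.repr h.choose j := by
    intro ξ hξ
    have hmem : ξ ∈ (J : Submodule (𝓞 K) K) := FractionalIdeal.mem_coe.2 hξ.1
    obtain ⟨a, ha⟩ := hdint ξ hmem
    have h : ∃ a : 𝓞 K, algebraMap (𝓞 K) K a = algebraMap (𝓞 K) K d * ξ :=
      ⟨a, by rw [ha, Algebra.smul_def]⟩
    exact ⟨h, by simp only [F, dif_pos h]⟩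
  -- bound on coordinates
  have hFbound : ∀ ξ ∈ S, ∀ j, |(F ξ j : ℝ)| ≤ Λ * R := by
    intro ξ hξ j
    obtain ⟨h, hF⟩ := hFspec ξ hξ
    set a := h.choose with ha
    have haspec : algebraMap (𝓞 K) K a = algebraMap (𝓞 K) K d * ξ := h.choose_spec
    set v : Fin 3 → ℝ := fun i => σ i (algebraMap (𝓞 K) K a) with hv
    have hvbound : ∀ i, |v i| ≤ D * R := by
      intro i
      have : v i = σ i (algebraMap (𝓞 K) K d) * σ i ξ := by rw [hv]; simp [haspec]
      rw [this, abs_mul]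
      have h1 := hDentry i
      have h2 := hξ.2 i
      have h3 : (0:ℝ) ≤ |σ i (algebraMap (𝓞 K) K d)| := abs_nonneg _
      have h4 : (0:ℝ) ≤ |σ i ξ| := abs_nonneg _
      nlinarith
    have hmv : M.mulVec (fun j => (b.repr a j : ℝ)) = v := by
      funext i
      have hsum : algebraMap (𝓞 K) K a = ∑ j, (b.repr a j) • algebraMap (𝓞 K) K (b j) := by
        conv_lhs => rw [← b.sum_repr a]
        rw [map_sum]
        simp [map_zsmul]
      rw [hv]
      simp only [Matrix.mulVec, dotProduct, hsum, map_sum, map_zsmul]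
      simp only [M, Matrix.of_apply, zsmul_eq_mul]
      exact Finset.sum_congr rfl fun j _ => mul_comm _ _
    have hn : (fun j => (b.repr a j : ℝ)) = M⁻¹.mulVec v := by
      rw [← hmv, Matrix.mulVec_mulVec, hMinv, Matrix.one_mulVec]
    have : (F ξ j : ℝ) = (M⁻¹.mulVec v) j := by
      rw [hF]
      exact congr_fun hn j
    rw [this]
    have : |(M⁻¹.mulVec v) j| ≤ ∑ i, |M⁻¹ j i| * |v i| := by
      simp only [Matrix.mulVec, dotProduct]
      refine (Finset.abs_sum_le_sum_abs _ _).trans ?_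
      refine Finset.sum_le_sum fun i _ => ?_
      rw [abs_mul]
    refine this.trans ?_
    have h1 : ∑ i, |M⁻¹ j i| * |v i| ≤ ∑ i, |M⁻¹ j i| * (D * R) :=
      Finset.sum_le_sum fun i _ => mul_le_mul_of_nonneg_left (hvbound i) (abs_nonneg _)
    refine h1.trans ?_
    rw [← Finset.sum_mul]
    have h2 := hΛ₀row j
    have h3 : 0 ≤ D * R := by positivity
    calc (∑ i, |M⁻¹ j i|) * (D * R) ≤ Λ₀ * (D * R) := mul_le_mul_of_nonneg_right h2 h3
      _ = Λ * R := by rw [hΛdef]; ring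
  -- injectivity
  have hinj : Set.InjOn F S := by
    intro ξ hξ ξ' hξ' hFe
    obtain ⟨h, hF⟩ := hFspec ξ hξ
    obtain ⟨h', hF'⟩ := hFspec ξ' hξ'
    have : h.choose = h'.choose := by
      apply b.repr.injective
      ext j
      have := congr_fun hFe j
      rw [hF, hF'] at this
      exact_mod_cast this
    have heq : algebraMap (𝓞 K) K d * ξ = algebraMap (𝓞 K) K d * ξ' := by
      rw [← h.choose_spec, ← h'.choose_spec, this]
    exact mul_left_cancel₀ hdne heq
  -- the box finset
  set m : ℤ := ⌊Λ * R⌋ with hm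
  have hΛR1 : (1:ℝ) ≤ Λ * R := by
    have := mul_le_mul hΛ1 hR zero_le_one (le_trans zero_le_one hΛ1)
    linarith
  have hm1 : 1 ≤ m := by
    rw [hm]
    exact_mod_cast Int.le_floor.2 (by exact_mod_cast hΛR1)
  set T : Finset (Fin 3 → ℤ) := Fintype.piFinset fun _ => Finset.Icc (-m) m with hT
  have himg : ∀ ξ ∈ S, F ξ ∈ T := by
    intro ξ hξ
    rw [hT, Fintype.mem_piFinset]
    intro j
    rw [Finset.mem_Icc]
    have := hFbound ξ hξ j
    rw [abs_le] at this
    constructor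
    · have h2 : -(F ξ j) ≤ m := Int.le_floor.2 (by push_cast; linarith [this.1])
      omega
    · exact Int.le_floor.2 this.2
  have hsubT : F '' S ⊆ (T : Set (Fin 3 → ℤ)) := by
    rintro _ ⟨ξ, hξ, rfl⟩
    exact himg ξ hξ
  have hfinimg : (F '' S).Finite := Set.Finite.subset T.finite_toSet hsubT
  have hfin : S.Finite := Set.Finite.of_finite_image hfinimg hinj
  refine ⟨hfin, ?_⟩
  have hcard1 : Nat.card S = (F '' S).ncard := by
    rw [Nat.card_coe_set_eq, Set.ncard_image_of_injOn hinj]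
  have hcard2 : (F '' S).ncard ≤ T.card := by
    rw [← Set.ncard_coe_finset]
    exact Set.ncard_le_ncard hsubT T.finite_toSet
  have hTcard : (T.card : ℝ) ≤ (3 * (Λ * R)) ^ 3 := by
    have hTc : T.card = ((2 * m + 1).toNat) ^ 3 := by
      rw [hT, Fintype.card_piFinset]
      simp only [Int.card_Icc, Finset.prod_const, Finset.card_univ, Fintype.card_fin]
      congr 2
      omega
    rw [hTc]
    have hmr : ((2 * m + 1).toNat : ℝ) ≤ 3 * (Λ * R) := by
      have h1 : ((2 * m + 1).toNat : ℤ) = 2 * m + 1 := Int.toNat_of_nonneg (by omega)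
      have h2 : (m : ℝ) ≤ Λ * R := Int.floor_le _
      have h3 : ((2 * m + 1).toNat : ℝ) = 2 * (m : ℝ) + 1 := by exact_mod_cast congrArg (fun z : ℤ => (z : ℝ)) h1
      rw [h3]
      linarith
    rw [Nat.cast_pow]
    exact pow_le_pow_left₀ (Nat.cast_nonneg _) hmr 3
  calc (Nat.card S : ℝ) ≤ (T.card : ℝ) := by
        rw [hcard1]; exact_mod_cast hcard2
    _ ≤ (3 * (Λ * R)) ^ 3 := hTcard
    _ = 27 * Λ ^ 3 * R ^ 3 := by ring


set_option maxHeartbeats 1000000 in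
/-- **Lemma `idealcount`**: with `K` a totally real cubic field with real embeddings
`σ₁, σ₂, σ₃`, `J` a fractional ideal of `O_K` and `ε₁, ε₂` totally positive units
with linearly independent logarithm vectors, there is `C > 0` such that for all
`X ≥ 1` the set of totally positive `ξ ∈ J` with `N(ξ) ≤ X` whose logarithm vector
satisfies `ℓ(ξ) - (⅓ log N(ξ))(1,1,1) = s₁ℓ(ε₁) + s₂ℓ(ε₂)` with `s₁, s₂ ∈ [0,1)` is
finite of cardinality at most `C X`. -/
theorem ideal_count
    (K : Type*) [Field K] [NumberField K]
    (hrank : Module.finrank ℚ K = 3)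
    (σ : Fin 3 → (K →+* ℝ)) (hσ : Function.Injective σ)
    (J : FractionalIdeal (nonZeroDivisors (𝓞 K)) K)
    (ε₁ ε₂ : K)
    (hε₁ : ∃ u : (𝓞 K)ˣ, ((u : 𝓞 K) : K) = ε₁)
    (hε₂ : ∃ u : (𝓞 K)ˣ, ((u : 𝓞 K) : K) = ε₂)
    (hε₁pos : ∀ j, 0 < σ j ε₁) (hε₂pos : ∀ j, 0 < σ j ε₂)
    (hindep : LinearIndependent ℝ
      ![(fun i => Real.log (σ i ε₁) : Fin 3 → ℝ), (fun i => Real.log (σ i ε₂) : Fin 3 → ℝ)]) :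
    ∃ C : ℝ, 0 < C ∧ ∀ X : ℝ, 1 ≤ X →
      {ξ : K | ξ ∈ J ∧ (∀ j, 0 < σ j ξ) ∧ σ 0 ξ * σ 1 ξ * σ 2 ξ ≤ X ∧
        ∃ s₁ s₂ : ℝ, s₁ ∈ Set.Ico (0:ℝ) 1 ∧ s₂ ∈ Set.Ico (0:ℝ) 1 ∧
          ∀ i, Real.log (σ i ξ) - (1/3) * Real.log (σ 0 ξ * σ 1 ξ * σ 2 ξ) =
            s₁ * Real.log (σ i ε₁) + s₂ * Real.log (σ i ε₂)}.Finite ∧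
      (Nat.card {ξ : K | ξ ∈ J ∧ (∀ j, 0 < σ j ξ) ∧ σ 0 ξ * σ 1 ξ * σ 2 ξ ≤ X ∧
        ∃ s₁ s₂ : ℝ, s₁ ∈ Set.Ico (0:ℝ) 1 ∧ s₂ ∈ Set.Ico (0:ℝ) 1 ∧
          ∀ i, Real.log (σ i ξ) - (1/3) * Real.log (σ 0 ξ * σ 1 ξ * σ 2 ξ) =
            s₁ * Real.log (σ i ε₁) + s₂ * Real.log (σ i ε₂)} : ℝ) ≤ C * X := by
  obtain ⟨Λ, hΛ1, hbox⟩ := box_count K hrank σ hσ J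
  set c : ℝ := ∑ i, (|Real.log (σ i ε₁)| + |Real.log (σ i ε₂)|) with hc
  have hc0 : 0 ≤ c := Finset.sum_nonneg fun i _ => by positivity
  have hci : ∀ i, |Real.log (σ i ε₁)| + |Real.log (σ i ε₂)| ≤ c := by
    intro i
    exact Finset.single_le_sum (f := fun i => |Real.log (σ i ε₁)| + |Real.log (σ i ε₂)|)
      (fun i _ => by positivity) (Finset.mem_univ i)
  set B : ℝ := Real.exp c with hB
  have hB1 : 1 ≤ B := Real.one_le_exp hc0
  refine ⟨Λ * B ^ 3, mul_pos (by linarith) (pow_pos (Real.exp_pos c) 3), ?_⟩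
  intro X hX
  have hX0 : (0:ℝ) < X := by linarith
  set Y : ℝ := Real.exp (Real.log X / 3) with hY
  have hY1 : 1 ≤ Y := Real.one_le_exp (div_nonneg (Real.log_nonneg hX) (by norm_num))
  have hY3 : Y ^ 3 = X := by
    have h1 : Y ^ 3 = Real.exp (Real.log X / 3 + Real.log X / 3 + Real.log X / 3) := by
      rw [Real.exp_add, Real.exp_add, hY]; ring
    rw [h1, show Real.log X / 3 + Real.log X / 3 + Real.log X / 3 = Real.log X by ring]
    exact Real.exp_log hX0
  set R : ℝ := B * Y with hR
  have hR1 : 1 ≤ R := by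
    have := mul_le_mul hB1 hY1 zero_le_one (by positivity)
    linarith
  obtain ⟨hfinbox, hcardbox⟩ := hbox R hR1
  have hsub : {ξ : K | ξ ∈ J ∧ (∀ j, 0 < σ j ξ) ∧ σ 0 ξ * σ 1 ξ * σ 2 ξ ≤ X ∧
        ∃ s₁ s₂ : ℝ, s₁ ∈ Set.Ico (0:ℝ) 1 ∧ s₂ ∈ Set.Ico (0:ℝ) 1 ∧
          ∀ i, Real.log (σ i ξ) - (1/3) * Real.log (σ 0 ξ * σ 1 ξ * σ 2 ξ) =
            s₁ * Real.log (σ i ε₁) + s₂ * Real.log (σ i ε₂)} ⊆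
      {ξ : K | ξ ∈ J ∧ ∀ i, |σ i ξ| ≤ R} := by
    rintro ξ ⟨hmem, hpos, hNle, s₁, s₂, hs₁, hs₂, heq⟩
    refine ⟨hmem, fun i => ?_⟩
    have hN : 0 < σ 0 ξ * σ 1 ξ * σ 2 ξ := mul_pos (mul_pos (hpos 0) (hpos 1)) (hpos 2)
    have hlog : Real.log (σ i ξ) ≤ Real.log X / 3 + c := by
      have h1 := heq i
      have h2 : Real.log (σ 0 ξ * σ 1 ξ * σ 2 ξ) ≤ Real.log X := Real.log_le_log hN hNle
      have h3 : s₁ * Real.log (σ i ε₁) ≤ |Real.log (σ i ε₁)| := by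
        obtain ⟨hl, hu⟩ := hs₁
        nlinarith [le_abs_self (Real.log (σ i ε₁)), neg_abs_le (Real.log (σ i ε₁)),
          abs_nonneg (Real.log (σ i ε₁))]
      have h4 : s₂ * Real.log (σ i ε₂) ≤ |Real.log (σ i ε₂)| := by
        obtain ⟨hl, hu⟩ := hs₂
        nlinarith [le_abs_self (Real.log (σ i ε₂)), neg_abs_le (Real.log (σ i ε₂)),
          abs_nonneg (Real.log (σ i ε₂))]
      have h5 := hci i
      linarith
    rw [abs_of_pos (hpos i)]
    calc σ i ξ = Real.exp (Real.log (σ i ξ)) := (Real.exp_log (hpos i)).symm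
      _ ≤ Real.exp (Real.log X / 3 + c) := Real.exp_le_exp.2 hlog
      _ = R := by rw [Real.exp_add, hR, hY, hB]; ring
  refine ⟨hfinbox.subset hsub, ?_⟩
  have hcard : (Nat.card {ξ : K | ξ ∈ J ∧ (∀ j, 0 < σ j ξ) ∧ σ 0 ξ * σ 1 ξ * σ 2 ξ ≤ X ∧
        ∃ s₁ s₂ : ℝ, s₁ ∈ Set.Ico (0:ℝ) 1 ∧ s₂ ∈ Set.Ico (0:ℝ) 1 ∧
          ∀ i, Real.log (σ i ξ) - (1/3) * Real.log (σ 0 ξ * σ 1 ξ * σ 2 ξ) =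
            s₁ * Real.log (σ i ε₁) + s₂ * Real.log (σ i ε₂)} : ℕ) ≤
      Nat.card {ξ : K | ξ ∈ J ∧ ∀ i, |σ i ξ| ≤ R} := by
    rw [Nat.card_coe_set_eq, Nat.card_coe_set_eq]
    exact Set.ncard_le_ncard hsub hfinbox
  calc ((Nat.card {ξ : K | ξ ∈ J ∧ (∀ j, 0 < σ j ξ) ∧ σ 0 ξ * σ 1 ξ * σ 2 ξ ≤ X ∧
        ∃ s₁ s₂ : ℝ, s₁ ∈ Set.Ico (0:ℝ) 1 ∧ s₂ ∈ Set.Ico (0:ℝ) 1 ∧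
          ∀ i, Real.log (σ i ξ) - (1/3) * Real.log (σ 0 ξ * σ 1 ξ * σ 2 ξ) =
            s₁ * Real.log (σ i ε₁) + s₂ * Real.log (σ i ε₂)}) : ℝ) ≤
      (Nat.card {ξ : K | ξ ∈ J ∧ ∀ i, |σ i ξ| ≤ R} : ℝ) := by exact_mod_cast hcard
    _ ≤ Λ * R ^ 3 := hcardbox
    _ = Λ * B ^ 3 * X := by rw [hR, mul_pow, hY3]; ring
end
end
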